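/- arXiv:1311.6123 — 5 statements merged into one kernel-verified Lean document; each statement's English description precedes it below -/
import Mathlib

section
/- Let λ be a partition of rank ρ, and let M(1,1) be the (ρ+1)×(ρ+1) matrix over R whose (r,s)-entry is P_{rs} for 1 ≤ r,s ≤ ρ+1. Then there exist an upper unitriangular matrix P and a lower unitriangular matrix Q in SL(ρ+1, R) (i.e., triangular with all diagonal entries equal to 1) such that P · M(1,1) · Q is the diagonal matrix diag(A_{11}, A_{22}, …, A_{ρ+1,ρ+1}). In particular, M(1,1) has a Smith normal form over R whose diagonal entries are the monomials A_{kk}, 1 ≤ k ≤ ρ+1 (with A_{ρ+1,ρ+1} = 1). -/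
open MvPolynomial

/-- Membership of the (0-indexed) square `(i,j)` in the extended diagram `λ*`,
where `f k` is the `(k+1)`-st part of the partition `λ`. -/
def MemExt (f : ℕ → ℕ) (i j : ℕ) : Prop := (i = 0 ∨ 0 < f (i - 1)) ∧ j ≤ f i

/-- `A_{r+1,s+1}`: the product of the variables over all squares of `λ(r+1,s+1)`
(0-indexed corner `(r,s)`; the variable of the 1-based square `(u,v)` is `X (u-1, v-1)`). -/
noncomputable def Apoly (f : ℕ → ℕ) (r s : ℕ) : MvPolynomial (ℕ × ℕ) ℤ :=
  ∏ᶠ (u : ℕ) (v : ℕ) (_ : v < f (r + u) - s), X (r + u, s + v)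

/-- `P_{r+1,s+1}`: the generating polynomial of the skew diagrams `λ(r+1,s+1) \ μ`,
summed over all partitions `μ` contained in `λ(r+1,s+1)` (0-indexed corner `(r,s)`). -/
noncomputable def Ppoly (f : ℕ → ℕ) (r s : ℕ) : MvPolynomial (ℕ × ℕ) ℤ :=
  ∑ᶠ μ ∈ {μ : ℕ → ℕ | Antitone μ ∧ ∀ k, μ k ≤ f (r + k) - s},
    ∏ᶠ (u : ℕ) (v : ℕ) (_ : v < f (r + u) - s) (_ : μ u ≤ v), X (r + u, s + v)

namespace SNFaux

abbrev R : Type := MvPolynomial (ℕ × ℕ) ℤ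

/-- A finite set of squares cut out by a predicate, inside a box of size `M`. -/
noncomputable def sqF (M : ℕ) (C : ℕ × ℕ → Prop) : Finset (ℕ × ℕ) :=
  @Finset.filter _ C (Classical.decPred C) (Finset.range M ×ˢ Finset.range M)

lemma mem_sqF {M : ℕ} {C : ℕ × ℕ → Prop} {q : ℕ × ℕ} :
    q ∈ sqF M C ↔ (q.1 < M ∧ q.2 < M) ∧ C q := by
  classical
  simp [sqF, Finset.mem_filter, Finset.mem_product, and_assoc]

lemma sqF_congr {M : ℕ} {C C' : ℕ × ℕ → Prop} (h : ∀ q, q.1 < M → q.2 < M → (C q ↔ C' q)) :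
    sqF M C = sqF M C' := by
  classical
  apply Finset.filter_congr
  intro q hq
  simp only [Finset.mem_product, Finset.mem_range] at hq
  exact h q hq.1 hq.2

private lemma finprod_PP {P Q : Prop} (x : R) :
    (∏ᶠ (_ : P) (_ : Q), x) = ∏ᶠ (_ : P ∧ Q), x := by
  classical
  by_cases hP : P <;> by_cases hQ : Q <;> simp [finprod_eq_if, hP, hQ]

lemma finprodX (C : ℕ → ℕ → Prop) (a b N M : ℕ)
    (hN : ∀ u v, C u v → u < N ∧ v < N)
    (hM : ∀ u v, C u v → a + u < M ∧ b + v < M) :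
    (∏ᶠ (u : ℕ) (v : ℕ) (_ : C u v), (X (a + u, b + v) : R))
      = ∏ q ∈ sqF M (fun q => a ≤ q.1 ∧ b ≤ q.2 ∧ C (q.1 - a) (q.2 - b)), X q := by
  classical
  have step1 : ∀ u : ℕ, (∏ᶠ (v : ℕ) (_ : C u v), (X (a + u, b + v) : R))
      = ∏ v ∈ Finset.range N, if C u v then (X (a + u, b + v) : R) else 1 := by
    intro u
    rw [finprod_congr fun v => finprod_eq_if]
    apply finprod_eq_prod_of_mulSupport_subset
    intro v hv
    simp only [Function.mem_mulSupport] at hv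
    by_cases h : C u v
    · simpa using (hN u v h).2
    · simp [h] at hv
  rw [finprod_congr step1]
  rw [finprod_eq_prod_of_mulSupport_subset _ (s := Finset.range N) (by
      intro u hu
      simp only [Function.mem_mulSupport] at hu
      by_contra hc
      simp only [Finset.mem_coe, Finset.mem_range, not_lt] at hc
      apply hu
      apply Finset.prod_eq_one
      intro v _
      have hcv : ¬ C u v := fun h => by have := (hN u v h).1; omega
      simp [hcv])]
  rw [← Finset.prod_product']
  rw [← Finset.prod_filter]
  refine Finset.prod_nbij' (fun p => (a + p.1, b + p.2)) (fun q => (q.1 - a, q.2 - b))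
    ?_ ?_ ?_ ?_ ?_
  · intro p hp
    simp only [Finset.mem_filter, Finset.mem_product, Finset.mem_range] at hp
    obtain ⟨⟨h1, h2⟩, h3⟩ := hp
    rw [mem_sqF]
    dsimp only
    refine ⟨hM _ _ h3, Nat.le_add_right _ _, Nat.le_add_right _ _, ?_⟩
    simpa [Nat.add_sub_cancel_left] using h3
  · intro q hq
    rw [mem_sqF] at hq
    obtain ⟨_, h1, h2, h3⟩ := hq
    simp only [Finset.mem_filter, Finset.mem_product, Finset.mem_range]
    exact ⟨⟨(hN _ _ h3).1, (hN _ _ h3).2⟩, h3⟩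
  · intro p hp
    simp [Nat.add_sub_cancel_left]
  · intro q hq
    rw [mem_sqF] at hq
    obtain ⟨_, h1, h2, _⟩ := hq
    ext <;> simp <;> omega
  · intro p hp
    rfl

/-! ### The index sets -/

def Sset (f : ℕ → ℕ) (r s : ℕ) : Set (ℕ → ℕ) :=
  {μ | Antitone μ ∧ ∀ k, μ k ≤ f (r + k) - s}

noncomputable def mono (f : ℕ → ℕ) (r s : ℕ) (μ : ℕ → ℕ) : R :=
  ∏ᶠ (u : ℕ) (v : ℕ) (_ : v < f (r + u) - s) (_ : μ u ≤ v), X (r + u, s + v)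

lemma Ppoly_eq_finsum (f : ℕ → ℕ) (r s : ℕ) :
    Ppoly f r s = ∑ᶠ μ ∈ Sset f r s, mono f r s μ := rfl

def Gset (f : ℕ → ℕ) (r k : ℕ) : Set (ℕ → ℕ) :=
  {γ | Antitone γ ∧ ∀ u, γ u ≤ f (r + u) - k ∧ (k ≤ r + u → γ u = 0)}

def Bset (f : ℕ → ℕ) (s k : ℕ) : Set (ℕ → ℕ) :=
  {β | Antitone β ∧ ∀ i, β i ≤ min (k - s) (f (k + i) - s)}

noncomputable def Umono (f : ℕ → ℕ) (M r k : ℕ) (γ : ℕ → ℕ) : R :=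
  ∏ q ∈ sqF M (fun q => r ≤ q.1 ∧ q.1 < k ∧ k + γ (q.1 - r) ≤ q.2 ∧ q.2 < f q.1), X q

noncomputable def Lmono (f : ℕ → ℕ) (M s k : ℕ) (β : ℕ → ℕ) : R :=
  ∏ q ∈ sqF M (fun q => k ≤ q.1 ∧ s ≤ q.2 ∧ q.2 < k ∧ q.2 < f q.1 ∧ β (q.1 - k) ≤ q.2 - s), X q

noncomputable def Upoly (f : ℕ → ℕ) (M r k : ℕ) : R :=
  ∑ᶠ γ ∈ Gset f r k, Umono f M r k γ

noncomputable def Lpoly (f : ℕ → ℕ) (M s k : ℕ) : R :=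
  ∑ᶠ β ∈ Bset f s k, Lmono f M s k β

/-! ### Finiteness -/

lemma finite_bdd (g : ℕ → ℕ) (N : ℕ) (hg : ∀ n, N ≤ n → g n = 0) :
    {μ : ℕ → ℕ | ∀ k, μ k ≤ g k}.Finite := by
  have hfin : ((fun h : Fin N → ℕ => fun n : ℕ => if hn : n < N then h ⟨n, hn⟩ else 0) ''
      (Set.pi Set.univ fun i : Fin N => Set.Iic (g i))).Finite :=
    Set.Finite.image _ (Set.Finite.pi fun i => Set.finite_Iic (g i))
  apply hfin.subset
  intro μ hμ
  refine ⟨fun i => μ i, ?_, ?_⟩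
  · intro i _
    exact hμ i
  · funext n
    by_cases hn : n < N
    · simp [hn]
    · simp only [hn, dif_neg, not_false_iff]
      have h1 := hμ n
      have h2 := hg n (by omega)
      omega

lemma Sset_finite (f : ℕ → ℕ) (r s N₀ : ℕ) (hN₀ : ∀ n, N₀ ≤ n → f n = 0) :
    (Sset f r s).Finite := by
  apply (finite_bdd (fun u => f (r + u) - s) N₀ ?_).subset
  · intro μ hμ; exact hμ.2
  · intro n hn; show f (r + n) - s = 0; rw [hN₀ (r + n) (by omega)]; omega

lemma Gset_finite (f : ℕ → ℕ) (r k N₀ : ℕ) (hN₀ : ∀ n, N₀ ≤ n → f n = 0) :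
    (Gset f r k).Finite := by
  apply (finite_bdd (fun u => f (r + u) - k) N₀ ?_).subset
  · intro γ hγ; exact fun u => (hγ.2 u).1
  · intro n hn; show f (r + n) - k = 0; rw [hN₀ (r + n) (by omega)]; omega

lemma Bset_finite (f : ℕ → ℕ) (s k N₀ : ℕ) (hN₀ : ∀ n, N₀ ≤ n → f n = 0) :
    (Bset f s k).Finite := by
  apply (finite_bdd (fun i => f (k + i) - s) N₀ ?_).subset
  · intro β hβ; exact fun i => le_trans (hβ.2 i) (min_le_right _ _)
  · intro n hn; show f (k + n) - s = 0; rw [hN₀ (k + n) (by omega)]; omega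

/-! ### Diagonal values -/

lemma Gset_diag (f : ℕ → ℕ) (r : ℕ) : Gset f r r = {fun _ => 0} := by
  ext γ
  simp only [Gset, Set.mem_setOf_eq, Set.mem_singleton_iff]
  constructor
  · rintro ⟨-, h⟩
    funext u
    exact (h u).2 (Nat.le_add_right _ _)
  · rintro rfl
    exact ⟨antitone_const, fun u => ⟨Nat.zero_le _, fun _ => rfl⟩⟩

lemma Bset_diag (f : ℕ → ℕ) (s : ℕ) : Bset f s s = {fun _ => 0} := by
  ext β
  simp only [Bset, Set.mem_setOf_eq, Set.mem_singleton_iff]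
  constructor
  · rintro ⟨-, h⟩
    funext i
    have h1 := h i
    simp only [Nat.sub_self, Nat.min_eq_left (Nat.zero_le _), Nat.le_zero] at h1
    exact h1
  · rintro rfl
    refine ⟨antitone_const, fun i => ?_⟩
    simp

lemma Upoly_diag (f : ℕ → ℕ) (M r : ℕ) : Upoly f M r r = 1 := by
  rw [Upoly, Gset_diag, finsum_mem_singleton, Umono]
  have : sqF M (fun q : ℕ × ℕ =>
      r ≤ q.1 ∧ q.1 < r ∧ r + (fun _ => 0) (q.1 - r) ≤ q.2 ∧ q.2 < f q.1) = ∅ := by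
    apply Finset.eq_empty_of_forall_notMem
    intro q hq
    rw [mem_sqF] at hq
    omega
  rw [this, Finset.prod_empty]

lemma Lpoly_diag (f : ℕ → ℕ) (M s : ℕ) : Lpoly f M s s = 1 := by
  rw [Lpoly, Bset_diag, finsum_mem_singleton, Lmono]
  have : sqF M (fun q : ℕ × ℕ =>
      s ≤ q.1 ∧ s ≤ q.2 ∧ q.2 < s ∧ q.2 < f q.1 ∧ (fun _ => 0) (q.1 - s) ≤ q.2 - s) = ∅ := by
    apply Finset.eq_empty_of_forall_notMem
    intro q hq
    rw [mem_sqF] at hq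
    omega
  rw [this, Finset.prod_empty]

/-! ### Monomials as finset products -/

lemma mono_eq (f : ℕ → ℕ) (M r s : ℕ) (μ : ℕ → ℕ)
    (hfM : ∀ i j : ℕ, j < f i → i < M ∧ j < M) :
    mono f r s μ = ∏ q ∈ sqF M
      (fun q => r ≤ q.1 ∧ s ≤ q.2 ∧ q.2 < f q.1 ∧ μ (q.1 - r) ≤ q.2 - s), X q := by
  rw [mono]
  have h1 : (∏ᶠ (u : ℕ) (v : ℕ) (_ : v < f (r + u) - s) (_ : μ u ≤ v), (X (r + u, s + v) : R))
      = ∏ᶠ (u : ℕ) (v : ℕ) (_ : v < f (r + u) - s ∧ μ u ≤ v), (X (r + u, s + v) : R) :=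
    finprod_congr fun u => finprod_congr fun v => finprod_PP _
  rw [h1]
  rw [finprodX _ r s M M
    (by intro u v ⟨hc, _⟩
        have h2 : s + v < f (r + u) := by omega
        have h3 := hfM (r + u) (s + v) h2
        omega)
    (by intro u v ⟨hc, _⟩
        have h2 : s + v < f (r + u) := by omega
        have h3 := hfM (r + u) (s + v) h2
        omega)]
  refine Finset.prod_congr (sqF_congr fun q _ _ => ?_) fun _ _ => rfl
  constructor
  · rintro ⟨h1, h2, h3, h4⟩
    have e : r + (q.1 - r) = q.1 := by omega
    rw [e] at h3
    exact ⟨h1, h2, by omega, h4⟩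
  · rintro ⟨h1, h2, h3, h4⟩
    have e : r + (q.1 - r) = q.1 := by omega
    rw [e]
    exact ⟨h1, h2, by omega, h4⟩

lemma Apoly_eq (f : ℕ → ℕ) (M k : ℕ)
    (hfM : ∀ i j : ℕ, j < f i → i < M ∧ j < M) :
    Apoly f k k = ∏ q ∈ sqF M (fun q => k ≤ q.1 ∧ k ≤ q.2 ∧ q.2 < f q.1), X q := by
  rw [Apoly]
  rw [finprodX _ k k M M
    (by intro u v hc
        have h2 : k + v < f (k + u) := by omega
        have h3 := hfM (k + u) (k + v) h2
        omega)
    (by intro u v hc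
        have h2 : k + v < f (k + u) := by omega
        have h3 := hfM (k + u) (k + v) h2
        omega)]
  refine Finset.prod_congr (sqF_congr fun q _ _ => ?_) fun _ _ => rfl
  constructor
  · rintro ⟨h1, h2, h3⟩
    have e : k + (q.1 - k) = q.1 := by omega
    rw [e] at h3
    exact ⟨h1, h2, by omega⟩
  · rintro ⟨h1, h2, h3⟩
    have e : k + (q.1 - k) = q.1 := by omega
    rw [e]
    exact ⟨h1, h2, by omega⟩


/-! ### Splitting a monomial at the diagonal -/

lemma sqF_union {M : ℕ} {C C' : ℕ × ℕ → Prop} :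
    sqF M (fun q => C q ∨ C' q) = sqF M C ∪ sqF M C' := by
  ext q
  simp only [mem_sqF, Finset.mem_union]
  tauto

lemma mono_split (f : ℕ → ℕ) (M r s k : ℕ) (μ γ β : ℕ → ℕ)
    (hfM : ∀ i j : ℕ, j < f i → i < M ∧ j < M)
    (hrk : r ≤ k) (hsk : s ≤ k) (hμa : Antitone μ) (hk2 : μ (k - r) ≤ k - s)
    (hγ : ∀ u, r + u < k → k + γ u = s + μ u)
    (hβ : ∀ i, β i = μ (k - r + i)) :
    mono f r s μ = Umono f M r k γ *
      ((∏ q ∈ sqF M fun q => k ≤ q.1 ∧ k ≤ q.2 ∧ q.2 < f q.1, X q) * Lmono f M s k β) := by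
  rw [mono_eq f M r s μ hfM, Umono, Lmono]
  have hd2 : Disjoint (sqF M fun q : ℕ × ℕ => k ≤ q.1 ∧ k ≤ q.2 ∧ q.2 < f q.1)
      (sqF M fun q : ℕ × ℕ => k ≤ q.1 ∧ s ≤ q.2 ∧ q.2 < k ∧ q.2 < f q.1 ∧ β (q.1 - k) ≤ q.2 - s) := by
    rw [Finset.disjoint_left]
    intro q hqa hql
    rw [mem_sqF] at hqa hql
    omega
  have hd1 : Disjoint (sqF M fun q : ℕ × ℕ => r ≤ q.1 ∧ q.1 < k ∧ k + γ (q.1 - r) ≤ q.2 ∧ q.2 < f q.1)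
      ((sqF M fun q : ℕ × ℕ => k ≤ q.1 ∧ k ≤ q.2 ∧ q.2 < f q.1)
        ∪ sqF M fun q : ℕ × ℕ => k ≤ q.1 ∧ s ≤ q.2 ∧ q.2 < k ∧ q.2 < f q.1 ∧ β (q.1 - k) ≤ q.2 - s) := by
    rw [Finset.disjoint_left]
    intro q hq hq'
    rw [Finset.mem_union, mem_sqF, mem_sqF] at hq'
    rw [mem_sqF] at hq
    rcases hq' with h | h <;> omega
  have hsplit : sqF M (fun q : ℕ × ℕ => r ≤ q.1 ∧ s ≤ q.2 ∧ q.2 < f q.1 ∧ μ (q.1 - r) ≤ q.2 - s)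
      = (sqF M fun q : ℕ × ℕ => r ≤ q.1 ∧ q.1 < k ∧ k + γ (q.1 - r) ≤ q.2 ∧ q.2 < f q.1)
        ∪ ((sqF M fun q : ℕ × ℕ => k ≤ q.1 ∧ k ≤ q.2 ∧ q.2 < f q.1)
          ∪ sqF M fun q : ℕ × ℕ => k ≤ q.1 ∧ s ≤ q.2 ∧ q.2 < k ∧ q.2 < f q.1 ∧ β (q.1 - k) ≤ q.2 - s) := by
    rw [← sqF_union, ← sqF_union]
    apply sqF_congr
    intro q _ _
    constructor
    · rintro ⟨h1, h2, h3, h4⟩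
      by_cases hq1 : q.1 < k
      · have e := hγ (q.1 - r) (by omega)
        exact Or.inl ⟨h1, hq1, by omega, h3⟩
      · by_cases hq2 : k ≤ q.2
        · exact Or.inr (Or.inl ⟨by omega, hq2, h3⟩)
        · refine Or.inr (Or.inr ⟨by omega, h2, by omega, h3, ?_⟩)
          rw [hβ (q.1 - k)]
          have e : k - r + (q.1 - k) = q.1 - r := by omega
          rw [e]
          exact h4
    · rintro (⟨h1, h2, h3, h4⟩ | ⟨h1, h2, h3⟩ | ⟨h1, h2, h3, h4, h5⟩)
      · have e := hγ (q.1 - r) (by omega)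
        exact ⟨h1, by omega, h4, by omega⟩
      · have h5 : μ (q.1 - r) ≤ μ (k - r) := hμa (by omega)
        exact ⟨by omega, by omega, h3, by omega⟩
      · rw [hβ (q.1 - k)] at h5
        have e : k - r + (q.1 - k) = q.1 - r := by omega
        rw [e] at h5
        exact ⟨by omega, h2, h4, h5⟩
  rw [hsplit, Finset.prod_union hd1, Finset.prod_union hd2]

/-! ### The fiber statistic and the bijection -/

noncomputable def kst (r s : ℕ) (μ : ℕ → ℕ) : ℕ :=
  sInf {t : ℕ | max r s ≤ t ∧ μ (t - r) ≤ t - s}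

noncomputable def phi (r s k : ℕ) (μ : ℕ → ℕ) : (ℕ → ℕ) × (ℕ → ℕ) :=
  (fun u => if r + u < k then μ u - (k - s) else 0, fun j => μ (k - r + j))

noncomputable def psi (r s k : ℕ) (p : (ℕ → ℕ) × (ℕ → ℕ)) : ℕ → ℕ :=
  fun u => if r + u < k then (k - s) + p.1 u else p.2 (u - (k - r))

/-! ### The key identity -/

theorem key (f : ℕ → ℕ) (hf : Antitone f) (N₀ : ℕ) (hN₀ : ∀ n, N₀ ≤ n → f n = 0)
    (ρ : ℕ) (hd : ∀ k, k < f k ↔ k < ρ) (r s : ℕ) (hr : r ≤ ρ) (hs : s ≤ ρ) :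
    Ppoly f r s = ∑ k ∈ Finset.Icc (max r s) ρ,
      Upoly f (N₀ + f 0) r k * (Apoly f k k * Lpoly f (N₀ + f 0) s k) := by
  classical
  set M := N₀ + f 0 with hMdef
  have hfM : ∀ i j : ℕ, j < f i → i < M ∧ j < M := by
    intro i j h
    have h2 : f i ≤ f 0 := hf (Nat.zero_le i)
    have h3 : i < N₀ := by
      by_contra hc
      rw [hN₀ i (by omega)] at h
      omega
    omega
  have hSfin : (Sset f r s).Finite := Sset_finite f r s N₀ hN₀
  rw [Ppoly_eq_finsum, finsum_mem_eq_finite_toFinset_sum _ hSfin]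
  have hρmem : ∀ μ ∈ Sset f r s, ρ ∈ {t : ℕ | max r s ≤ t ∧ μ (t - r) ≤ t - s} := by
    intro μ hμ
    have h1 : μ (ρ - r) ≤ f (r + (ρ - r)) - s := hμ.2 _
    have h2 : r + (ρ - r) = ρ := by omega
    rw [h2] at h1
    have h3 : ¬ (ρ < f ρ) := by rw [hd]; omega
    exact ⟨by simp [hr, hs], by omega⟩
  have hmaps : ∀ μ ∈ hSfin.toFinset, kst r s μ ∈ Finset.Icc (max r s) ρ := by
    intro μ hμ
    rw [Set.Finite.mem_toFinset] at hμ
    have h1 : kst r s μ ∈ {t : ℕ | max r s ≤ t ∧ μ (t - r) ≤ t - s} :=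
      Nat.sInf_mem ⟨ρ, hρmem μ hμ⟩
    have h2 : kst r s μ ≤ ρ := Nat.sInf_le (hρmem μ hμ)
    rw [Finset.mem_Icc]
    exact ⟨h1.1, h2⟩
  rw [← Finset.sum_fiberwise_of_maps_to hmaps (mono f r s)]
  refine Finset.sum_congr rfl fun k hk => ?_
  rw [Finset.mem_Icc] at hk
  obtain ⟨hk1, hkρ⟩ := hk
  have hrk : r ≤ k := le_trans (le_max_left _ _) hk1
  have hsk : s ≤ k := le_trans (le_max_right _ _) hk1
  have hfk : ∀ i, i < k → k ≤ f i := by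
    intro i hi
    have h2 : k - 1 < f (k - 1) := (hd (k - 1)).mpr (by omega)
    have h3 : f (k - 1) ≤ f i := hf (by omega)
    omega
  have hGfin : (Gset f r k).Finite := Gset_finite f r k N₀ hN₀
  have hBfin : (Bset f s k).Finite := Bset_finite f s k N₀ hN₀
  -- facts about members of the fiber
  have hfiber : ∀ μ ∈ hSfin.toFinset.filter (fun μ => kst r s μ = k),
      Antitone μ ∧ (∀ n, μ n ≤ f (r + n) - s) ∧ μ (k - r) ≤ k - s ∧
        (∀ u, r + u < k → k - s ≤ μ u) := by
    intro μ hμ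
    rw [Finset.mem_filter, Set.Finite.mem_toFinset] at hμ
    obtain ⟨⟨hμa, hμb⟩, hμk⟩ := hμ
    have hmem : kst r s μ ∈ {t : ℕ | max r s ≤ t ∧ μ (t - r) ≤ t - s} :=
      Nat.sInf_mem ⟨ρ, hρmem μ ⟨hμa, hμb⟩⟩
    rw [hμk] at hmem
    refine ⟨hμa, hμb, hmem.2, ?_⟩
    intro u hu
    by_cases hks : k ≤ s
    · omega
    · have h1 : k - 1 < kst r s μ := by omega
      have h2 := Nat.notMem_of_lt_sInf h1
      simp only [Set.mem_setOf_eq, not_and, not_le] at h2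
      have h3 : k - 1 - s < μ (k - 1 - r) := h2 (by omega)
      have h4 : μ (k - 1 - r) ≤ μ u := hμa (by omega)
      omega
  -- rewrite the right-hand side as a sum over pairs
  have hRHS : Upoly f M r k * (Apoly f k k * Lpoly f M s k)
      = ∑ p ∈ hGfin.toFinset ×ˢ hBfin.toFinset,
          Umono f M r k p.1 *
            ((∏ q ∈ sqF M fun q => k ≤ q.1 ∧ k ≤ q.2 ∧ q.2 < f q.1, X q) * Lmono f M s k p.2) := by
    rw [Upoly, Lpoly, finsum_mem_eq_finite_toFinset_sum _ hGfin,
      finsum_mem_eq_finite_toFinset_sum _ hBfin, Apoly_eq f M k hfM,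
      Finset.sum_product, Finset.sum_mul]
    refine Finset.sum_congr rfl fun γ _ => ?_
    simp only [Finset.mul_sum]
  rw [hRHS]
  refine Finset.sum_nbij' (phi r s k) (psi r s k) ?_ ?_ ?_ ?_ ?_
  · -- phi maps into the product set
    intro μ hμ
    obtain ⟨hμa, hμb, hk2, htop⟩ := hfiber μ hμ
    rw [Finset.mem_product, Set.Finite.mem_toFinset, Set.Finite.mem_toFinset]
    refine ⟨⟨?_, ?_⟩, ?_, ?_⟩
    · -- (phi μ).1 antitone
      intro u u' huu'
      have h1 : μ u' ≤ μ u := hμa huu'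
      simp only [phi]
      split_ifs <;> omega
    · intro u
      have h1 := hμb u
      simp only [phi]
      constructor
      · split_ifs <;> omega
      · intro h
        rw [if_neg (by omega)]
    · -- (phi μ).2 antitone
      intro i i' hii'
      simp only [phi]
      exact hμa (by omega)
    · intro i
      simp only [phi]
      have h1 : μ (k - r + i) ≤ μ (k - r) := hμa (by omega)
      have h2 := hμb (k - r + i)
      have e : r + (k - r + i) = k + i := by omega
      rw [e] at h2
      omega
  · -- psi maps into the fiber
    intro p hp
    rw [Finset.mem_product, Set.Finite.mem_toFinset, Set.Finite.mem_toFinset] at hp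
    obtain ⟨⟨hγa, hγb⟩, hβa, hβb⟩ := hp
    have hb0 := hβb 0
    have hμmem : psi r s k p ∈ Sset f r s := by
      constructor
      · intro u u' huu'
        simp only [psi]
        have h3 : p.2 (u' - (k - r)) ≤ p.2 0 := hβa (Nat.zero_le _)
        have h4 : p.2 (u' - (k - r)) ≤ p.2 (u - (k - r)) := hβa (by omega)
        have h5 : p.1 u' ≤ p.1 u := hγa huu'
        split_ifs <;> omega
      · intro u
        simp only [psi]
        split_ifs with h1
        · have h2 := (hγb u).1
          have h3 := hfk (r + u) h1
          omega
        · have h2 := hβb (u - (k - r))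
          have e : k + (u - (k - r)) = r + u := by omega
          rw [e] at h2
          omega
    rw [Finset.mem_filter, Set.Finite.mem_toFinset]
    refine ⟨hμmem, ?_⟩
    have hkmem : k ∈ {t : ℕ | max r s ≤ t ∧ psi r s k p (t - r) ≤ t - s} := by
      refine ⟨by simp [hrk, hsk], ?_⟩
      simp only [psi]
      rw [if_neg (by omega)]
      have e : k - r - (k - r) = 0 := by omega
      rw [e]
      omega
    refine le_antisymm (Nat.sInf_le hkmem) ?_
    by_contra hc
    push_neg at hc
    have h1 := Nat.sInf_mem (⟨k, hkmem⟩ :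
      {t : ℕ | max r s ≤ t ∧ psi r s k p (t - r) ≤ t - s}.Nonempty)
    obtain ⟨h2, h3⟩ := h1
    have h4 : kst r s p.2 = kst r s p.2 := rfl
    set t := kst r s (psi r s k p) with ht
    change max r s ≤ t at h2
    change psi r s k p (t - r) ≤ t - s at h3
    have htk : t < k := hc
    simp only [psi] at h3
    rw [if_pos (by omega)] at h3
    omega
  · -- left inverse
    intro μ hμ
    obtain ⟨hμa, hμb, hk2, htop⟩ := hfiber μ hμ
    funext u
    by_cases h : r + u < k
    · have h1 := htop u h
      simp only [psi, phi, if_pos h]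
      omega
    · simp only [psi, phi, if_neg h]
      have e : k - r + (u - (k - r)) = u := by omega
      rw [e]
  · -- right inverse
    intro p hp
    rw [Finset.mem_product, Set.Finite.mem_toFinset, Set.Finite.mem_toFinset] at hp
    obtain ⟨⟨hγa, hγb⟩, hβa, hβb⟩ := hp
    rw [phi, Prod.mk.injEq]
    constructor
    · funext u
      by_cases h : r + u < k
      · simp only [psi, if_pos h]
        omega
      · rw [if_neg h]
        exact ((hγb u).2 (by omega)).symm
    · funext j
      simp only [psi]
      rw [if_neg (by omega)]
      have e : k - r + j - (k - r) = j := by omega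
      rw [e]
  · -- the terms agree
    intro μ hμ
    obtain ⟨hμa, hμb, hk2, htop⟩ := hfiber μ hμ
    apply mono_split f M r s k μ _ _ hfM hrk hsk hμa hk2
    · intro u hu
      have h1 := htop u hu
      simp only [phi, if_pos hu]
      omega
    · intro i
      rfl

end SNFaux

/-- **Theorem (Smith normal form of `M(1,1)`).**
For a partition `λ` of rank `ρ` (parts `f`, 0-indexed), there are an upper unitriangular
matrix `P` and a lower unitriangular matrix `Q` over `R` (hence in `SL(ρ+1,R)`) with
`P ⬝ M(1,1) ⬝ Q = diag(A_{11}, A_{22}, …, A_{ρ+1,ρ+1})`. -/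
theorem smithNormalForm_M11 (f : ℕ → ℕ) (hf : Antitone f) (hfz : ∃ N, f N = 0)
    (ρ : ℕ) (hρ : ρ = Set.ncard {k : ℕ | k < f k}) :
    ∃ P Q : Matrix (Fin (ρ + 1)) (Fin (ρ + 1)) (MvPolynomial (ℕ × ℕ) ℤ),
      (∀ i, P i i = 1) ∧ (∀ i j : Fin (ρ + 1), j < i → P i j = 0) ∧
      (∀ i, Q i i = 1) ∧ (∀ i j : Fin (ρ + 1), i < j → Q i j = 0) ∧
      P * Matrix.of (fun r s : Fin (ρ + 1) => Ppoly f r s) * Q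
        = Matrix.diagonal (fun k : Fin (ρ + 1) => Apoly f k k) := by
  classical
  obtain ⟨N₁, hN₁⟩ := hfz
  have hN₀ : ∀ n, N₁ ≤ n → f n = 0 := fun n hn => Nat.le_zero.1 (hN₁ ▸ hf hn)
  have hne : {k : ℕ | f k ≤ k}.Nonempty := ⟨N₁, by simp only [Set.mem_setOf_eq, hN₁]; omega⟩
  have hd : ∀ k, k < f k ↔ k < ρ := by
    set m := sInf {k : ℕ | f k ≤ k} with hm
    have hmm : f m ≤ m := Nat.sInf_mem hne
    have hlt : ∀ k, k < m → k < f k := by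
      intro k hk
      have h := Nat.notMem_of_lt_sInf (hm ▸ hk)
      simp only [Set.mem_setOf_eq, not_le] at h
      exact h
    have hge : ∀ k, m ≤ k → ¬ (k < f k) := by
      intro k hk
      have := hf hk
      omega
    have hT : {k : ℕ | k < f k} = ↑(Finset.range m) := by
      ext k
      simp only [Set.mem_setOf_eq, Finset.coe_range, Set.mem_Iio]
      constructor
      · intro h
        by_contra hc
        exact hge k (by omega) h
      · exact hlt k
    have hρm : ρ = m := by rw [hρ, hT, Set.ncard_coe_finset, Finset.card_range]
    intro k
    constructor
    · intro h
      by_contra hc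
      exact hge k (by omega) h
    · intro h
      exact hlt k (by omega)
  set M := N₁ + f 0 with hM
  set Umat : Matrix (Fin (ρ + 1)) (Fin (ρ + 1)) SNFaux.R :=
    Matrix.of (fun r k : Fin (ρ + 1) =>
      if (r : ℕ) ≤ (k : ℕ) then SNFaux.Upoly f M r k else 0) with hU
  set Lmat : Matrix (Fin (ρ + 1)) (Fin (ρ + 1)) SNFaux.R :=
    Matrix.of (fun k s : Fin (ρ + 1) =>
      if (s : ℕ) ≤ (k : ℕ) then SNFaux.Lpoly f M s k else 0) with hL
  set Dmat : Matrix (Fin (ρ + 1)) (Fin (ρ + 1)) SNFaux.R :=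
    Matrix.diagonal (fun k : Fin (ρ + 1) => Apoly f k k) with hD
  have hfact : Matrix.of (fun r s : Fin (ρ + 1) => Ppoly f r s) = Umat * Dmat * Lmat := by
    refine Matrix.ext fun r s => ?_
    rw [Matrix.mul_apply]
    simp only [hU, hL, hD, Matrix.mul_diagonal, Matrix.of_apply]
    rw [SNFaux.key f hf N₁ hN₀ ρ hd r s (Fin.is_le r) (Fin.is_le s)]
    rw [Fin.sum_univ_eq_sum_range (fun t =>
      (if (r : ℕ) ≤ t then SNFaux.Upoly f M r t else 0) * Apoly f t t *
        (if (s : ℕ) ≤ t then SNFaux.Lpoly f M s t else 0)) (ρ + 1)]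
    rw [show Finset.range (ρ + 1) = Finset.Icc 0 ρ by
      ext t; simp [Finset.mem_Icc, Finset.mem_range]]
    rw [← Finset.sum_subset (Finset.Icc_subset_Icc (Nat.zero_le (max (r : ℕ) (s : ℕ))) le_rfl) ?van]
    case van =>
      intro x hx hnx
      rw [Finset.mem_Icc] at hx hnx
      have : ¬ ((r : ℕ) ≤ x) ∨ ¬ ((s : ℕ) ≤ x) := by omega
      rcases this with h | h
      · rw [if_neg h, zero_mul, zero_mul]
      · rw [if_neg h, mul_zero]
    refine Finset.sum_congr rfl fun k hk => ?_
    rw [Finset.mem_Icc] at hk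
    rw [if_pos (by omega), if_pos (by omega), mul_assoc]
  have hUtri : Umat.BlockTriangular id := by
    intro i j hij
    have h2 : (j : ℕ) < (i : ℕ) := hij
    simp only [hU, Matrix.of_apply]
    rw [if_neg (by omega)]
  have hLtri : Lmat.BlockTriangular OrderDual.toDual := by
    intro i j hij
    have h2 : (i : ℕ) < (j : ℕ) := hij
    simp only [hL, Matrix.of_apply]
    rw [if_neg (by omega)]
  have hUdiag : ∀ i, Umat i i = 1 := by
    intro i
    simp only [hU, Matrix.of_apply, le_refl, if_true]
    exact SNFaux.Upoly_diag f M i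
  have hLdiag : ∀ i, Lmat i i = 1 := by
    intro i
    simp only [hL, Matrix.of_apply, le_refl, if_true]
    exact SNFaux.Lpoly_diag f M i
  have hUdet : Umat.det = 1 := by
    rw [Matrix.det_of_upperTriangular hUtri]
    exact Finset.prod_eq_one fun i _ => hUdiag i
  have hLdet : Lmat.det = 1 := by
    rw [Matrix.det_of_lowerTriangular Lmat hLtri]
    exact Finset.prod_eq_one fun i _ => hLdiag i
  have hUu : IsUnit Umat.det := by rw [hUdet]; exact isUnit_one
  have hLu : IsUnit Lmat.det := by rw [hLdet]; exact isUnit_one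
  haveI : Invertible Umat := Umat.invertibleOfIsUnitDet hUu
  haveI : Invertible Lmat := Lmat.invertibleOfIsUnitDet hLu
  have hUinv : Umat⁻¹.BlockTriangular id :=
    Matrix.blockTriangular_inv_of_blockTriangular hUtri
  have hLinv : Lmat⁻¹.BlockTriangular OrderDual.toDual :=
    Matrix.blockTriangular_inv_of_blockTriangular hLtri
  refine ⟨Umat⁻¹, Lmat⁻¹, ?_, ?_, ?_, ?_, ?_⟩
  · -- diagonal of Umat⁻¹
    intro i
    have hmul : Umat⁻¹ * Umat = 1 := Matrix.nonsing_inv_mul Umat hUu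
    have h1 : (Umat⁻¹ * Umat) i i = (1 : Matrix (Fin (ρ + 1)) (Fin (ρ + 1)) SNFaux.R) i i := by
      rw [hmul]
    rw [Matrix.mul_apply, Matrix.one_apply_eq, Finset.sum_eq_single i] at h1
    · rw [hUdiag i, mul_one] at h1
      exact h1
    · intro b _ hb
      rcases hb.lt_or_gt with hbi | hbi
      · rw [hUinv hbi, zero_mul]
      · rw [hUtri hbi, mul_zero]
    · intro h
      exact absurd (Finset.mem_univ i) h
  · intro i j hji
    exact hUinv hji
  · -- diagonal of Lmat⁻¹
    intro i
    have hmul : Lmat * Lmat⁻¹ = 1 := Matrix.mul_nonsing_inv Lmat hLu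
    have h1 : (Lmat * Lmat⁻¹) i i = (1 : Matrix (Fin (ρ + 1)) (Fin (ρ + 1)) SNFaux.R) i i := by
      rw [hmul]
    rw [Matrix.mul_apply, Matrix.one_apply_eq, Finset.sum_eq_single i] at h1
    · rw [hLdiag i, one_mul] at h1
      exact h1
    · intro b _ hb
      rcases hb.lt_or_gt with hbi | hbi
      · rw [hLinv (OrderDual.toDual_lt_toDual.mpr hbi), mul_zero]
      · rw [hLtri (OrderDual.toDual_lt_toDual.mpr hbi), zero_mul]
    · intro h
      exact absurd (Finset.mem_univ i) h
  · intro i j hij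
    exact hLinv (OrderDual.toDual_lt_toDual.mpr hij)
  · rw [hfact, ← Matrix.mul_assoc, ← Matrix.mul_assoc, Matrix.nonsing_inv_mul Umat hUu,
      Matrix.one_mul, Matrix.mul_assoc, Matrix.mul_nonsing_inv Lmat hLu, Matrix.mul_one]
end

section
/- Let λ be a partition of rank ρ, and let M(1,1) be the (ρ+1)×(ρ+1) matrix over R whose (r,s)-entry is P_{rs} for 1 ≤ r,s ≤ ρ+1. Then det M(1,1) = A_{11} · A_{22} · ⋯ · A_{ρρ} (note that A_{ρ+1,ρ+1} = 1), i.e., the determinant equals the product over the diagonal squares (k,k) ∈ λ of the monomials A_{kk}. -/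
open MvPolynomial

open scoped Classical

namespace DetM11Aux

noncomputable def wt (rr tt : ℕ) (A b : ℕ → ℕ) : MvPolynomial (ℕ × ℕ) ℤ :=
  ∏ᶠ (u : ℕ) (v : ℕ) (_ : v < A u) (_ : b u ≤ v), X (rr + u, tt + v)

def Q (K : ℕ) : Finset (ℕ × ℕ) := Finset.range K ×ˢ Finset.range K

def Sset (f : ℕ → ℕ) (r s : ℕ) : Set (ℕ → ℕ) :=
  {μ | Antitone μ ∧ ∀ k, μ k ≤ f (r + k) - s}
def Vset (f : ℕ → ℕ) (r c : ℕ) : Set (ℕ → ℕ) :=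
  {g | Antitone g ∧ (∀ i, g i ≤ f (r + i) - c) ∧ ∀ i, c ≤ r + i → g i = 0}
def Wset (f : ℕ → ℕ) (c s : ℕ) : Set (ℕ → ℕ) :=
  {m | Antitone m ∧ m 0 ≤ c - s ∧ ∀ k, m k ≤ f (c + k) - s}
def Scset (f : ℕ → ℕ) (r s c : ℕ) : Set (ℕ → ℕ) :=
  {μ | μ ∈ Sset f r s ∧ μ (c - r) ≤ c - s ∧ ∀ d, max r s ≤ d → d < c → d - s < μ (d - r)}

noncomputable def Vpoly (f : ℕ → ℕ) (r c : ℕ) : MvPolynomial (ℕ × ℕ) ℤ :=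
  ∑ᶠ g ∈ Vset f r c, wt r c (fun u => if r + u < c then f (r + u) - c else 0) g
noncomputable def Wpoly (f : ℕ → ℕ) (c s : ℕ) : MvPolynomial (ℕ × ℕ) ℤ :=
  ∑ᶠ m ∈ Wset f c s, wt c s (fun u => f (c + u) - s) m

def glue (r s c : ℕ) (g m : ℕ → ℕ) : ℕ → ℕ :=
  fun u => if r + u < c then (c - s) + g u else m (u - (c - r))
def cutV (r s c : ℕ) (μ : ℕ → ℕ) : ℕ → ℕ :=
  fun u => if r + u < c then μ u - (c - s) else 0
def cutW (r c : ℕ) (μ : ℕ → ℕ) : ℕ → ℕ := fun k => μ ((c - r) + k)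

lemma Ppoly_def (f : ℕ → ℕ) (r s : ℕ) :
    Ppoly f r s = ∑ᶠ μ ∈ Sset f r s, wt r s (fun u => f (r + u) - s) μ := rfl

/-! ### Finiteness -/

lemma finite_bdd (B N : ℕ) :
    {μ : ℕ → ℕ | (∀ k, μ k ≤ B) ∧ ∀ k, N ≤ k → μ k = 0}.Finite := by
  have hsub : {μ : ℕ → ℕ | (∀ k, μ k ≤ B) ∧ ∀ k, N ≤ k → μ k = 0}
      ⊆ Set.range (fun (v : Fin N → Fin (B + 1)) => fun k =>
          if h : k < N then (v ⟨k, h⟩ : ℕ) else 0) := by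
    rintro μ ⟨h1, h2⟩
    refine ⟨fun i => ⟨μ i, Nat.lt_succ_of_le (h1 i)⟩, ?_⟩
    funext k
    by_cases h : k < N
    · simp [h]
    · simp [h, h2 k (le_of_not_gt h)]
  exact (Set.finite_range _).subset hsub

lemma Sset_finite (f : ℕ → ℕ) (hf : Antitone f) (N : ℕ) (hN : ∀ a, N ≤ a → f a = 0)
    (r s : ℕ) : (Sset f r s).Finite := by
  refine (finite_bdd (f 0) N).subset ?_
  rintro μ ⟨h1, h2⟩
  refine ⟨fun k => le_trans (h2 k) (le_trans (Nat.sub_le _ _) (hf (Nat.zero_le _))), ?_⟩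
  intro k hk
  have := h2 k
  rw [hN (r + k) (by omega)] at this
  omega

lemma Vset_finite (f : ℕ → ℕ) (hf : Antitone f) (N : ℕ) (hN : ∀ a, N ≤ a → f a = 0)
    (r c : ℕ) : (Vset f r c).Finite := by
  refine (finite_bdd (f 0) N).subset ?_
  rintro g ⟨h1, h2, h3⟩
  refine ⟨fun k => le_trans (h2 k) (le_trans (Nat.sub_le _ _) (hf (Nat.zero_le _))), ?_⟩
  intro k hk
  have := h2 k
  rw [hN (r + k) (by omega)] at this
  omega

lemma Wset_finite (f : ℕ → ℕ) (hf : Antitone f) (N : ℕ) (hN : ∀ a, N ≤ a → f a = 0)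
    (c s : ℕ) : (Wset f c s).Finite := by
  refine (finite_bdd (f 0) N).subset ?_
  rintro m ⟨h1, h2, h3⟩
  refine ⟨fun k => le_trans (h3 k) (le_trans (Nat.sub_le _ _) (hf (Nat.zero_le _))), ?_⟩
  intro k hk
  have := h3 k
  rw [hN (c + k) (by omega)] at this
  omega

lemma Scset_finite (f : ℕ → ℕ) (hf : Antitone f) (N : ℕ) (hN : ∀ a, N ≤ a → f a = 0)
    (r s c : ℕ) : (Scset f r s c).Finite :=
  (Sset_finite f hf N hN r s).subset (fun _ h => h.1)

/-! ### The bijection -/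

section
variable {f : ℕ → ℕ} {ρ : ℕ} (hf : Antitone f)
  (hrank : ∀ k, k < ρ → k < f k)
variable {r s c : ℕ} (hrc : r ≤ c) (hsc : s ≤ c) (hcρ : c ≤ ρ)

include hf hrank hrc hsc hcρ in
lemma glue_mem {g m : ℕ → ℕ} (hg : g ∈ Vset f r c) (hm : m ∈ Wset f c s) :
    glue r s c g m ∈ Scset f r s c := by
  obtain ⟨hg1, hg2, hg3⟩ := hg
  obtain ⟨hm1, hm2, hm3⟩ := hm
  have hcf : ∀ k, r + k < c → c ≤ f (r + k) := by
    intro k hk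
    have h1 : f (c - 1) ≤ f (r + k) := hf (by omega)
    have h2 : c - 1 < f (c - 1) := hrank _ (by omega)
    omega
  refine ⟨⟨?_, ?_⟩, ?_, ?_⟩
  · intro u u' huu
    unfold glue
    by_cases h1 : r + u < c <;> by_cases h2 : r + u' < c
    · simp only [if_pos h1, if_pos h2]
      have := hg1 huu
      omega
    · simp only [if_pos h1, if_neg h2]
      have := hm1 (Nat.zero_le (u' - (c - r)))
      omega
    · omega
    · simp only [if_neg h1, if_neg h2]
      exact hm1 (by omega)
  · intro k
    unfold glue
    by_cases h1 : r + k < c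
    · rw [if_pos h1]
      have := hg2 k
      have := hcf k h1
      omega
    · rw [if_neg h1]
      have harg : c + (k - (c - r)) = r + k := by omega
      have := hm3 (k - (c - r))
      rw [harg] at this
      exact this
  · unfold glue
    rw [if_neg (by omega)]
    have harg : c - r - (c - r) = 0 := by omega
    rw [harg]
    exact hm2
  · intro d hd1 hd2
    unfold glue
    rw [if_pos (by omega)]
    omega

include hrc hsc in
lemma cut_mem {μ : ℕ → ℕ} (hμ : μ ∈ Scset f r s c) :
    cutV r s c μ ∈ Vset f r c ∧ cutW r c μ ∈ Wset f c s := by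
  obtain ⟨⟨h1, h2⟩, h3, h4⟩ := hμ
  constructor
  · refine ⟨?_, ?_, ?_⟩
    · intro u u' huu
      unfold cutV
      by_cases hu : r + u < c <;> by_cases hu' : r + u' < c
      · simp only [if_pos hu, if_pos hu']
        have := h1 huu
        omega
      · simp only [if_pos hu, if_neg hu']
        omega
      · omega
      · simp only [if_neg hu, if_neg hu']
        exact le_rfl
    · intro i
      unfold cutV
      by_cases hu : r + i < c
      · rw [if_pos hu]
        have := h2 i
        omega
      · rw [if_neg hu]
        omega
    · intro i hi
      unfold cutV
      rw [if_neg (by omega)]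
  · refine ⟨?_, ?_, ?_⟩
    · intro u u' huu
      exact h1 (by omega)
    · unfold cutW
      have harg : c - r + 0 = c - r := by omega
      rw [harg]
      exact h3
    · intro k
      unfold cutW
      have := h2 ((c - r) + k)
      have harg : r + (c - r + k) = c + k := by omega
      rw [harg] at this
      exact this

include hrc in
lemma cut_glue {g m : ℕ → ℕ} (hg : g ∈ Vset f r c) :
    cutV r s c (glue r s c g m) = g ∧ cutW r c (glue r s c g m) = m := by
  obtain ⟨hg1, hg2, hg3⟩ := hg
  constructor
  · funext u
    unfold cutV glue
    by_cases h1 : r + u < c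
    · rw [if_pos h1, if_pos h1]
      omega
    · rw [if_neg h1]
      exact (hg3 u (by omega)).symm
  · funext k
    unfold cutW glue
    rw [if_neg (by omega)]
    congr 1
    omega

include hrc hsc in
lemma glue_cut {μ : ℕ → ℕ} (hμ : μ ∈ Scset f r s c) :
    glue r s c (cutV r s c μ) (cutW r c μ) = μ := by
  obtain ⟨⟨h1, h2⟩, h3, h4⟩ := hμ
  funext u
  unfold glue cutV cutW
  by_cases hu : r + u < c
  · rw [if_pos hu, if_pos hu]
    by_cases hcs : c ≤ s
    · omega
    · have hd := h4 (c - 1) (by omega) (by omega)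
      have := h1 (show u ≤ (c - 1) - r by omega)
      omega
  · rw [if_neg hu]
    congr 1
    omega

end

/-! ### Weights as products over absolute squares -/

lemma aux_prod {M : Type*} [CommMonoid M] (K : ℕ) (P : ℕ → ℕ → Prop)
    [∀ u v, Decidable (P u v)] (F : ℕ × ℕ → M) :
    ∏ u ∈ Finset.range K, ∏ v ∈ (Finset.range K).filter (fun v => P u v), F (u, v)
      = ∏ p ∈ (Q K).filter (fun p => P p.1 p.2), F p := by
  unfold Q
  conv_rhs => rw [Finset.prod_filter]
  conv_rhs => rw [Finset.prod_product]
  exact Finset.prod_congr rfl fun u _ => Finset.prod_filter _ _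

lemma wt_eq_prod (K rr tt : ℕ) (A b : ℕ → ℕ)
    (hAK : ∀ u, tt + A u < K) (hA0 : ∀ u, K ≤ rr + u → A u = 0) :
    wt rr tt A b
      = ∏ p ∈ (Q K).filter
          (fun p => rr ≤ p.1 ∧ tt ≤ p.2 ∧ p.2 - tt < A (p.1 - rr) ∧ tt + b (p.1 - rr) ≤ p.2),
          X p := by
  have step1 : ∀ u : ℕ, (∏ᶠ (v : ℕ) (_ : v < A u) (_ : b u ≤ v), X (R := ℤ) (σ := ℕ × ℕ) (rr + u, tt + v))
      = ∏ v ∈ Finset.Ico (b u) (A u), X (rr + u, tt + v) := by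
    intro u
    have h1 : ∀ v : ℕ, (∏ᶠ (_ : v < A u) (_ : b u ≤ v), X (R := ℤ) (σ := ℕ × ℕ) (rr + u, tt + v))
        = if v ∈ Finset.Ico (b u) (A u) then X (rr + u, tt + v) else 1 := by
      intro v
      rw [finprod_eq_if (p := b u ≤ v), finprod_eq_if (p := v < A u)]
      by_cases h : v < A u <;> by_cases h' : b u ≤ v <;>
        simp [h, h', Finset.mem_Ico]
    rw [finprod_congr h1]
    rw [finprod_eq_prod_of_mulSupport_subset _
      (s := Finset.Ico (b u) (A u)) (by
        intro v hv
        simp only [Function.mem_mulSupport] at hv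
        rw [Finset.mem_coe]
        by_contra h
        exact hv (if_neg h))]
    exact Finset.prod_congr rfl fun v hv => if_pos hv
  have step2 : wt rr tt A b = ∏ u ∈ Finset.range K, ∏ v ∈ Finset.Ico (b u) (A u),
      X (R := ℤ) (σ := ℕ × ℕ) (rr + u, tt + v) := by
    unfold wt
    rw [finprod_congr step1]
    refine finprod_eq_prod_of_mulSupport_subset _ ?_
    intro u hu
    simp only [Function.mem_mulSupport] at hu
    rw [Finset.mem_coe, Finset.mem_range]
    by_contra hu'
    push_neg at hu'
    rw [Finset.Ico_eq_empty (by rw [hA0 u (by omega)]; omega), Finset.prod_empty] at hu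
    exact hu rfl
  have step3 : ∀ u ∈ Finset.range K, (∏ v ∈ Finset.Ico (b u) (A u), X (R := ℤ) (σ := ℕ × ℕ) (rr + u, tt + v))
      = ∏ v ∈ (Finset.range K).filter (fun v => v < A u ∧ b u ≤ v), X (rr + u, tt + v) := by
    intro u _
    congr 1
    ext v
    simp only [Finset.mem_Ico, Finset.mem_filter, Finset.mem_range]
    have := hAK u
    omega
  have step4 := aux_prod (M := MvPolynomial (ℕ × ℕ) ℤ) K (fun u v => v < A u ∧ b u ≤ v)
      (fun p => X (rr + p.1, tt + p.2))
  have step5 : (∏ p ∈ (Q K).filter (fun p => p.2 < A p.1 ∧ b p.1 ≤ p.2),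
        X (R := ℤ) (σ := ℕ × ℕ) (rr + p.1, tt + p.2))
      = ∏ p ∈ (Q K).filter
          (fun p => rr ≤ p.1 ∧ tt ≤ p.2 ∧ p.2 - tt < A (p.1 - rr) ∧ tt + b (p.1 - rr) ≤ p.2),
          X p := by
    refine Finset.prod_nbij' (i := fun p => (rr + p.1, tt + p.2)) (j := fun q => (q.1 - rr, q.2 - tt))
      ?_ ?_ ?_ ?_ ?_
    · intro p hp
      simp only [Finset.mem_filter, Q, Finset.mem_product, Finset.mem_range,
        Nat.add_sub_cancel_left] at hp ⊢
      obtain ⟨⟨hp1, hp2⟩, hp3, hp4⟩ := hp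
      have h5 : rr + p.1 < K := by
        by_contra h
        rw [hA0 p.1 (by omega)] at hp3; omega
      have h6 := hAK p.1
      refine ⟨⟨h5, by omega⟩, by omega, by omega, by omega, by omega⟩
    · intro q hq
      simp only [Finset.mem_filter, Q, Finset.mem_product, Finset.mem_range] at hq ⊢
      obtain ⟨⟨hq1, hq2⟩, h1, h2, h3, h4⟩ := hq
      exact ⟨⟨by omega, by omega⟩, h3, by omega⟩
    · intro p hp
      simp
    · intro q hq
      obtain ⟨q1, q2⟩ := q
      simp only [Finset.mem_filter, Q, Finset.mem_product, Finset.mem_range] at hq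
      obtain ⟨⟨hq1, hq2⟩, h1, h2, h3, h4⟩ := hq
      simp only [Prod.mk.injEq]
      constructor <;> omega
    · intro p hp
      rfl
  rw [step2, Finset.prod_congr rfl step3]
  exact step4.trans step5

section
variable {f : ℕ → ℕ} {ρ K : ℕ}
variable (hK1 : ∀ a, f a < K) (hK2 : ∀ a, K ≤ a → f a = 0) (hρK : ρ < K)
variable {r s c : ℕ} (hrc : r ≤ c) (hsc : s ≤ c) (hcρ : c ≤ ρ)

include hK1 hK2 hρK hrc hsc hcρ in
lemma wt_glue (g m : ℕ → ℕ) :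
    wt r c (fun u => if r + u < c then f (r + u) - c else 0) g
      * wt c s (fun u => f (c + u) - s) m
    = wt r s (fun u => f (r + u) - s) (glue r s c g m) := by
  have eV : wt r c (fun u => if r + u < c then f (r + u) - c else 0) g
      = ∏ p ∈ (Q K).filter (fun p => r ≤ p.1 ∧ c ≤ p.2
          ∧ p.2 - c < (if r + (p.1 - r) < c then f (r + (p.1 - r)) - c else 0)
          ∧ c + g (p.1 - r) ≤ p.2), X p :=
    wt_eq_prod K r c _ g
      (by intro u; have := hK1 (r + u)
          show c + (if r + u < c then f (r + u) - c else 0) < K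
          split <;> omega)
      (by intro u hu
          show (if r + u < c then f (r + u) - c else 0) = 0
          rw [if_neg (by omega)])
  have eW : wt c s (fun u => f (c + u) - s) m
      = ∏ p ∈ (Q K).filter (fun p => c ≤ p.1 ∧ s ≤ p.2
          ∧ p.2 - s < f (c + (p.1 - c)) - s ∧ s + m (p.1 - c) ≤ p.2), X p :=
    wt_eq_prod K c s _ m
      (by intro u; have := hK1 (c + u); show s + (f (c + u) - s) < K; omega)
      (by intro u hu; show f (c + u) - s = 0; rw [hK2 (c + u) (by omega)]; omega)
  have eP : wt r s (fun u => f (r + u) - s) (glue r s c g m)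
      = ∏ p ∈ (Q K).filter (fun p => r ≤ p.1 ∧ s ≤ p.2
          ∧ p.2 - s < f (r + (p.1 - r)) - s ∧ s + glue r s c g m (p.1 - r) ≤ p.2), X p :=
    wt_eq_prod K r s _ _
      (by intro u; have := hK1 (r + u); show s + (f (r + u) - s) < K; omega)
      (by intro u hu; show f (r + u) - s = 0; rw [hK2 (r + u) (by omega)]; omega)
  rw [eV, eW, eP]
  have hd : Disjoint
      ((Q K).filter (fun p => r ≤ p.1 ∧ c ≤ p.2
          ∧ p.2 - c < (if r + (p.1 - r) < c then f (r + (p.1 - r)) - c else 0)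
          ∧ c + g (p.1 - r) ≤ p.2))
      ((Q K).filter (fun p => c ≤ p.1 ∧ s ≤ p.2
          ∧ p.2 - s < f (c + (p.1 - c)) - s ∧ s + m (p.1 - c) ≤ p.2)) := by
    rw [Finset.disjoint_left]
    intro p hp hp'
    simp only [Finset.mem_filter] at hp hp'
    obtain ⟨-, h1, -, h3, -⟩ := hp
    obtain ⟨-, h1', -, -, -⟩ := hp'
    by_cases hc : r + (p.1 - r) < c
    · omega
    · rw [if_neg hc] at h3; omega
  rw [← Finset.prod_union hd]
  congr 1
  ext p
  simp only [Finset.mem_union, Finset.mem_filter]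
  by_cases hq : p ∈ Q K
  · simp only [hq, true_and]
    by_cases hr1 : r ≤ p.1
    · have e1 : r + (p.1 - r) = p.1 := by omega
      rw [e1]
      by_cases hpc : p.1 < c
      · rw [if_pos hpc]
        have e2 : glue r s c g m (p.1 - r) = (c - s) + g (p.1 - r) := if_pos (by omega)
        rw [e2]
        constructor
        · rintro (⟨-, h2, h3, h4⟩ | ⟨h1, -, -, -⟩)
          · exact ⟨hr1, by omega, by omega, by omega⟩
          · omega
        · rintro ⟨-, h2, h3, h4⟩
          exact Or.inl ⟨hr1, by omega, by omega, by omega⟩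
      · rw [if_neg hpc]
        have e3 : glue r s c g m (p.1 - r) = m (p.1 - c) := by
          unfold glue
          rw [if_neg (by omega)]
          congr 1
          omega
        rw [e3]
        have e4 : c + (p.1 - c) = p.1 := by omega
        rw [e4]
        constructor
        · rintro (⟨-, -, h3, -⟩ | ⟨h1, h2, h3, h4⟩)
          · omega
          · exact ⟨hr1, h2, h3, h4⟩
        · rintro ⟨-, h2, h3, h4⟩
          exact Or.inr ⟨by omega, h2, h3, h4⟩
    · constructor
      · rintro (⟨h, -⟩ | ⟨h, -⟩)
        · exact absurd h hr1
        · exact absurd (le_trans hrc h) hr1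
      · rintro ⟨h, -⟩
        exact absurd h hr1
  · simp [hq]

end

/-! ### Summation over a fiber, and the entry identity -/

lemma sum_Sc {f : ℕ → ℕ} {ρ K : ℕ} (hf : Antitone f) (hrank : ∀ k, k < ρ → k < f k)
    (hK1 : ∀ a, f a < K) (hK2 : ∀ a, K ≤ a → f a = 0) (hρK : ρ < K)
    (N : ℕ) (hN : ∀ a, N ≤ a → f a = 0)
    {r s c : ℕ} (hrc : r ≤ c) (hsc : s ≤ c) (hcρ : c ≤ ρ) :
    Vpoly f r c * Wpoly f c s
      = ∑ μ ∈ (Scset_finite f hf N hN r s c).toFinset, wt r s (fun u => f (r + u) - s) μ := by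
  unfold Vpoly Wpoly
  rw [finsum_mem_eq_finite_toFinset_sum _ (Vset_finite f hf N hN r c),
    finsum_mem_eq_finite_toFinset_sum _ (Wset_finite f hf N hN c s),
    Finset.sum_mul_sum]
  rw [← Finset.sum_product']
  refine Finset.sum_nbij' (i := fun p => glue r s c p.1 p.2)
    (j := fun μ => (cutV r s c μ, cutW r c μ)) ?_ ?_ ?_ ?_ ?_
  · intro p hp
    simp only [Finset.mem_product, Set.Finite.mem_toFinset] at hp ⊢
    exact glue_mem hf hrank hrc hsc hcρ hp.1 hp.2
  · intro μ hμ
    simp only [Finset.mem_product, Set.Finite.mem_toFinset] at hμ ⊢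
    exact cut_mem hrc hsc hμ
  · intro p hp
    simp only [Finset.mem_product, Set.Finite.mem_toFinset] at hp
    obtain ⟨h1, h2⟩ := cut_glue (s := s) (m := p.2) hrc hp.1
    exact Prod.ext h1 h2
  · intro μ hμ
    simp only [Set.Finite.mem_toFinset] at hμ
    exact glue_cut hrc hsc hμ
  · intro p hp
    exact wt_glue hK1 hK2 hρK hrc hsc hcρ p.1 p.2

lemma Ppoly_eq {f : ℕ → ℕ} {ρ K : ℕ} (hf : Antitone f) (hrank : ∀ k, k < ρ → k < f k)
    (hfρ : f ρ ≤ ρ)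
    (hK1 : ∀ a, f a < K) (hK2 : ∀ a, K ≤ a → f a = 0) (hρK : ρ < K)
    (N : ℕ) (hN : ∀ a, N ≤ a → f a = 0)
    {r s : ℕ} (hr : r ≤ ρ) (hs : s ≤ ρ) :
    Ppoly f r s = ∑ c ∈ Finset.Icc (max r s) ρ, Vpoly f r c * Wpoly f c s := by
  rw [Ppoly_def, finsum_mem_eq_finite_toFinset_sum _ (Sset_finite f hf N hN r s)]
  have hcover : (Sset_finite f hf N hN r s).toFinset
      = (Finset.Icc (max r s) ρ).biUnion (fun c => (Scset_finite f hf N hN r s c).toFinset) := by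
    ext μ
    simp only [Set.Finite.mem_toFinset, Finset.mem_biUnion, Finset.mem_Icc]
    constructor
    · intro hμ
      have hwit : max r s ≤ ρ ∧ μ (ρ - r) ≤ ρ - s := by
        refine ⟨by omega, ?_⟩
        have := hμ.2 (ρ - r)
        rw [Nat.add_sub_cancel' hr] at this
        omega
      have hex : ∃ d, max r s ≤ d ∧ μ (d - r) ≤ d - s := ⟨ρ, hwit⟩
      have hspec := Nat.find_spec hex
      refine ⟨Nat.find hex, ⟨hspec.1, Nat.find_min' hex hwit⟩, hμ, hspec.2, ?_⟩
      intro d hd1 hd2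
      have := Nat.find_min hex hd2
      push_neg at this
      exact this hd1
    · rintro ⟨c, hc, hμ⟩
      exact hμ.1
  rw [hcover, Finset.sum_biUnion ?hdisj]
  case hdisj =>
    intro c1 hc1 c2 hc2 hne
    simp only [Finset.coe_Icc, Set.mem_Icc] at hc1 hc2
    have main : ∀ a b : ℕ, max r s ≤ a → a < b →
        Disjoint ((Scset_finite f hf N hN r s a).toFinset)
          ((Scset_finite f hf N hN r s b).toFinset) := by
      intro a b ha hab
      rw [Finset.disjoint_left]
      intro μ hμa hμb
      simp only [Set.Finite.mem_toFinset] at hμa hμb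
      have h1 := hμa.2.1
      have h2 := hμb.2.2 a ha hab
      omega
    rcases lt_or_gt_of_ne hne with h | h
    · exact main c1 c2 hc1.1 h
    · exact (main c2 c1 hc2.1 h).symm
  exact Finset.sum_congr rfl fun c hc => by
    simp only [Finset.mem_Icc] at hc
    exact (sum_Sc hf hrank hK1 hK2 hρK N hN (by omega) (by omega) hc.2).symm

/-! ### Diagonal entries -/

lemma wt_one (rr tt : ℕ) (A b : ℕ → ℕ) (hA : ∀ u, A u = 0) : wt rr tt A b = 1 := by
  unfold wt
  have h : ∀ u, (∏ᶠ (v : ℕ) (_ : v < A u) (_ : b u ≤ v), X (R := ℤ) (σ := ℕ × ℕ) (rr + u, tt + v)) = 1 := by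
    intro u
    have h2 : ∀ v, (∏ᶠ (_ : v < A u) (_ : b u ≤ v), X (R := ℤ) (σ := ℕ × ℕ) (rr + u, tt + v)) = 1 := by
      intro v
      have hlt : ¬ (v < A u) := by rw [hA u]; omega
      rw [finprod_eq_if, if_neg hlt]
    rw [finprod_congr h2, finprod_one]
  rw [finprod_congr h, finprod_one]

lemma Vpoly_diag (f : ℕ → ℕ) (r : ℕ) : Vpoly f r r = 1 := by
  unfold Vpoly
  have hset : Vset f r r = {fun _ => 0} := by
    ext g
    simp only [Vset, Set.mem_setOf_eq, Set.mem_singleton_iff]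
    constructor
    · rintro ⟨-, -, h3⟩
      funext i
      exact h3 i (by omega)
    · rintro rfl
      exact ⟨fun _ _ _ => le_rfl, fun i => Nat.zero_le _, fun i _ => rfl⟩
  rw [hset, finsum_mem_singleton]
  exact wt_one _ _ _ _ (fun u => if_neg (by omega))

lemma Wpoly_diag (f : ℕ → ℕ) (c : ℕ) : Wpoly f c c = Apoly f c c := by
  unfold Wpoly
  have hset : Wset f c c = {fun _ => 0} := by
    ext m
    simp only [Wset, Set.mem_setOf_eq, Set.mem_singleton_iff]
    constructor
    · rintro ⟨h1, h2, -⟩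
      funext k
      have := h1 (Nat.zero_le k)
      omega
    · rintro rfl
      exact ⟨fun _ _ _ => le_rfl, Nat.zero_le _, fun k => Nat.zero_le _⟩
  rw [hset, finsum_mem_singleton]
  unfold wt Apoly
  refine finprod_congr fun u => finprod_congr fun v => finprod_congr fun _ => ?_
  exact finprod_eq_if.trans (if_pos (Nat.zero_le v))

lemma Apoly_rho (f : ℕ → ℕ) (ρ : ℕ) (h : ∀ u, f (ρ + u) ≤ ρ) : Apoly f ρ ρ = 1 := by
  unfold Apoly
  have h1 : ∀ u, (∏ᶠ (v : ℕ) (_ : v < f (ρ + u) - ρ), X (R := ℤ) (σ := ℕ × ℕ) (ρ + u, ρ + v)) = 1 := by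
    intro u
    have h2 : ∀ v, (∏ᶠ (_ : v < f (ρ + u) - ρ), X (R := ℤ) (σ := ℕ × ℕ) (ρ + u, ρ + v)) = 1 := by
      intro v
      rw [finprod_eq_if, if_neg (by have := h u; omega)]
    rw [finprod_congr h2, finprod_one]
  rw [finprod_congr h1, finprod_one]

end DetM11Aux

/-- **Theorem (determinant of `M(1,1)`).**
For a partition `λ` of rank `ρ` (parts `f`, 0-indexed), the determinant of the
`(ρ+1) × (ρ+1)` matrix `M(1,1) = (P_{rs})` equals the product of the monomials `A_{kk}`
over the diagonal squares `(k,k) ∈ λ`. -/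
theorem det_M11 (f : ℕ → ℕ) (hf : Antitone f) (hfz : ∃ N, f N = 0)
    (ρ : ℕ) (hρ : ρ = Set.ncard {k : ℕ | k < f k}) :
    (Matrix.of (fun r s : Fin (ρ + 1) => Ppoly f r s)).det
      = ∏ k ∈ Finset.range ρ, Apoly f k k := by
  classical
  obtain ⟨N₀, hN₀⟩ := hfz
  have hN : ∀ a, N₀ ≤ a → f a = 0 := fun a ha => Nat.le_zero.mp (hN₀ ▸ hf ha)
  -- rank facts
  have hex : ∃ k, ¬ (k < f k) := ⟨N₀, by rw [hN N₀ le_rfl]; omega⟩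
  obtain ⟨c₀, hc₀1, hc₀2⟩ : ∃ c, ¬ (c < f c) ∧ ∀ k, k < c → k < f k := by
    refine ⟨Nat.find hex, Nat.find_spec hex, fun k hk => ?_⟩
    have h := Nat.find_min hex hk
    rw [not_not] at h
    exact h
  have hTeq : {k : ℕ | k < f k} = Set.Iio c₀ := by
    ext k
    simp only [Set.mem_setOf_eq, Set.mem_Iio]
    constructor
    · intro hk
      by_contra h
      push_neg at h
      exact hc₀1 (lt_of_le_of_lt h (lt_of_lt_of_le hk (hf h)))
    · exact hc₀2 k
  have hρc : ρ = c₀ := by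
    rw [hρ, hTeq, show Set.Iio c₀ = ↑(Finset.range c₀) from by
      ext; simp, Set.ncard_coe_finset, Finset.card_range]
  have hrank : ∀ k, k < ρ → k < f k := by
    intro k hk
    have : k ∈ {k : ℕ | k < f k} := by
      rw [hTeq]
      exact Set.mem_Iio.mpr (by omega)
    exact this
  have hfρ : f ρ ≤ ρ := by
    have : ρ ∉ {k : ℕ | k < f k} := by
      rw [hTeq]
      simp [hρc]
    simp only [Set.mem_setOf_eq] at this
    omega
  set K := N₀ + f 0 + ρ + 1 with hK
  have hK1 : ∀ a, f a < K := fun a => by have := hf (Nat.zero_le a); omega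
  have hK2 : ∀ a, K ≤ a → f a = 0 := fun a ha => hN a (by omega)
  have hρK : ρ < K := by omega
  set Vm : Matrix (Fin (ρ + 1)) (Fin (ρ + 1)) (MvPolynomial (ℕ × ℕ) ℤ) :=
    Matrix.of (fun r c : Fin (ρ + 1) =>
      if (r : ℕ) ≤ (c : ℕ) then DetM11Aux.Vpoly f r c else 0) with hVm
  set Wm : Matrix (Fin (ρ + 1)) (Fin (ρ + 1)) (MvPolynomial (ℕ × ℕ) ℤ) :=
    Matrix.of (fun c s : Fin (ρ + 1) =>
      if (s : ℕ) ≤ (c : ℕ) then DetM11Aux.Wpoly f c s else 0) with hWm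
  have hM : Matrix.of (fun r s : Fin (ρ + 1) => Ppoly f r s) = Vm * Wm := by
    refine Matrix.ext fun r s => ?_
    rw [Matrix.mul_apply]
    show Ppoly f r s = ∑ c : Fin (ρ + 1), Vm r c * Wm c s
    have hr : (r : ℕ) ≤ ρ := Fin.is_le r
    have hs : (s : ℕ) ≤ ρ := Fin.is_le s
    calc Ppoly f r s
        = ∑ c ∈ Finset.Icc (max (r : ℕ) s) ρ, DetM11Aux.Vpoly f r c * DetM11Aux.Wpoly f c s :=
          DetM11Aux.Ppoly_eq hf hrank hfρ hK1 hK2 hρK N₀ hN hr hs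
      _ = ∑ c ∈ Finset.Icc (max (r : ℕ) s) ρ,
            ((if (r : ℕ) ≤ c then DetM11Aux.Vpoly f r c else 0)
              * (if (s : ℕ) ≤ c then DetM11Aux.Wpoly f c s else 0)) := by
          refine Finset.sum_congr rfl fun c hc => ?_
          simp only [Finset.mem_Icc] at hc
          rw [if_pos (by omega), if_pos (by omega)]
      _ = ∑ c ∈ Finset.range (ρ + 1),
            ((if (r : ℕ) ≤ c then DetM11Aux.Vpoly f r c else 0)
              * (if (s : ℕ) ≤ c then DetM11Aux.Wpoly f c s else 0)) := by
          refine Finset.sum_subset ?_ ?_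
          · intro c hc
            simp only [Finset.mem_Icc] at hc
            simp only [Finset.mem_range]
            omega
          · intro c hc hc'
            simp only [Finset.mem_range] at hc
            simp only [Finset.mem_Icc] at hc'
            by_cases h : (r : ℕ) ≤ c
            · rw [if_neg (show ¬ (s : ℕ) ≤ c by omega), mul_zero]
            · rw [if_neg h, zero_mul]
      _ = ∑ c : Fin (ρ + 1), Vm r c * Wm c s :=
          (Fin.sum_univ_eq_sum_range (fun c =>
            ((if (r : ℕ) ≤ c then DetM11Aux.Vpoly f r c else 0)
              * (if (s : ℕ) ≤ c then DetM11Aux.Wpoly f c s else 0))) (ρ + 1)).symm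
  rw [hM, Matrix.det_mul]
  have hdV : Vm.det = 1 := by
    rw [Matrix.det_of_upperTriangular (by
      intro i j hij
      have hij' : (j : ℕ) < (i : ℕ) := hij
      simp only [hVm, Matrix.of_apply]
      rw [if_neg (by omega)])]
    refine Finset.prod_eq_one fun i _ => ?_
    simp only [hVm, Matrix.of_apply, if_pos (le_refl (i : ℕ))]
    exact DetM11Aux.Vpoly_diag f i
  have hdW : Wm.det = ∏ k ∈ Finset.range ρ, Apoly f k k := by
    rw [Matrix.det_of_lowerTriangular Wm (by
      intro i j hij
      have hij' : (i : ℕ) < (j : ℕ) := hij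
      simp only [hWm, Matrix.of_apply]
      rw [if_neg (by omega)])]
    have hdiag : ∀ i : Fin (ρ + 1), Wm i i = Apoly f i i := by
      intro i
      simp only [hWm, Matrix.of_apply, if_pos (le_refl (i : ℕ))]
      exact DetM11Aux.Wpoly_diag f i
    calc ∏ i : Fin (ρ + 1), Wm i i
        = ∏ i : Fin (ρ + 1), Apoly f (i : ℕ) (i : ℕ) := Finset.prod_congr rfl fun i _ => hdiag i
      _ = ∏ k ∈ Finset.range (ρ + 1), Apoly f k k :=
          Fin.prod_univ_eq_prod_range (fun k => Apoly f k k) (ρ + 1)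
      _ = (∏ k ∈ Finset.range ρ, Apoly f k k) * Apoly f ρ ρ := Finset.prod_range_succ _ _
      _ = ∏ k ∈ Finset.range ρ, Apoly f k k := by
          rw [DetM11Aux.Apoly_rho f ρ (fun u => le_trans (hf (Nat.le_add_right ρ u)) hfρ), mul_one]
  rw [hdV, hdW, one_mul]
end

section
/- Let λ be a partition, let (i₀,j₀) ∈ λ* be a square of the extended partition, let ρ' = rank(λ(i₀,j₀)), and let M(i₀,j₀) be the (ρ'+1)×(ρ'+1) matrix over R whose (r,s)-entry is P_{i₀−1+r, j₀−1+s} for 1 ≤ r,s ≤ ρ'+1 (all these squares lie in λ*). Then there exist an upper unitriangular matrix P and a lower unitriangular matrix Q in SL(ρ'+1, R) such that P · M(i₀,j₀) · Q = diag(A_{i₀,j₀}, A_{i₀+1,j₀+1}, …, A_{i₀+ρ', j₀+ρ'}). -/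
open MvPolynomial

open Finset

noncomputable section
abbrev Rpoly : Type := MvPolynomial (ℕ × ℕ) ℤ

def Trow (f : ℕ → ℕ) (i c : ℕ) : Rpoly := ∏ v ∈ Finset.Ico c (f i), X (i, v)

def Pcap (f : ℕ → ℕ) : ℕ → ℕ → ℕ → ℤ → Rpoly
  | 0, _r, _s, c => if 0 ≤ c then 1 else 0
  | n+1, r, s, c => ∑ m ∈ Finset.range (f r - s + 1),
      if (m : ℤ) ≤ c then Trow f r (s+m) * Pcap f n (r+1) s (m:ℤ) else 0

def Wrec (f : ℕ → ℕ) (j₀ : ℕ) : ℕ → ℕ → ℕ → Rpoly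
  | _i, _b, 0 => 1
  | i, b, r+1 => ∑ a ∈ Finset.Ico b (f i - j₀), Trow f i (j₀+1+a) * Wrec f j₀ (i+1) (a+1) r

def rk (f : ℕ → ℕ) (i j : ℕ) : ℕ := Set.ncard {k | k < f (i+k) - j}

section rklem
variable {f : ℕ → ℕ}

lemma rkset_dc (hf : Antitone f) (i j : ℕ) {k k' : ℕ} (hk : k < f (i+k) - j) (h : k' ≤ k) :
    k' < f (i+k') - j := by
  have h1 : f (i+k) ≤ f (i+k') := hf (by omega)
  omega

lemma rk_spec (hf : Antitone f) (i j k : ℕ) : k < rk f i j ↔ k < f (i+k) - j := by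
  have hfin : {k | k < f (i+k) - j}.Finite := by
    apply Set.Finite.subset (Set.finite_Iio (f i))
    intro k hk
    have h1 : f (i+k) ≤ f i := hf (by omega)
    simp only [Set.mem_setOf_eq] at hk
    simp only [Set.mem_Iio]
    omega
  have hne : {m | ¬ m < f (i+m) - j}.Nonempty := by
    rcases hfin.exists_notMem with ⟨m, hm⟩
    exact ⟨m, hm⟩
  set n := sInf {m | ¬ m < f (i+m) - j} with hn
  have hnmem : ¬ n < f (i+n) - j := Nat.sInf_mem hne
  have hSeq : {k | k < f (i+k) - j} = Set.Iio n := by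
    ext m
    simp only [Set.mem_Iio, Set.mem_setOf_eq]
    constructor
    · intro hm
      by_contra hle
      exact hnmem (rkset_dc hf i j hm (by omega))
    · intro hm
      by_contra hm'
      have : n ≤ m := Nat.sInf_le hm'
      omega
  have hrk : rk f i j = n := by
    rw [rk, hSeq, ← Finset.coe_range, Set.ncard_coe_finset, Finset.card_range]
  rw [hrk]
  constructor
  · intro h
    have : k ∈ Set.Iio n := by simp [Set.mem_Iio]; omega
    rw [← hSeq] at this
    exact this
  · intro h
    have : k ∈ {k | k < f (i+k) - j} := h
    rw [hSeq] at this
    exact this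

lemma rk_width (hf : Antitone f) {i j r : ℕ} (h : rk f i j ≤ r) : f (i+r) ≤ j + r := by
  have h2 := (rk_spec hf i j r).not.mp (by omega)
  omega

lemma rk_row_step (hf : Antitone f) (i j : ℕ) : rk f i j ≤ rk f (i+1) j + 1 := by
  by_contra h
  push_neg at h
  have h2 : rk f (i+1) j + 1 < f (i + (rk f (i+1) j + 1)) - j := (rk_spec hf i j _).mp h
  have heq : i + (rk f (i+1) j + 1) = (i+1) + rk f (i+1) j := by omega
  rw [heq] at h2
  have h3 : rk f (i+1) j < rk f (i+1) j := (rk_spec hf (i+1) j _).mpr (by omega)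
  omega

lemma rk_col_step (hf : Antitone f) (i j : ℕ) : rk f i j ≤ rk f i (j+1) + 1 := by
  by_contra h
  push_neg at h
  have h2 := (rk_spec hf i j _).mp h
  have hm : f (i + (rk f i (j+1) + 1)) ≤ f (i + rk f i (j+1)) := hf (by omega)
  have h3 : rk f i (j+1) < rk f i (j+1) :=
    (rk_spec hf i (j+1) _).mpr (by omega)
  omega

lemma rk_diag_eq (hf : Antitone f) {i j : ℕ} (h : 1 ≤ rk f i j) :
    rk f (i+1) (j+1) + 1 = rk f i j := by
  have key : ∀ k, k < rk f (i+1) (j+1) ↔ k + 1 < rk f i j := by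
    intro k
    rw [rk_spec hf, rk_spec hf]
    have heq : i + (k+1) = (i+1) + k := by omega
    rw [heq]
    omega
  have h1 : rk f (i+1) (j+1) + 1 ≤ rk f i j := by
    rcases Nat.eq_zero_or_pos (rk f (i+1) (j+1)) with h0 | h0
    · omega
    · have := (key (rk f (i+1) (j+1) - 1)).mp (by omega)
      omega
  have h2 : rk f i j ≤ rk f (i+1) (j+1) + 1 := by
    by_contra hc
    push_neg at hc
    have := (key (rk f (i+1) (j+1))).mpr (by omega)
    omega
  omega

lemma rk_zero (hf : Antitone f) {i j : ℕ} (h : f i ≤ j) : rk f i j = 0 := by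
  by_contra hc
  have h2 := (rk_spec hf i j 0).mp (by omega)
  simp only [Nat.add_zero] at h2
  omega

end rklem
section lemmas
variable {f : ℕ → ℕ}

lemma Pcap_zero (r s : ℕ) (c : ℤ) : Pcap f 0 r s c = if 0 ≤ c then 1 else 0 := rfl

lemma Pcap_succ (n r s : ℕ) (c : ℤ) : Pcap f (n+1) r s c
    = ∑ m ∈ Finset.range (f r - s + 1),
        if (m : ℤ) ≤ c then Trow f r (s+m) * Pcap f n (r+1) s (m:ℤ) else 0 := rfl

lemma Wrec_zero (j₀ i b : ℕ) : Wrec f j₀ i b 0 = 1 := rfl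

lemma Wrec_succ (j₀ i b r : ℕ) : Wrec f j₀ i b (r+1)
    = ∑ a ∈ Finset.Ico b (f i - j₀), Trow f i (j₀+1+a) * Wrec f j₀ (i+1) (a+1) r := rfl

lemma Trow_empty {i c : ℕ} (h : f i ≤ c) : Trow f i c = 1 := by
  rw [Trow, Finset.Ico_eq_empty (by omega), Finset.prod_empty]

lemma Pcap_neg {n r s : ℕ} {c : ℤ} (hc : c < 0) : Pcap f n r s c = 0 := by
  cases n with
  | zero => rw [Pcap_zero, if_neg (by omega)]
  | succ n =>
    rw [Pcap_succ]
    apply Finset.sum_eq_zero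
    intro m _
    rw [if_neg (by omega)]

lemma Pcap_stable (hf : Antitone f) :
    ∀ (n) {r s : ℕ} {c : ℤ}, f (r + n) = 0 → Pcap f (n+1) r s c = Pcap f n r s c := by
  intro n
  induction n with
  | zero =>
    intro r s c h0
    rw [Nat.add_zero] at h0
    rw [Pcap_succ, Pcap_zero, h0]
    rw [show (0:ℕ) - s + 1 = 1 by omega, Finset.sum_range_one,
      Trow_empty (show f r ≤ s + 0 by omega), Pcap_zero]
    norm_num
  | succ n ih =>
    intro r s c h0
    rw [Pcap_succ, Pcap_succ]
    apply Finset.sum_congr rfl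
    intro m _
    have h1 : f (r+1+n) = 0 := by rw [show r+1+n = r+(n+1) by omega]; exact h0
    rw [ih h1]

lemma Pcap_empty (hf : Antitone f) :
    ∀ (n) {r s : ℕ} {c : ℤ}, f r ≤ s → 0 ≤ c → Pcap f n r s c = 1 := by
  intro n
  induction n with
  | zero => intro r s c h hc; rw [Pcap_zero, if_pos hc]
  | succ n ih =>
    intro r s c h hc
    rw [Pcap_succ]
    have hw : f r - s = 0 := by omega
    rw [hw, Finset.sum_range_one, if_pos (by omega)]
    rw [Trow_empty (by omega), ih (le_trans (hf (by omega)) h) (by omega), one_mul]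

lemma Wrec_vanish (hf : Antitone f) (j₀ : ℕ) :
    ∀ (r i b : ℕ), (∃ k, k < r ∧ f (i+k) ≤ j₀ + b + k) → Wrec f j₀ i b r = 0 := by
  intro r
  induction r with
  | zero => rintro i b ⟨k, hk, _⟩; omega
  | succ r ih =>
    rintro i b ⟨k, hk, hfk⟩
    rw [Wrec_succ]
    cases k with
    | zero =>
      rw [Nat.add_zero] at hfk
      rw [Finset.Ico_eq_empty (by omega), Finset.sum_empty]
    | succ k =>
      apply Finset.sum_eq_zero
      intro a ha
      rw [Finset.mem_Ico] at ha
      rw [ih (i+1) (a+1) ⟨k, by omega, by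
        have : f (i+1+k) = f (i+(k+1)) := by ring_nf
        omega⟩, mul_zero]

end lemmas

section genlem
variable {f : ℕ → ℕ}

lemma rk_diag_le (hf : Antitone f) (i j : ℕ) : rk f i j ≤ rk f (i+1) (j+1) + 1 := by
  rcases Nat.eq_zero_or_pos (rk f i j) with h | h
  · omega
  · rw [← rk_diag_eq hf h]

lemma rk_col_le (hf : Antitone f) (i j d : ℕ) : rk f i j ≤ rk f i (j+d) + d := by
  induction d with
  | zero => simp
  | succ d ih =>
    have h1 := rk_col_step hf i (j+d)
    rw [show j+(d+1) = j+d+1 by omega]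
    omega

lemma gen (hf : Antitone f) (j₀ N : ℕ) (hN : f N = 0) :
    ∀ (n i b s Rr : ℕ), f (i+n) = 0 → n ≤ Rr → s ≤ b + rk f i (j₀ + b) →
    (∑ r ∈ Finset.range (Rr+1),
      (-1:Rpoly)^r * Wrec f j₀ i b r * Pcap f (N+1) (i+r) (j₀+s) ((f (i+r) - (j₀+s) : ℕ) : ℤ))
    = if s ≤ b then Pcap f (N+1) i (j₀+s) ((b:ℤ) - (s:ℤ)) else 0 := by
  intro n
  induction n with
  | zero =>
    intro i b s Rr h0 hR hs
    rw [Nat.add_zero] at h0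
    have hrk : rk f i (j₀+b) = 0 := rk_zero hf (by omega)
    have hsb : s ≤ b := by omega
    rw [if_pos hsb]
    have hterm : ∀ r ∈ Finset.range (Rr+1), r ≠ 0 →
        (-1:Rpoly)^r * Wrec f j₀ i b r * Pcap f (N+1) (i+r) (j₀+s) ((f (i+r) - (j₀+s) : ℕ) : ℤ) = 0 := by
      intro r _ hr
      obtain ⟨r', rfl⟩ : ∃ r', r = r'+1 := ⟨r-1, by omega⟩
      rw [Wrec_succ, show f i - j₀ = 0 by omega, Finset.Ico_eq_empty (by omega),
        Finset.sum_empty, mul_zero, zero_mul]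
    rw [Finset.sum_eq_single_of_mem 0 (Finset.mem_range.mpr (by omega)) hterm]
    rw [Wrec_zero]
    simp only [Nat.add_zero]
    rw [show f i - (j₀+s) = 0 by omega]
    rw [Pcap_empty hf _ (by omega) (by omega), Pcap_empty hf _ (by omega) (by omega)]
    ring
  | succ n ih =>
    intro i b s Rr h0 hR hs
    have hkey : s ≤ b ∨ j₀ + s ≤ f i := by
      by_cases hsb : s ≤ b
      · exact Or.inl hsb
      · right
        push_neg at hsb
        have h1 : s - b - 1 < rk f i (j₀+b) := by omega
        have h2 := (rk_spec hf i (j₀+b) _).mp h1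
        have h3 : f (i + (s-b-1)) ≤ f i := hf (by omega)
        omega
    have hstabN : f (i+1+N) = 0 := Nat.le_zero.mp (hN ▸ hf (by omega))
    have hstab : ∀ m : ℤ, Pcap f (N+1) (i+1) (j₀+s) m = Pcap f N (i+1) (j₀+s) m :=
      fun m => Pcap_stable hf N hstabN
    obtain ⟨R', rfl⟩ : ∃ R', Rr = R'+1 := ⟨Rr-1, by omega⟩
    rw [Finset.sum_range_succ']
    have hstep : ∀ r ∈ Finset.range (R'+1),
        (-1:Rpoly)^(r+1) * Wrec f j₀ i b (r+1) *
          Pcap f (N+1) (i+(r+1)) (j₀+s) ((f (i+(r+1)) - (j₀+s) : ℕ) : ℤ)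
        = ∑ a ∈ Finset.Ico b (f i - j₀), -(Trow f i (j₀+1+a) *
            ((-1:Rpoly)^r * Wrec f j₀ (i+1) (a+1) r *
              Pcap f (N+1) ((i+1)+r) (j₀+s) ((f ((i+1)+r) - (j₀+s) : ℕ) : ℤ))) := by
      intro r _
      rw [Wrec_succ, show i+(r+1) = (i+1)+r by omega]
      rw [Finset.mul_sum, Finset.sum_mul]
      apply Finset.sum_congr rfl
      intro a _
      ring
    rw [Finset.sum_congr rfl hstep]
    rw [Finset.sum_comm]
    have hinner : ∀ a ∈ Finset.Ico b (f i - j₀),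
        (∑ r ∈ Finset.range (R'+1), -(Trow f i (j₀+1+a) *
            ((-1:Rpoly)^r * Wrec f j₀ (i+1) (a+1) r *
              Pcap f (N+1) ((i+1)+r) (j₀+s) ((f ((i+1)+r) - (j₀+s) : ℕ) : ℤ))))
        = -(Trow f i (j₀+1+a) *
            (if s ≤ a+1 then Pcap f (N+1) (i+1) (j₀+s) (((a+1:ℕ):ℤ) - (s:ℤ)) else 0)) := by
      intro a ha
      rw [Finset.mem_Ico] at ha
      have h0' : f ((i+1)+n) = 0 := by rw [show i+1+n = i+(n+1) by omega]; exact h0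
      have hca := rk_col_le hf i (j₀+b) (a-b)
      rw [show j₀+b+(a-b) = j₀+a by omega] at hca
      have hd := rk_diag_le hf i (j₀+a)
      rw [show j₀+a+1 = j₀+(a+1) by omega] at hd
      rw [Finset.sum_neg_distrib, ← Finset.mul_sum,
        ih (i+1) (a+1) s R' h0' (by omega) (by omega)]
    rw [Finset.sum_congr rfl hinner]
    rw [pow_zero, Wrec_zero, Nat.add_zero, one_mul, one_mul]
    have hPfull : Pcap f (N+1) i (j₀+s) ((f i - (j₀+s) : ℕ) : ℤ)
        = ∑ m ∈ Finset.range ((f i - (j₀+s)) + 1),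
            Trow f i ((j₀+s)+m) * Pcap f (N+1) (i+1) (j₀+s) (m:ℤ) := by
      rw [Pcap_succ]
      apply Finset.sum_congr rfl
      intro m hm
      rw [Finset.mem_range] at hm
      rw [if_pos (by omega), hstab]
    simp only [Nat.add_zero]
    rw [hPfull]
    have hre : (∑ a ∈ Finset.Ico b (f i - j₀), -(Trow f i (j₀+1+a) *
            (if s ≤ a+1 then Pcap f (N+1) (i+1) (j₀+s) (((a+1:ℕ):ℤ) - (s:ℤ)) else 0)))
        = -(∑ m ∈ Finset.range ((f i - (j₀+s)) + 1),
            if (b:ℤ) - (s:ℤ) < (m:ℤ) then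
              Trow f i ((j₀+s)+m) * Pcap f (N+1) (i+1) (j₀+s) (m:ℤ) else 0) := by
      rw [Finset.sum_neg_distrib]
      congr 1
      simp only [mul_ite, mul_zero]
      rw [← Finset.sum_filter, ← Finset.sum_filter]
      refine Finset.sum_nbij' (fun a => a+1-s) (fun m => m+s-1) ?_ ?_ ?_ ?_ ?_
      · intro a ha
        simp only [Finset.mem_filter, Finset.mem_Ico, Finset.mem_range] at ha ⊢
        omega
      · intro m hm
        simp only [Finset.mem_filter, Finset.mem_Ico, Finset.mem_range] at hm ⊢
        omega
      · intro a ha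
        simp only [Finset.mem_filter, Finset.mem_Ico] at ha
        show a + 1 - s + s - 1 = a
        omega
      · intro m hm
        simp only [Finset.mem_filter, Finset.mem_range] at hm
        show m + s - 1 + 1 - s = m
        omega
      · intro a ha
        simp only [Finset.mem_filter, Finset.mem_Ico] at ha
        rw [show j₀+1+a = (j₀+s)+(a+1-s) by omega,
          show ((a+1:ℕ):ℤ) - (s:ℤ) = (((a+1-s:ℕ)):ℤ) by omega]
    rw [hre, neg_add_eq_sub, ← Finset.sum_sub_distrib]
    by_cases hsb : s ≤ b
    · rw [if_pos hsb, Pcap_succ]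
      apply Finset.sum_congr rfl
      intro m hm
      rw [← hstab (m:ℤ)]
      by_cases hc : (b:ℤ) - (s:ℤ) < (m:ℤ)
      · rw [if_pos hc, if_neg (by omega), sub_self]
      · rw [if_neg hc, if_pos (by omega), sub_zero]
    · rw [if_neg hsb]
      apply Finset.sum_eq_zero
      intro m hm
      rw [if_pos (by omega), sub_self]
end genlem

section comb
variable {f : ℕ → ℕ}

def SsetC (f : ℕ → ℕ) (r s : ℕ) (c : ℤ) : Set (ℕ → ℕ) :=
  {μ | Antitone μ ∧ (∀ k, μ k ≤ f (r + k) - s) ∧ (μ 0 : ℤ) ≤ c}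

noncomputable def monoP (f : ℕ → ℕ) (r s : ℕ) (μ : ℕ → ℕ) : Rpoly :=
  ∏ᶠ (u : ℕ) (v : ℕ) (_ : v < f (r + u) - s) (_ : μ u ≤ v), X (r + u, s + v)

lemma Trow_shift (i s m : ℕ) :
    (∏ v ∈ Finset.Ico m (f i - s), (X (i, s+v) : Rpoly)) = Trow f i (s+m) := by
  rw [Trow]
  refine Finset.prod_nbij' (fun v => s+v) (fun t => t-s) ?_ ?_ ?_ ?_ ?_
  · intro v hv; simp only [Finset.mem_Ico] at hv ⊢; omega
  · intro t ht; simp only [Finset.mem_Ico] at ht ⊢; omega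
  · intro v hv; simp only [Finset.mem_Ico] at hv; show s + v - s = v; omega
  · intro t ht; simp only [Finset.mem_Ico] at ht; show s + (t - s) = t; omega
  · intro v hv; rfl

lemma monoP_inner (W m i s : ℕ) :
    (∏ᶠ (v : ℕ) (_ : v < W) (_ : m ≤ v), (X (i, s+v) : Rpoly))
    = ∏ v ∈ Finset.Ico m W, (X (i, s+v) : Rpoly) := by
  classical
  have h1 : ∀ v : ℕ, (∏ᶠ (_ : v < W) (_ : m ≤ v), (X (i, s+v) : Rpoly))
      = if v ∈ Finset.Ico m W then X (i, s+v) else 1 := by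
    intro v
    rw [finprod_eq_if, finprod_eq_if]
    simp only [Finset.mem_Ico]
    by_cases hv : v < W <;> by_cases hm : m ≤ v <;> simp [hv, hm]
  rw [finprod_congr h1]
  rw [finprod_eq_prod_of_mulSupport_subset _
    (s := Finset.Ico m W) (by
      intro v hv
      simp only [Function.mem_mulSupport] at hv
      by_contra hmem
      rw [if_neg (by simpa using hmem)] at hv
      exact hv rfl)]
  exact Finset.prod_congr rfl (fun v hv => if_pos hv)

lemma monoP_eq (hf : Antitone f) {r s K : ℕ} (hK : f (r + K) ≤ s) (μ : ℕ → ℕ) :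
    monoP f r s μ = ∏ u ∈ Finset.range K, Trow f (r+u) (s + μ u) := by
  rw [monoP]
  have h1 : ∀ u : ℕ, (∏ᶠ (v : ℕ) (_ : v < f (r+u) - s) (_ : μ u ≤ v), (X (r+u, s+v) : Rpoly))
      = Trow f (r+u) (s + μ u) := fun u => by rw [monoP_inner, Trow_shift]
  rw [finprod_congr h1]
  apply finprod_eq_prod_of_mulSupport_subset
  intro u hu
  simp only [Function.mem_mulSupport] at hu
  by_contra hmem
  simp only [Finset.coe_range, Set.mem_Iio, not_lt] at hmem
  refine hu (Trow_empty ?_)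
  have h2 : f (r + u) ≤ f (r + K) := hf (by omega)
  omega

lemma SsetC_finite (hf : Antitone f) {r s : ℕ} {c : ℤ} {K : ℕ} (hK : f (r + K) ≤ s) :
    (SsetC f r s c).Finite := by
  have hb : ∀ μ ∈ SsetC f r s c, ∀ k, μ k ≤ f r := by
    intro μ hμ k
    have h1 := hμ.2.1 k
    have h2 : f (r+k) ≤ f r := hf (by omega)
    omega
  have hz : ∀ μ ∈ SsetC f r s c, ∀ k, K ≤ k → μ k = 0 := by
    intro μ hμ k hk
    have h1 := hμ.2.1 k
    have h2 : f (r+k) ≤ f (r+K) := hf (by omega)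
    omega
  apply Set.Finite.of_finite_image (f := fun μ => (fun k : Fin K => μ k))
  · apply Set.Finite.subset (Set.Finite.pi (t := fun _ : Fin K => Set.Iic (f r))
      (fun _ => Set.finite_Iic (f r)))
    rintro g ⟨μ, hμ, rfl⟩
    simp only [Set.mem_pi, Set.mem_univ, Set.mem_Iic, forall_true_left]
    intro k
    exact hb μ hμ k
  · intro μ1 h1 μ2 h2 he
    funext k
    by_cases hk : k < K
    · exact congrFun he ⟨k, hk⟩
    · rw [hz μ1 h1 k (by omega), hz μ2 h2 k (by omega)]

lemma Pcomb_rec (hf : Antitone f) {N : ℕ} (hN : f N = 0) (r s : ℕ) (c : ℤ) :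
    (∑ᶠ μ ∈ SsetC f r s c, monoP f r s μ)
    = ∑ m ∈ Finset.range (f r - s + 1),
        if (m:ℤ) ≤ c then
          Trow f r (s+m) * (∑ᶠ μ ∈ SsetC f (r+1) s (m:ℤ), monoP f (r+1) s μ)
        else 0 := by
  classical
  have hK : f (r + (N+1)) ≤ s := by
    have h1 : f (r+(N+1)) ≤ f N := hf (by omega); omega
  have hK' : f ((r+1) + N) ≤ s := by
    have h1 : f (r+1+N) ≤ f N := hf (by omega); omega
  have hfin := SsetC_finite hf (c := c) hK
  have hfin' : ∀ m : ℕ, (SsetC f (r+1) s (m:ℤ)).Finite :=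
    fun m => SsetC_finite hf (c := (m:ℤ)) hK'
  rw [← hfin.coe_toFinset, finsum_mem_coe_finset]
  rw [← Finset.sum_fiberwise_of_maps_to (g := fun μ => μ 0)
    (t := Finset.range (f r - s + 1)) (fun μ hμ => by
      rw [Set.Finite.mem_toFinset] at hμ
      simp only [Finset.mem_range]
      have h9 := hμ.2.1 0
      simp only [Nat.add_zero] at h9
      omega)]
  apply Finset.sum_congr rfl
  intro m hm
  rw [Finset.mem_range] at hm
  by_cases hc : (m:ℤ) ≤ c
  · rw [if_pos hc]
    rw [← (hfin' m).coe_toFinset, finsum_mem_coe_finset, Finset.mul_sum]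
    refine Finset.sum_nbij' (fun μ => fun k => μ (k+1))
      (fun ν => fun k => Nat.casesOn k m (fun k' => ν k')) ?_ ?_ ?_ ?_ ?_
    · intro μ hμ
      simp only [Finset.mem_filter, Set.Finite.mem_toFinset] at hμ
      obtain ⟨⟨hanti, hbd, hcap⟩, h0⟩ := hμ
      rw [Set.Finite.mem_toFinset]
      refine ⟨fun x y hxy => hanti (by omega), fun k => ?_, ?_⟩
      · have := hbd (k+1)
        rw [show r+(k+1) = r+1+k by omega] at this
        exact this
      · have h1 : μ 1 ≤ μ 0 := hanti (by omega)
        have : μ 1 ≤ m := by omega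
        exact_mod_cast this
    · intro ν hν
      rw [Set.Finite.mem_toFinset] at hν
      obtain ⟨hanti, hbd, hcap⟩ := hν
      have hν0 : ν 0 ≤ m := by exact_mod_cast hcap
      simp only [Finset.mem_filter, Set.Finite.mem_toFinset]
      refine ⟨⟨?_, ?_, ?_⟩, rfl⟩
      · intro x y hxy
        match x, y with
        | 0, 0 => exact le_refl _
        | 0, (y+1) =>
          show ν y ≤ m
          have : ν y ≤ ν 0 := hanti (by omega)
          omega
        | (x+1), (y+1) =>
          exact hanti (by omega)
      · intro k
        match k with
        | 0 =>
          show m ≤ f (r + 0) - s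
          simp only [Nat.add_zero]
          omega
        | (k+1) =>
          show ν k ≤ f (r+(k+1)) - s
          have := hbd k
          rw [show r+(k+1) = r+1+k by omega]
          exact this
      · exact hc
    · intro μ hμ
      simp only [Finset.mem_filter, Set.Finite.mem_toFinset] at hμ
      funext k
      match k with
      | 0 => exact hμ.2.symm
      | (k+1) => rfl
    · intro ν hν
      funext k
      rfl
    · intro μ hμ
      simp only [Finset.mem_filter, Set.Finite.mem_toFinset] at hμ
      rw [monoP_eq hf hK μ, monoP_eq hf hK' (fun k => μ (k+1)), Finset.prod_range_succ']
      rw [show r + 0 = r by omega, hμ.2]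
      rw [mul_comm]
      congr 1
      apply Finset.prod_congr rfl
      intro u _
      rw [show r + (u+1) = r+1+u by omega]
  · rw [if_neg hc]
    apply Finset.sum_eq_zero
    intro μ hμ
    exfalso
    simp only [Finset.mem_filter, Set.Finite.mem_toFinset] at hμ
    have := hμ.1.2.2
    rw [hμ.2] at this
    exact hc this

lemma Pcomb_eq_Pcap (hf : Antitone f) {N : ℕ} (hN : f N = 0) :
    ∀ (n r : ℕ) (s : ℕ) (c : ℤ), f (r+n) = 0 →
    (∑ᶠ μ ∈ SsetC f r s c, monoP f r s μ) = Pcap f n r s c := by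
  intro n
  induction n with
  | zero =>
    intro r s c h0
    rw [Nat.add_zero] at h0
    rw [Pcap_zero]
    by_cases hc : 0 ≤ c
    · rw [if_pos hc]
      have hset : SsetC f r s c = {fun _ => 0} := by
        ext μ
        simp only [SsetC, Set.mem_setOf_eq, Set.mem_singleton_iff]
        constructor
        · rintro ⟨hanti, hbd, hcap⟩
          funext k
          have h1 := hbd k
          have h2 : f (r+k) ≤ f r := hf (by omega)
          omega
        · rintro rfl
          refine ⟨fun x y _ => le_refl 0, fun k => Nat.zero_le _, by exact_mod_cast hc⟩
      rw [hset, finsum_mem_singleton]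
      rw [monoP_eq hf (K := 0) (by simp [h0]), Finset.prod_range_zero]
    · rw [if_neg hc]
      have hset : SsetC f r s c = ∅ := by
        ext μ
        simp only [SsetC, Set.mem_setOf_eq, Set.mem_empty_iff_false, iff_false]
        rintro ⟨hanti, hbd, hcap⟩
        have : (0:ℤ) ≤ (μ 0 : ℤ) := by positivity
        omega
      rw [hset, finsum_mem_empty]
  | succ n ih =>
    intro r s c h0
    rw [Pcomb_rec hf hN, Pcap_succ]
    apply Finset.sum_congr rfl
    intro m _
    have h1 : f (r+1+n) = 0 := by rw [show r+1+n = r+(n+1) by omega]; exact h0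
    rw [ih (r+1) s (m:ℤ) h1]

end comb



section bridge
variable {f : ℕ → ℕ}

lemma Ppoly_eq_finsum (r s : ℕ) :
    Ppoly f r s = ∑ᶠ μ ∈ SsetC f r s ((f r - s : ℕ) : ℤ), monoP f r s μ := by
  rw [Ppoly]
  have hset : {μ : ℕ → ℕ | Antitone μ ∧ ∀ k, μ k ≤ f (r + k) - s}
      = SsetC f r s ((f r - s : ℕ) : ℤ) := by
    ext μ
    simp only [SsetC, Set.mem_setOf_eq]
    constructor
    · rintro ⟨h1, h2⟩
      refine ⟨h1, h2, ?_⟩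
      have h3 := h2 0
      simp only [Nat.add_zero] at h3
      exact_mod_cast h3
    · rintro ⟨h1, h2, _⟩; exact ⟨h1, h2⟩
  rw [hset]
  rfl

lemma Ppoly_eq_Pcap (hf : Antitone f) {N : ℕ} (hN : f N = 0) {n r s : ℕ} (h0 : f (r+n) = 0) :
    Ppoly f r s = Pcap f n r s ((f r - s : ℕ) : ℤ) := by
  rw [Ppoly_eq_finsum, Pcomb_eq_Pcap hf hN n r s _ h0]

lemma Apoly_eq_monoP (r s : ℕ) : Apoly f r s = monoP f r s (fun _ => 0) := by
  rw [Apoly, monoP]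
  apply finprod_congr; intro u
  apply finprod_congr; intro v
  apply finprod_congr; intro hv
  rw [finprod_eq_if, if_pos (Nat.zero_le v)]

lemma Pcap_cap0 (hf : Antitone f) :
    ∀ (n) {r s : ℕ}, f (r+n) ≤ s → Pcap f n r s 0 = monoP f r s (fun _ => 0) := by
  intro n
  induction n with
  | zero =>
    intro r s h0
    rw [Nat.add_zero] at h0
    rw [Pcap_zero, if_pos (le_refl (0:ℤ)), monoP_eq hf (K := 0) (by simpa using h0),
      Finset.prod_range_zero]
  | succ n ih =>
    intro r s h0
    rw [Pcap_succ]
    rw [Finset.sum_eq_single_of_mem 0 (Finset.mem_range.mpr (by omega)) (by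
      intro m _ hm
      rw [if_neg (by omega)])]
    rw [if_pos (by norm_num), Nat.cast_zero]
    have h1 : f (r+1+n) ≤ s := by rw [show r+1+n = r+(n+1) by omega]; exact h0
    rw [ih h1]
    have hK : f (r + (n+1)) ≤ s := h0
    rw [monoP_eq hf (K := n+1) hK, monoP_eq hf (K := n) (by
      rw [show r+1+n = r+(n+1) by omega]; exact h0)]
    rw [Finset.prod_range_succ']
    rw [mul_comm]
    congr 1
    apply Finset.prod_congr rfl
    intro u _
    rw [show r + 1 + u = r + (u+1) by omega]

lemma Apoly_eq_Pcap (hf : Antitone f) {n r s : ℕ} (h0 : f (r+n) = 0) :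
    Apoly f r s = Pcap f n r s 0 := by
  rw [Apoly_eq_monoP, Pcap_cap0 hf n (by omega)]

end bridge

section conj
def conjF (f : ℕ → ℕ) (v : ℕ) : ℕ := sInf {u | f u ≤ v}

variable {g : ℕ → ℕ}

lemma conjF_le_iff (hg : Antitone g) (hgz : ∃ N, g N = 0) {u v : ℕ} :
    conjF g v ≤ u ↔ g u ≤ v := by
  obtain ⟨N, hN⟩ := hgz
  have hne : {w | g w ≤ v}.Nonempty := ⟨N, by simp only [Set.mem_setOf_eq]; omega⟩
  constructor
  · intro h
    have hmem : g (conjF g v) ≤ v := by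
      have h2 : sInf {w | g w ≤ v} ∈ {w | g w ≤ v} := Nat.sInf_mem hne
      exact h2
    have := hg h
    omega
  · intro h
    exact Nat.sInf_le h

lemma conjF_lt_iff (hg : Antitone g) (hgz : ∃ N, g N = 0) {u v : ℕ} :
    u < conjF g v ↔ v < g u := by
  rw [← not_le, ← not_le, conjF_le_iff hg hgz]

lemma conjF_anti (hg : Antitone g) (hgz : ∃ N, g N = 0) : Antitone (conjF g) := by
  intro v v' hvv'
  rw [conjF_le_iff hg hgz]
  have h1 : g (conjF g v) ≤ v := by
    obtain ⟨N, hN⟩ := hgz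
    have h2 : sInf {w | g w ≤ v} ∈ {w | g w ≤ v} := Nat.sInf_mem ⟨N, show g N ≤ v by omega⟩
    exact h2
  omega

lemma conjF_ev0 (hgz : ∃ N, g N = 0) : ∃ M, conjF g M = 0 := by
  refine ⟨g 0, ?_⟩
  rw [conjF, Nat.sInf_eq_zero]
  left
  exact le_refl (g 0)

lemma conjF_invol (hg : Antitone g) (hgz : ∃ N, g N = 0) : conjF (conjF g) = g := by
  funext v
  have h : ∀ u, conjF (conjF g) v ≤ u ↔ g v ≤ u := by
    intro u
    rw [conjF_le_iff (conjF_anti hg hgz) (conjF_ev0 hgz), conjF_le_iff hg hgz]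
  have h1 := (h (g v)).mpr (le_refl _)
  have h2 := (h (conjF (conjF g) v)).mp (le_refl _)
  omega

lemma rk_conj (hg : Antitone g) (hgz : ∃ N, g N = 0) (i j : ℕ) :
    rk (conjF g) j i = rk g i j := by
  have hg' := conjF_anti hg hgz
  have key : ∀ k, k < rk (conjF g) j i ↔ k < rk g i j := by
    intro k
    rw [rk_spec hg', rk_spec hg]
    have h1 : i + k < conjF g (j+k) ↔ j + k < g (i+k) := conjF_lt_iff hg hgz
    omega
  by_contra hne
  rcases Nat.lt_or_ge (rk (conjF g) j i) (rk g i j) with h | h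
  · exact absurd ((key _).mpr h) (lt_irrefl _)
  · have h' : rk g i j < rk (conjF g) j i := by omega
    exact absurd ((key _).mp h') (lt_irrefl _)

end conj


section transpose
variable {f : ℕ → ℕ}

def sqF (f : ℕ → ℕ) (r s C : ℕ) (μ : ℕ → ℕ) : Finset (ℕ × ℕ) :=
  (Finset.range C ×ˢ Finset.range C).filter
    (fun p => r ≤ p.1 ∧ s ≤ p.2 ∧ p.2 < f p.1 ∧ μ (p.1 - r) ≤ p.2 - s)

lemma monoP_eq_sq (hf : Antitone f) {r s K C : ℕ} (hK : f (r + K) ≤ s)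
    (hC1 : r + K ≤ C) (hC2 : f 0 ≤ C) (μ : ℕ → ℕ) :
    monoP f r s μ = ∏ p ∈ sqF f r s C μ, X p := by
  classical
  rw [monoP_eq hf hK μ, sqF, Finset.prod_filter, Finset.prod_product]
  dsimp only
  have hrow : ∀ i ∈ Finset.range C,
      (∏ j ∈ Finset.range C,
        if r ≤ i ∧ s ≤ j ∧ j < f i ∧ μ (i-r) ≤ j - s then (X (i,j) : Rpoly) else 1)
      = if i ∈ Finset.Ico r (r+K) then Trow f i (s + μ (i-r)) else 1 := by
    intro i _
    by_cases hi : r ≤ i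
    · by_cases hiK : i < r + K
      · rw [if_pos (Finset.mem_Ico.mpr ⟨hi, hiK⟩), Trow]
        have hcond : ∀ j : ℕ,
            (if r ≤ i ∧ s ≤ j ∧ j < f i ∧ μ (i-r) ≤ j - s then (X (i,j) : Rpoly) else 1)
            = if j ∈ Finset.Ico (s + μ (i-r)) (f i) then (X (i,j) : Rpoly) else 1 := by
          intro j
          refine if_congr ?_ rfl rfl
          rw [Finset.mem_Ico]
          omega
        rw [Finset.prod_congr rfl (fun j _ => hcond j)]
        rw [Finset.prod_ite_mem]
        rw [Finset.inter_eq_right.mpr (by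
          intro x hx
          rw [Finset.mem_Ico] at hx
          rw [Finset.mem_range]
          have h2 : f i ≤ f 0 := hf (by omega)
          omega)]
      · rw [if_neg (by rw [Finset.mem_Ico]; omega)]
        apply Finset.prod_eq_one
        intro j _
        rw [if_neg (by
          have h2 : f i ≤ f (r+K) := hf (by omega)
          omega)]
    · rw [if_neg (by rw [Finset.mem_Ico]; omega)]
      apply Finset.prod_eq_one
      intro j _
      rw [if_neg (by omega)]
  rw [Finset.prod_congr rfl hrow, Finset.prod_ite_mem]
  rw [Finset.inter_eq_right.mpr (by
    intro x hx
    rw [Finset.mem_Ico] at hx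
    rw [Finset.mem_range]
    omega)]
  refine Finset.prod_nbij' (fun u => r + u) (fun i => i - r) ?_ ?_ ?_ ?_ ?_
  · intro u hu; rw [Finset.mem_range] at hu
    show r + u ∈ Finset.Ico r (r + K)
    rw [Finset.mem_Ico]; omega
  · intro i hi; rw [Finset.mem_Ico] at hi
    show i - r ∈ Finset.range K
    rw [Finset.mem_range]; omega
  · intro u hu; show r + u - r = u; omega
  · intro i hi; rw [Finset.mem_Ico] at hi; show r + (i - r) = i; omega
  · intro u hu
    rw [show r + u - r = u by omega]

lemma mu_ev0 {r s : ℕ} {c : ℤ} {N : ℕ} (hN : f (r + N) ≤ s) {μ : ℕ → ℕ}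
    (hμ : μ ∈ SsetC f r s c) : μ N = 0 := by
  have h1 := hμ.2.1 N
  omega

lemma conj_mem (hf : Antitone f) {N : ℕ} (hN : f N = 0) {r s : ℕ} {μ : ℕ → ℕ}
    (hμ : μ ∈ SsetC f r s ((f r - s : ℕ) : ℤ)) :
    conjF μ ∈ SsetC (conjF f) s r ((conjF f s - r : ℕ) : ℤ) := by
  have hfz : ∃ N, f N = 0 := ⟨N, hN⟩
  have hKr : f (r + N) ≤ s := by
    have h9 : f (r + N) ≤ f N := hf (by omega)
    omega
  have hμz : ∃ K, μ K = 0 := ⟨N, mu_ev0 hKr hμ⟩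
  have hbd : ∀ a, conjF μ a ≤ conjF f (s + a) - r := by
    intro a
    rcases Nat.eq_zero_or_pos (conjF μ a) with h0 | h0
    · omega
    · have hu : conjF μ a - 1 < conjF μ a := by omega
      have h1 : a < μ (conjF μ a - 1) := (conjF_lt_iff hμ.1 hμz).mp hu
      have h2 := hμ.2.1 (conjF μ a - 1)
      have h3 : s + a < f (r + (conjF μ a - 1)) := by omega
      have h4 : r + (conjF μ a - 1) < conjF f (s + a) := (conjF_lt_iff hf hfz).mpr h3
      omega
  refine ⟨conjF_anti hμ.1 hμz, hbd, ?_⟩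
  have h5 := hbd 0
  rw [Nat.add_zero] at h5
  exact_mod_cast h5

lemma sqF_transpose (hf : Antitone f) (hfz : ∃ N, f N = 0) {μ : ℕ → ℕ}
    (hμ : Antitone μ) (hμz : ∃ K, μ K = 0) (r s C : ℕ) :
    (sqF (conjF f) s r C (conjF μ)).image Prod.swap = sqF f r s C μ := by
  ext p
  obtain ⟨i, j⟩ := p
  simp only [sqF, Finset.mem_image, Finset.mem_filter, Finset.mem_product, Finset.mem_range]
  constructor
  · rintro ⟨⟨a, b⟩, ⟨⟨ha, hb⟩, h1, h2, h3, h4⟩, hswap⟩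
    have hba : b = i ∧ a = j := by
      have := hswap
      simp only [Prod.swap_prod_mk, Prod.mk.injEq] at this
      exact this
    obtain ⟨rfl, rfl⟩ := hba
    have h3' : a < f b := (conjF_lt_iff hf hfz).mp h3
    have h4' : μ (b - r) ≤ a - s := (conjF_le_iff hμ hμz).mp h4
    exact ⟨⟨hb, ha⟩, h2, h1, h3', h4'⟩
  · rintro ⟨⟨hi, hj⟩, h1, h2, h3, h4⟩
    refine ⟨(j, i), ⟨⟨hj, hi⟩, h2, h1, ?_, ?_⟩, rfl⟩
    · exact (conjF_lt_iff hf hfz).mpr h3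
    · exact (conjF_le_iff hμ hμz).mpr h4

lemma Ppoly_transpose (hf : Antitone f) (hfz : ∃ N, f N = 0) (r s : ℕ) :
    Ppoly f r s = rename Prod.swap (Ppoly (conjF f) s r) := by
  classical
  obtain ⟨N, hN⟩ := hfz
  have hfz : ∃ N, f N = 0 := ⟨N, hN⟩
  have hf' : Antitone (conjF f) := conjF_anti hf hfz
  obtain ⟨M, hM⟩ := conjF_ev0 (g := f) hfz
  have hfz' : ∃ M, conjF f M = 0 := ⟨M, hM⟩
  have hinvol : conjF (conjF f) = f := conjF_invol hf hfz
  have hKf : f (r + N) ≤ s := by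
    have : f (r + N) ≤ f N := hf (by omega); omega
  have hKf' : conjF f (s + M) ≤ r := by
    have : conjF f (s + M) ≤ conjF f M := hf' (by omega); omega
  have hfin : (SsetC f r s ((f r - s : ℕ) : ℤ)).Finite := SsetC_finite hf hKf
  have hfin' : (SsetC (conjF f) s r ((conjF f s - r : ℕ) : ℤ)).Finite :=
    SsetC_finite hf' hKf'
  rw [Ppoly_eq_finsum, Ppoly_eq_finsum]
  rw [← hfin.coe_toFinset, finsum_mem_coe_finset, ← hfin'.coe_toFinset, finsum_mem_coe_finset]
  rw [map_sum]
  set C := r + s + N + M + f 0 + conjF f 0 with hC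
  refine Finset.sum_nbij' (fun μ => conjF μ) (fun ν => conjF ν) ?_ ?_ ?_ ?_ ?_
  · intro μ hμ
    rw [Set.Finite.mem_toFinset] at hμ ⊢
    exact conj_mem hf hN hμ
  · intro ν hν
    rw [Set.Finite.mem_toFinset] at hν ⊢
    have := conj_mem hf' hM hν
    rwa [hinvol] at this
  · intro μ hμ
    rw [Set.Finite.mem_toFinset] at hμ
    exact conjF_invol hμ.1 ⟨N, mu_ev0 hKf hμ⟩
  · intro ν hν
    rw [Set.Finite.mem_toFinset] at hν
    exact conjF_invol hν.1 ⟨M, mu_ev0 hKf' hν⟩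
  · intro μ hμ
    rw [Set.Finite.mem_toFinset] at hμ
    have hμz : ∃ K, μ K = 0 := ⟨N, mu_ev0 hKf hμ⟩
    rw [monoP_eq_sq hf' (K := M) (C := C) hKf' (by omega) (by omega) (conjF μ)]
    rw [map_prod]
    have hren : ∀ p ∈ sqF (conjF f) s r C (conjF μ),
        (rename Prod.swap) (X p : Rpoly) = X (Prod.swap p) := fun p _ => rename_X _ _
    rw [Finset.prod_congr rfl hren]
    have hinj : ∀ x ∈ sqF (conjF f) s r C (conjF μ), ∀ y ∈ sqF (conjF f) s r C (conjF μ),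
        Prod.swap x = Prod.swap y → x = y := fun x _ y _ hxy => Prod.swap_injective hxy
    rw [← Finset.prod_image hinj]
    rw [sqF_transpose hf hfz hμ.1 hμz r s C]
    rw [← monoP_eq_sq hf (K := N) (C := C) hKf (by omega) (by omega) μ]
end transpose


section rowcol
variable {f : ℕ → ℕ}

lemma row_lemma (hf : Antitone f) {N : ℕ} (hN : f N = 0) (i₀ j₀ : ℕ) {s : ℕ}
    (hs : s ≤ rk f i₀ j₀) :
    (∑ r ∈ Finset.range (rk f i₀ j₀ + 1),
      (-1:Rpoly)^r * Wrec f j₀ i₀ 0 r * Ppoly f (i₀+r) (j₀+s))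
    = if s = 0 then Apoly f i₀ j₀ else 0 := by
  set ρ := rk f i₀ j₀ with hρ
  have hn0 : f (i₀ + N) = 0 := Nat.le_zero.mp (hN ▸ hf (by omega))
  have hgen := gen hf j₀ N hN N i₀ 0 s (max ρ N) hn0 (le_max_right _ _) (by
    rw [Nat.add_zero]; omega)
  have hP : ∀ r, Ppoly f (i₀+r) (j₀+s)
      = Pcap f (N+1) (i₀+r) (j₀+s) ((f (i₀+r) - (j₀+s) : ℕ) : ℤ) := by
    intro r
    apply Ppoly_eq_Pcap hf hN
    exact Nat.le_zero.mp (hN ▸ hf (by omega))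
  rw [Finset.sum_congr rfl (fun r _ => by rw [hP r])]
  rw [Finset.sum_subset (Finset.range_subset_range.mpr (by omega : ρ + 1 ≤ max ρ N + 1)) (by
      intro r hr hnr
      rw [Finset.mem_range] at hr hnr
      rw [Wrec_vanish hf j₀ r i₀ 0 ⟨ρ, by omega, by
        have h9 := rk_width hf (le_refl ρ)
        omega⟩, mul_zero, zero_mul])]
  rw [hgen]
  by_cases hs0 : s = 0
  · subst hs0
    rw [if_pos (by omega), if_pos rfl]
    have hcap : ((0:ℕ):ℤ) - ((0:ℕ):ℤ) = 0 := by norm_num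
    rw [hcap]
    rw [← Apoly_eq_Pcap hf (n := N+1) (by
      exact Nat.le_zero.mp (hN ▸ hf (by omega)) : f (i₀ + (N+1)) = 0)]
    rw [Nat.add_zero]
  · rw [if_neg (by omega), if_neg hs0]

lemma conjF_zero_fun : conjF (fun _ => 0) = (fun _ => (0:ℕ)) := by
  funext v
  rw [conjF, Nat.sInf_eq_zero]
  left
  exact Nat.zero_le v

lemma Apoly_transpose (hf : Antitone f) (hfz : ∃ N, f N = 0) (r s : ℕ) :
    Apoly f r s = rename Prod.swap (Apoly (conjF f) s r) := by
  classical
  obtain ⟨N, hN⟩ := hfz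
  have hfz : ∃ N, f N = 0 := ⟨N, hN⟩
  have hf' : Antitone (conjF f) := conjF_anti hf hfz
  obtain ⟨M, hM⟩ := conjF_ev0 (g := f) hfz
  have hKf : f (r + N) ≤ s := by
    have h9 : f (r + N) ≤ f N := hf (by omega); omega
  have hKf' : conjF f (s + M) ≤ r := by
    have h9 : conjF f (s + M) ≤ conjF f M := hf' (by omega); omega
  set C := r + s + N + M + f 0 + conjF f 0 with hC
  rw [Apoly_eq_monoP, Apoly_eq_monoP]
  rw [monoP_eq_sq hf' (K := M) (C := C) hKf' (by omega) (by omega) (fun _ => 0)]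
  rw [map_prod]
  have hren : ∀ p ∈ sqF (conjF f) s r C (fun _ => 0),
      (rename Prod.swap) ((X p : Rpoly)) = X (Prod.swap p) := fun p _ => rename_X _ _
  rw [Finset.prod_congr rfl hren]
  have hinj : ∀ x ∈ sqF (conjF f) s r C (fun _ => 0), ∀ y ∈ sqF (conjF f) s r C (fun _ => 0),
      Prod.swap x = Prod.swap y → x = y := fun x _ y _ hxy => Prod.swap_injective hxy
  rw [← Finset.prod_image hinj]
  have h0eq : sqF (conjF f) s r C (fun _ => 0) = sqF (conjF f) s r C (conjF (fun _ => 0)) := by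
    rw [conjF_zero_fun]
  rw [h0eq, sqF_transpose hf hfz (fun _ _ _ => le_refl 0) ⟨0, rfl⟩ r s C]
  rw [← monoP_eq_sq hf (K := N) (C := C) hKf (by omega) (by omega) (fun _ => 0)]

lemma col_lemma (hf : Antitone f) (hfz : ∃ N, f N = 0) (i₀ j₀ : ℕ) {t : ℕ}
    (ht : t ≤ rk f i₀ j₀) :
    (∑ sI ∈ Finset.range (rk f i₀ j₀ + 1),
      (-1:Rpoly)^sI * (rename Prod.swap (Wrec (conjF f) i₀ j₀ 0 sI)) * Ppoly f (i₀+t) (j₀+sI))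
    = if t = 0 then Apoly f i₀ j₀ else 0 := by
  obtain ⟨N, hN⟩ := hfz
  have hfz : ∃ N, f N = 0 := ⟨N, hN⟩
  have hf' : Antitone (conjF f) := conjF_anti hf hfz
  obtain ⟨M, hM⟩ := conjF_ev0 (g := f) hfz
  have hrk' : rk (conjF f) j₀ i₀ = rk f i₀ j₀ := rk_conj hf hfz i₀ j₀
  have hrow := row_lemma hf' hM j₀ i₀ (s := t) (by omega)
  have hone := congrArg (rename (Prod.swap : ℕ × ℕ → ℕ × ℕ)) hrow
  rw [map_sum] at hone
  rw [hrk'] at hone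
  have hterm : ∀ sI ∈ Finset.range (rk f i₀ j₀ + 1),
      (rename (Prod.swap : ℕ × ℕ → ℕ × ℕ))
        ((-1:Rpoly)^sI * Wrec (conjF f) i₀ j₀ 0 sI * Ppoly (conjF f) (j₀+sI) (i₀+t))
      = (-1:Rpoly)^sI * (rename Prod.swap (Wrec (conjF f) i₀ j₀ 0 sI)) *
          Ppoly f (i₀+t) (j₀+sI) := by
    intro sI _
    rw [map_mul, map_mul, map_pow, map_neg, map_one]
    rw [← Ppoly_transpose hf hfz (i₀+t) (j₀+sI)]
  rw [Finset.sum_congr rfl hterm] at hone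
  rw [hone]
  by_cases ht0 : t = 0
  · rw [if_pos ht0, if_pos ht0, ← Apoly_transpose hf hfz i₀ j₀]
  · rw [if_neg ht0, if_neg ht0, map_zero]
end rowcol


section matrixpart
variable {f : ℕ → ℕ}

noncomputable def upperExt {n : ℕ} (u : Fin n → Rpoly) (P : Matrix (Fin n) (Fin n) Rpoly) :
    Matrix (Fin (n+1)) (Fin (n+1)) Rpoly :=
  Matrix.of (fun i => Fin.cases (Fin.cons 1 u) (fun i' => Fin.cons 0 (P i')) i)

noncomputable def lowerExt {n : ℕ} (l : Fin n → Rpoly) (Q : Matrix (Fin n) (Fin n) Rpoly) :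
    Matrix (Fin (n+1)) (Fin (n+1)) Rpoly :=
  Matrix.of (fun i => Fin.cases (Fin.cons 1 (fun _ => 0)) (fun i' => Fin.cons (l i') (Q i')) i)

@[simp] lemma upperExt_zz {n : ℕ} (u : Fin n → Rpoly) (P : Matrix (Fin n) (Fin n) Rpoly) :
    upperExt u P 0 0 = 1 := by simp [upperExt]
@[simp] lemma upperExt_zs {n : ℕ} (u : Fin n → Rpoly) (P : Matrix (Fin n) (Fin n) Rpoly)
    (j : Fin n) : upperExt u P 0 j.succ = u j := by simp [upperExt]
@[simp] lemma upperExt_sz {n : ℕ} (u : Fin n → Rpoly) (P : Matrix (Fin n) (Fin n) Rpoly)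
    (i : Fin n) : upperExt u P i.succ 0 = 0 := by simp [upperExt]
@[simp] lemma upperExt_ss {n : ℕ} (u : Fin n → Rpoly) (P : Matrix (Fin n) (Fin n) Rpoly)
    (i j : Fin n) : upperExt u P i.succ j.succ = P i j := by simp [upperExt]
@[simp] lemma lowerExt_zz {n : ℕ} (l : Fin n → Rpoly) (Q : Matrix (Fin n) (Fin n) Rpoly) :
    lowerExt l Q 0 0 = 1 := by simp [lowerExt]
@[simp] lemma lowerExt_zs {n : ℕ} (l : Fin n → Rpoly) (Q : Matrix (Fin n) (Fin n) Rpoly)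
    (j : Fin n) : lowerExt l Q 0 j.succ = 0 := by simp [lowerExt]
@[simp] lemma lowerExt_sz {n : ℕ} (l : Fin n → Rpoly) (Q : Matrix (Fin n) (Fin n) Rpoly)
    (i : Fin n) : lowerExt l Q i.succ 0 = l i := by simp [lowerExt]
@[simp] lemma lowerExt_ss {n : ℕ} (l : Fin n → Rpoly) (Q : Matrix (Fin n) (Fin n) Rpoly)
    (i j : Fin n) : lowerExt l Q i.succ j.succ = Q i j := by simp [lowerExt]

lemma auxmain (hf : Antitone f) {N : ℕ} (hN : f N = 0) :
    ∀ (ρ i₀ j₀ : ℕ), rk f i₀ j₀ = ρ →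
    ∃ P Q : Matrix (Fin (ρ+1)) (Fin (ρ+1)) Rpoly,
      (∀ i, P i i = 1) ∧ (∀ i j, j < i → P i j = 0) ∧
      (∀ i, Q i i = 1) ∧ (∀ i j, i < j → Q i j = 0) ∧
      P * Matrix.of (fun r s : Fin (ρ+1) => Ppoly f (i₀+(r:ℕ)) (j₀+(s:ℕ))) * Q
        = Matrix.diagonal (fun k : Fin (ρ+1) => Apoly f (i₀+(k:ℕ)) (j₀+(k:ℕ))) := by
  intro ρ
  induction ρ with
  | zero =>
    intro i₀ j₀ hrk
    have h00 : Ppoly f i₀ j₀ = Apoly f i₀ j₀ := by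
      have h1 := row_lemma hf hN i₀ j₀ (s := 0) (by omega)
      rw [hrk] at h1
      simp only [zero_add, Finset.range_one, Finset.sum_singleton, pow_zero, Wrec_zero,
        one_mul, Nat.add_zero, if_pos rfl] at h1
      exact h1
    refine ⟨1, 1, fun i => Matrix.one_apply_eq i, fun i j h => Matrix.one_apply_ne (ne_of_gt h),
      fun i => Matrix.one_apply_eq i, fun i j h => Matrix.one_apply_ne (ne_of_lt h), ?_⟩
    · rw [one_mul, mul_one]
      apply Matrix.ext
      intro i j
      have hij : i = j := by
        have h1 := i.isLt
        have h2 := j.isLt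
        apply Fin.ext
        omega
      subst hij
      rw [Matrix.diagonal_apply_eq, Matrix.of_apply]
      have hv : (i:ℕ) = 0 := by omega
      rw [hv]
      simp only [Nat.add_zero]
      exact h00
  | succ ρ ih =>
    intro i₀ j₀ hrk
    have hrk1 : 1 ≤ rk f i₀ j₀ := by omega
    have hrkd : rk f (i₀+1) (j₀+1) = ρ := by
      have := rk_diag_eq hf hrk1; omega
    obtain ⟨P', Q', hP1, hP0, hQ1, hQ0, hPMQ⟩ := ih (i₀+1) (j₀+1) hrkd
    refine ⟨upperExt (fun r : Fin (ρ+1) => (-1:Rpoly)^((r:ℕ)+1) * Wrec f j₀ i₀ 0 ((r:ℕ)+1)) P',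
            lowerExt (fun sI : Fin (ρ+1) => (-1:Rpoly)^((sI:ℕ)+1) *
              rename Prod.swap (Wrec (conjF f) i₀ j₀ 0 ((sI:ℕ)+1))) Q', ?_, ?_, ?_, ?_, ?_⟩
    · intro i
      cases i using Fin.cases with
      | zero => simp
      | succ i' => simp [hP1 i']
    · intro i j hij
      cases i using Fin.cases with
      | zero => exact absurd hij (Fin.not_lt_zero j)
      | succ i' =>
        cases j using Fin.cases with
        | zero => simp
        | succ j' =>
          have hlt : j' < i' := by
            rwa [Fin.succ_lt_succ_iff] at hij
          simp [hP0 i' j' hlt]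
    · intro i
      cases i using Fin.cases with
      | zero => simp
      | succ i' => simp [hQ1 i']
    · intro i j hij
      cases j using Fin.cases with
      | zero => exact absurd hij (Fin.not_lt_zero i)
      | succ j' =>
        cases i using Fin.cases with
        | zero => simp
        | succ i' =>
          have hlt : i' < j' := by
            rwa [Fin.succ_lt_succ_iff] at hij
          simp [hQ0 i' j' hlt]
    · -- main product computation
      set P := upperExt (fun r : Fin (ρ+1) => (-1:Rpoly)^((r:ℕ)+1) * Wrec f j₀ i₀ 0 ((r:ℕ)+1)) P' with hPdef
      set Q := lowerExt (fun sI : Fin (ρ+1) => (-1:Rpoly)^((sI:ℕ)+1) *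
          rename Prod.swap (Wrec (conjF f) i₀ j₀ 0 ((sI:ℕ)+1))) Q' with hQdef
      set M := Matrix.of (fun r s : Fin (ρ+2) => Ppoly f (i₀+(r:ℕ)) (j₀+(s:ℕ))) with hMdef
      have hrowFin : ∀ k : Fin (ρ+2),
          (∑ k' : Fin (ρ+2), P 0 k' * Ppoly f (i₀+(k':ℕ)) (j₀+(k:ℕ)))
          = if (k:ℕ) = 0 then Apoly f i₀ j₀ else 0 := by
        intro k
        have hPe : ∀ k' : Fin (ρ+2),
            P 0 k' = (-1:Rpoly)^(k':ℕ) * Wrec f j₀ i₀ 0 (k':ℕ) := by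
          intro k'
          cases k' using Fin.cases with
          | zero => simp [hPdef, Wrec_zero]
          | succ r => simp [hPdef, Fin.val_succ]
        rw [Finset.sum_congr rfl (fun k' _ => by rw [hPe k'])]
        rw [Fin.sum_univ_eq_sum_range
          (fun m => (-1:Rpoly)^m * Wrec f j₀ i₀ 0 m * Ppoly f (i₀+m) (j₀+(k:ℕ))) (ρ+2)]
        have h1 := row_lemma hf hN i₀ j₀ (s := (k:ℕ)) (by have := k.isLt; omega)
        rw [hrk] at h1
        exact h1
      have hcolFin : ∀ (t : ℕ), t ≤ ρ+1 →
          (∑ k : Fin (ρ+2), Ppoly f (i₀+t) (j₀+(k:ℕ)) * Q k 0)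
          = if t = 0 then Apoly f i₀ j₀ else 0 := by
        intro t ht
        have hQe : ∀ k : Fin (ρ+2),
            Q k 0 = (-1:Rpoly)^(k:ℕ) * rename Prod.swap (Wrec (conjF f) i₀ j₀ 0 (k:ℕ)) := by
          intro k
          cases k using Fin.cases with
          | zero => simp [hQdef, Wrec_zero]
          | succ r => simp [hQdef, Fin.val_succ]
        rw [Finset.sum_congr rfl (fun k _ => by rw [hQe k, mul_comm])]
        rw [Fin.sum_univ_eq_sum_range
          (fun m => (-1:Rpoly)^m * rename Prod.swap (Wrec (conjF f) i₀ j₀ 0 m) *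
            Ppoly f (i₀+t) (j₀+m)) (ρ+2)]
        have h1 := col_lemma hf ⟨N, hN⟩ i₀ j₀ (t := t) (by omega)
        rw [hrk] at h1
        exact h1
      apply Matrix.ext
      intro i j
      rw [Matrix.mul_apply]
      have hPM : ∀ (i k : Fin (ρ+2)),
          (P * M) i k = ∑ k' : Fin (ρ+2), P i k' * Ppoly f (i₀+(k':ℕ)) (j₀+(k:ℕ)) :=
        fun i k => Matrix.mul_apply
      cases i using Fin.cases with
      | zero =>
        have h1 : ∀ k : Fin (ρ+2), (P * M) 0 k = if (k:ℕ) = 0 then Apoly f i₀ j₀ else 0 :=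
          fun k => by rw [hPM 0 k, hrowFin k]
        rw [Finset.sum_congr rfl (fun k _ => by rw [h1 k])]
        rw [Finset.sum_eq_single_of_mem 0 (Finset.mem_univ 0) (fun k _ hk => by
          rw [if_neg (by
            intro hc
            exact hk (by
              apply Fin.ext
              simpa using hc)), zero_mul])]
        rw [if_pos (by simp)]
        cases j using Fin.cases with
        | zero =>
          rw [show Q 0 0 = 1 from by simp [hQdef], mul_one, Matrix.diagonal_apply_eq]
          simp
        | succ j' =>
          rw [show Q 0 j'.succ = 0 from by simp [hQdef], mul_zero]
          rw [Matrix.diagonal_apply_ne _ (by exact (Fin.succ_ne_zero j').symm)]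
      | succ i' =>
        have h2 : ∀ k : Fin (ρ+2), (P * M) (Fin.succ i') k
            = ∑ r : Fin (ρ+1), P' i' r * Ppoly f (i₀+((r:ℕ)+1)) (j₀+(k:ℕ)) := by
          intro k
          rw [hPM, Fin.sum_univ_succ]
          rw [show P (Fin.succ i') 0 = 0 from by simp [hPdef], zero_mul, zero_add]
          apply Finset.sum_congr rfl
          intro r _
          rw [show P (Fin.succ i') (Fin.succ r) = P' i' r from by simp [hPdef], Fin.val_succ]
        cases j using Fin.cases with
        | zero =>
          rw [Finset.sum_congr rfl (fun k _ => by rw [h2 k, Finset.sum_mul])]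
          rw [Finset.sum_comm]
          have h3 : ∀ r : Fin (ρ+1),
              (∑ k : Fin (ρ+2), P' i' r * Ppoly f (i₀+((r:ℕ)+1)) (j₀+(k:ℕ)) * Q k 0)
              = P' i' r * (∑ k : Fin (ρ+2), Ppoly f (i₀+((r:ℕ)+1)) (j₀+(k:ℕ)) * Q k 0) := by
            intro r
            rw [Finset.mul_sum]
            apply Finset.sum_congr rfl
            intro k _
            ring
          rw [Finset.sum_congr rfl (fun r _ => h3 r)]
          rw [Finset.sum_congr rfl (fun r _ => by
            rw [hcolFin ((r:ℕ)+1) (by have := r.isLt; omega), if_neg (by omega), mul_zero])]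
          rw [Finset.sum_const_zero]
          rw [Matrix.diagonal_apply_ne _ (Fin.succ_ne_zero i')]
        | succ j' =>
          rw [Fin.sum_univ_succ]
          rw [show Q 0 j'.succ = 0 from by simp [hQdef], mul_zero, zero_add]
          have h4 : ∀ k' : Fin (ρ+1), (P * M) (Fin.succ i') (Fin.succ k')
              = (P' * Matrix.of (fun r s : Fin (ρ+1) =>
                  Ppoly f ((i₀+1)+(r:ℕ)) ((j₀+1)+(s:ℕ)))) i' k' := by
            intro k'
            rw [h2, Matrix.mul_apply]
            apply Finset.sum_congr rfl
            intro r _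
            rw [Matrix.of_apply, Fin.val_succ]
            congr 2
            · omega
            · omega
          rw [Finset.sum_congr rfl (fun k' _ => by
            rw [h4 k', show Q (Fin.succ k') j'.succ = Q' k' j' from by simp [hQdef]])]
          have h5 : (∑ k' : Fin (ρ+1),
              (P' * Matrix.of (fun r s : Fin (ρ+1) =>
                Ppoly f ((i₀+1)+(r:ℕ)) ((j₀+1)+(s:ℕ)))) i' k' * Q' k' j')
              = (P' * Matrix.of (fun r s : Fin (ρ+1) =>
                  Ppoly f ((i₀+1)+(r:ℕ)) ((j₀+1)+(s:ℕ))) * Q') i' j' :=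
            (Matrix.mul_apply).symm
          rw [h5, hPMQ]
          by_cases hij : i' = j'
          · subst hij
            rw [Matrix.diagonal_apply_eq, Matrix.diagonal_apply_eq, Fin.val_succ,
              show i₀+1+(i':ℕ) = i₀+((i':ℕ)+1) from by omega,
              show j₀+1+(i':ℕ) = j₀+((i':ℕ)+1) from by omega]
          · rw [Matrix.diagonal_apply_ne _ hij,
              Matrix.diagonal_apply_ne _ (fun hc => hij (Fin.succ_injective _ hc))]
end matrixpart

end


/-- **Theorem (Smith normal form of `M(i₀,j₀)`).**
For a square `(i₀,j₀)` of `λ*` (0-indexed) with `ρ' = rank λ(i₀,j₀)`, there are an upper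
unitriangular `P` and a lower unitriangular `Q` over `R` (hence in `SL(ρ'+1,R)`) with
`P ⬝ M(i₀,j₀) ⬝ Q = diag(A_{i₀,j₀}, A_{i₀+1,j₀+1}, …, A_{i₀+ρ',j₀+ρ'})`. -/
theorem smithNormalForm_Mij (f : ℕ → ℕ) (hf : Antitone f) (hfz : ∃ N, f N = 0)
    (i₀ j₀ : ℕ) (hij : MemExt f i₀ j₀)
    (ρ' : ℕ) (hρ' : ρ' = Set.ncard {k : ℕ | k < f (i₀ + k) - j₀}) :
    ∃ P Q : Matrix (Fin (ρ' + 1)) (Fin (ρ' + 1)) (MvPolynomial (ℕ × ℕ) ℤ),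
      (∀ i, P i i = 1) ∧ (∀ i j : Fin (ρ' + 1), j < i → P i j = 0) ∧
      (∀ i, Q i i = 1) ∧ (∀ i j : Fin (ρ' + 1), i < j → Q i j = 0) ∧
      P * Matrix.of (fun r s : Fin (ρ' + 1) => Ppoly f (i₀ + r) (j₀ + s)) * Q
        = Matrix.diagonal (fun k : Fin (ρ' + 1) => Apoly f (i₀ + k) (j₀ + k)) := by
  obtain ⟨N, hN⟩ := hfz
  have hrk : rk f i₀ j₀ = ρ' := by rw [rk, hρ']
  obtain ⟨P, Q, h1, h2, h3, h4, h5⟩ := auxmain hf hN ρ' i₀ j₀ hrk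
  exact ⟨P, Q, h1, h2, h3, h4, h5⟩
end

section
/- Let λ be a partition, let (i₀,j₀) ∈ λ* be a square of the extended partition, let ρ' = rank(λ(i₀,j₀)), and let M(i₀,j₀) be the (ρ'+1)×(ρ'+1) matrix over R whose (r,s)-entry is P_{i₀−1+r, j₀−1+s} for 1 ≤ r,s ≤ ρ'+1. Then det M(i₀,j₀) = ∏_{k=0}^{ρ'−1} A_{i₀+k, j₀+k} (note A_{i₀+ρ', j₀+ρ'} = 1). -/
open MvPolynomial

/-!
Encode `μ ⊆ λ(r,s)` by the lattice path tracing the boundary of `μ` inside `λ(r,s)`: then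
`P_{rs}` is the generating function of paths entering at row `r` and leaving at column `s`, each
weighted by the cells of `λ` to its right, and `A_{rs}` is the weight of the path cutting off all
of `λ(r,s)`. Expanding `det M(i₀,j₀)` gives a signed sum over families of paths from the sources
`i₀ + σ k` to the sinks `j₀ + k` (Lindström–Gessel–Viennot). Swapping the tails of two paths
through the lexicographically first point shared by two paths is a weight-preserving,
sign-reversing involution on the intersecting families. The rank condition keeps the swapped
paths admissible (a path may leave `λ` only along its sink column) and forces the unique
non-intersecting family to consist of the paths cutting off `λ(i₀+k, j₀+k)`, of weight
`∏ A_{i₀+k, j₀+k}`.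
-/

noncomputable section

namespace LatticePath

open Finset Equiv

section Paths

variable (f : ℕ → ℕ)

def rowWeight (a c : ℕ) : MvPolynomial (ℕ × ℕ) ℤ := ∏ b ∈ Ico c (f a), X (a, b)

def pathWeight (N : ℕ) (d : ℕ → ℕ) : MvPolynomial (ℕ × ℕ) ℤ :=
  ∏ a ∈ range N, rowWeight f a (d a)

def pathOf (top R C : ℕ) (μ : ℕ → ℕ) : ℕ → ℕ := fun a => if a < R then top else C + μ (a - R)

/-- `d a` is the column where the path crosses row `a`; the cells `(a, b)` of `λ` with
`b ≥ d a` lie to its right. Above its source row `R` the path runs down the far column `top`;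
outside `λ` it is pinned to its sink column `C`. -/
structure IsPath (top R C : ℕ) (d : ℕ → ℕ) : Prop where
  antitone : Antitone d
  eq_top : ∀ a < R, d a = top
  le_top : ∀ a, d a ≤ top
  sink_le : ∀ a, R ≤ a → C ≤ d a
  le_max : ∀ a, R ≤ a → d a ≤ max (f a) C

def pathSet (top R C : ℕ) : Set (ℕ → ℕ) := {d | IsPath f top R C d}

variable {f}

lemma rowWeight_eq_one {a c : ℕ} (h : f a ≤ c) : rowWeight f a c = 1 := by
  rw [rowWeight, Ico_eq_empty_of_le h, prod_empty]

lemma pathWeight_eq_of_le (hf : Antitone f) {N M : ℕ} (hN : f N = 0) (hNM : N ≤ M) (d : ℕ → ℕ) :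
    pathWeight f N d = pathWeight f M d :=
  prod_subset (range_subset_range.2 hNM) fun a _ ha =>
    rowWeight_eq_one (by have := hf (show N ≤ a by simpa using ha); omega)

lemma IsPath.eq_sink {top R C a : ℕ} {d : ℕ → ℕ} (hd : IsPath f top R C d) (ha : R ≤ a)
    (hfa : f a ≤ C) : d a = C :=
  le_antisymm (by simpa [hfa] using hd.le_max a ha) (hd.sink_le a ha)

lemma pathSet_finite (hf : Antitone f) {N : ℕ} (hN : f N = 0) (top R C : ℕ) :
    (pathSet f top R C).Finite := by
  refine (Set.finite_range fun g : Fin (R + N) → Fin (top + 1) =>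
    fun a => if h : a < R + N then (g ⟨a, h⟩ : ℕ) else C).subset ?_
  intro d hd
  refine ⟨fun a => ⟨d a, Nat.lt_succ_of_le (hd.le_top a)⟩, funext fun a => ?_⟩
  dsimp only
  split_ifs with h
  · rfl
  · exact (hd.eq_sink (by omega) (by have := hf (show N ≤ a by omega); omega)).symm

def pathFinset (hf : Antitone f) {N : ℕ} (hN : f N = 0) (top R C : ℕ) : Finset (ℕ → ℕ) :=
  (pathSet_finite hf hN top R C).toFinset

lemma mem_pathFinset {hf : Antitone f} {N : ℕ} {hN : f N = 0} {top R C : ℕ} {d : ℕ → ℕ} :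
    d ∈ pathFinset hf hN top R C ↔ IsPath f top R C d :=
  Set.Finite.mem_toFinset _

lemma pathOf_injective (top R C : ℕ) : Function.Injective (pathOf top R C) := by
  intro μ ν h
  funext k
  have := congrFun h (R + k)
  simp only [pathOf, show ¬ R + k < R by omega, if_false, Nat.add_sub_cancel_left] at this
  omega

lemma image_pathOf (hf : Antitone f) {top R C : ℕ} (htop : f 0 ≤ top) (hC : C ≤ top) :
    pathOf top R C '' {μ | Antitone μ ∧ ∀ k, μ k ≤ f (R + k) - C} = pathSet f top R C := by
  ext d
  constructor
  · rintro ⟨μ, ⟨hμ, hμf⟩, rfl⟩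
    have hμ0 : ∀ k, C + μ k ≤ max (f (R + k)) C := fun k => by have := hμf k; omega
    have hμtop : ∀ k, C + μ k ≤ top := fun k => by
      have h1 := hμ0 k; have h2 := hf (Nat.zero_le (R + k)); omega
    refine ⟨fun a b hab => ?_, fun a ha => if_pos ha, fun a => ?_, fun a ha => ?_, fun a ha => ?_⟩
    · simp only [pathOf]
      split_ifs with hb ha
      · rfl
      · omega
      · exact hμtop (b - R)
      · have := hμ (show a - R ≤ b - R by omega); omega
    · simp only [pathOf]
      split_ifs
      · rfl
      · exact hμtop (a - R)
    · simp [pathOf, show ¬ a < R by omega]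
    · simpa [pathOf, show ¬ a < R by omega, show R + (a - R) = a by omega] using hμ0 (a - R)
  · intro hd
    refine ⟨fun k => d (R + k) - C, ⟨fun k l hkl => ?_, fun k => ?_⟩, funext fun a => ?_⟩
    · have := hd.antitone (show R + k ≤ R + l by omega)
      dsimp only
      omega
    · have := hd.le_max (R + k) (by omega)
      dsimp only
      omega
    · simp only [pathOf]
      split_ifs with ha
      · exact (hd.eq_top a ha).symm
      · have := hd.sink_le a (by omega)
        rw [show R + (a - R) = a by omega]
        omega

lemma finprod_row_eq_rowWeight (a C m : ℕ) :
    ∏ᶠ (v : ℕ) (_ : v < f a - C) (_ : m ≤ v), (X (a, C + v) : MvPolynomial (ℕ × ℕ) ℤ)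
      = rowWeight f a (C + m) := by
  have hcond : ∀ v, (∏ᶠ (_ : v < f a - C) (_ : m ≤ v), (X (a, C + v) : MvPolynomial (ℕ × ℕ) ℤ))
      = ∏ᶠ (_ : v ∈ Ico m (f a - C)), X (a, C + v) := by
    intro v
    simp only [finprod_eq_if, mem_Ico]
    split_ifs <;> first | rfl | omega
  rw [finprod_congr hcond, finprod_mem_finset_eq_prod,
    prod_Ico_add (fun b => (X (a, b) : MvPolynomial (ℕ × ℕ) ℤ)), rowWeight]
  congr 1
  ext b
  simp only [mem_Ico]
  omega

lemma finprod_skew_eq_pathWeight (hf : Antitone f) {N : ℕ} (hN : f N = 0) {top : ℕ}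
    (htop : f 0 ≤ top) (R C : ℕ) (μ : ℕ → ℕ) :
    ∏ᶠ (u : ℕ) (v : ℕ) (_ : v < f (R + u) - C) (_ : μ u ≤ v),
        (X (R + u, C + v) : MvPolynomial (ℕ × ℕ) ℤ)
      = pathWeight f N (pathOf top R C μ) := by
  have hrow : ∀ u, N ≤ u → rowWeight f (R + u) (C + μ u) = 1 := fun u hu =>
    rowWeight_eq_one (by have := hf (show N ≤ R + u by omega); omega)
  have htopRow : ∀ a ∈ range R, rowWeight f a (pathOf top R C μ a) = 1 := fun a ha => by
    simp only [pathOf, if_pos (mem_range.1 ha)]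
    exact rowWeight_eq_one (le_trans (hf (Nat.zero_le a)) htop)
  rw [finprod_congr fun u => finprod_row_eq_rowWeight (R + u) C (μ u),
    finprod_eq_prod_of_mulSupport_subset (s := range N) _ fun u hu => by
      by_contra h; exact hu (hrow u (by simpa using h)),
    pathWeight_eq_of_le hf hN (show N ≤ R + N by omega), pathWeight, prod_range_add,
    prod_eq_one htopRow, one_mul]
  refine prod_congr rfl fun u _ => ?_
  simp [pathOf]

lemma Ppoly_eq_sum_pathWeight (hf : Antitone f) {N : ℕ} (hN : f N = 0) {top R C : ℕ}
    (htop : f 0 ≤ top) (hC : C ≤ top) :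
    Ppoly f R C = ∑ d ∈ pathFinset hf hN top R C, pathWeight f N d := by
  rw [Ppoly, finsum_mem_congr rfl fun μ _ => finprod_skew_eq_pathWeight hf hN htop R C μ,
    ← finsum_mem_image (g := pathOf top R C) (pathOf_injective top R C).injOn,
    image_pathOf hf htop hC, ← finsum_mem_coe_finset, pathFinset, Set.Finite.coe_toFinset]

lemma Apoly_eq_pathWeight (hf : Antitone f) {N : ℕ} (hN : f N = 0) {top : ℕ}
    (htop : f 0 ≤ top) (R C : ℕ) :
    Apoly f R C = pathWeight f N (pathOf top R C 0) := by
  rw [← finprod_skew_eq_pathWeight hf hN htop R C 0, Apoly]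
  simp only [Pi.zero_apply, zero_le, finprod_true]

lemma Apoly_eq_one (hf : Antitone f) {R C : ℕ} (h : f R ≤ C) : Apoly f R C = 1 :=
  finprod_eq_one_of_forall_eq_one fun u => finprod_eq_one_of_forall_eq_one fun v => by
    rw [finprod_eq_if, if_neg (by have := hf (Nat.le_add_right R u); omega)]

end Paths

section Crossing

variable {f : ℕ → ℕ} {top : ℕ}

/-- `(a, c)` lies on the horizontal run of the path `d` along the line between rows `a - 1`
and `a`. -/
def OnPath (R : ℕ) (d : ℕ → ℕ) (p : ℕ × ℕ) : Prop := R ≤ p.1 ∧ d p.1 ≤ p.2 ∧ p.2 ≤ d (p.1 - 1)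

def splice (A : ℕ) (d e : ℕ → ℕ) : ℕ → ℕ := fun a => if a < A then d a else e a

lemma splice_self (A : ℕ) (d : ℕ → ℕ) : splice A d d = d := funext fun _ => ite_self _

lemma exists_onPath_of_crossing (hf : Antitone f) {N : ℕ} (hN : f N = 0) {R₁ C₁ R₂ C₂ : ℕ}
    {d₁ d₂ : ℕ → ℕ} (h₁ : IsPath f top R₁ C₁ d₁) (h₂ : IsPath f top R₂ C₂ d₂) (hR : R₁ < R₂)
    (hC : C₂ < C₁) : ∃ p, OnPath R₁ d₁ p ∧ OnPath R₂ d₂ p := by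
  classical
  have hex : ∃ a, R₂ ≤ a ∧ d₂ a ≤ d₁ a := by
    have hf0 : f (R₂ + N) = 0 := by have := hf (show N ≤ R₂ + N by omega); omega
    refine ⟨R₂ + N, by omega, ?_⟩
    rw [h₁.eq_sink (by omega) (by omega), h₂.eq_sink (by omega) (by omega)]
    exact hC.le
  obtain ⟨hRa, hle⟩ := Nat.find_spec hex
  set a := Nat.find hex
  refine ⟨(a, d₁ a), ⟨by simp only; omega, le_rfl, h₁.antitone (Nat.sub_le a 1)⟩, hRa, hle, ?_⟩
  show d₁ a ≤ d₂ (a - 1)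
  rcases hRa.eq_or_lt with hRa | hRa
  · rw [h₂.eq_top (a - 1) (by omega)]
    exact h₁.le_top a
  · have hprev : d₁ (a - 1) < d₂ (a - 1) := by
      by_contra h
      exact Nat.find_min hex (show a - 1 < a by omega) ⟨by omega, by omega⟩
    exact (h₁.antitone (Nat.sub_le a 1)).trans hprev.le

lemma IsPath.eq_sink_of_disjoint {R C : ℕ} {d e : ℕ → ℕ} (hd : IsPath f top R C d)
    (he : IsPath f top (R + 1) (C + 1) e) (he_sink : e (R + 1) = C + 1)
    (hdisj : ∀ p, ¬ (OnPath R d p ∧ OnPath (R + 1) e p)) {a : ℕ} (ha : R ≤ a) : d a = C := by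
  have hdR : d R ≤ C := by
    by_contra! hlt
    refine hdisj (R + 1, max (d (R + 1)) (C + 1)) ⟨⟨by simp, le_max_left _ _, ?_⟩, ?_⟩
    · exact max_le (hd.antitone (Nat.le_succ R)) hlt
    · refine ⟨le_rfl, he_sink ▸ le_max_right _ _, ?_⟩
      rw [Nat.add_sub_cancel, he.eq_top R (Nat.lt_succ_self R)]
      exact max_le (hd.le_top _) (he_sink ▸ he.le_top _)
  exact le_antisymm ((hd.antitone ha).trans hdR) (hd.sink_le a ha)

lemma IsPath.le_max_of_first_meet (hf : Antitone f) {R₁ C₁ R₂ C₂ A c : ℕ} {d₁ d₂ : ℕ → ℕ}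
    (h₁ : IsPath f top R₁ C₁ d₁) (h₂ : IsPath f top R₂ C₂ d₂)
    (hA₁ : OnPath R₁ d₁ (A, c)) (hA₂ : OnPath R₂ d₂ (A, c))
    (hfirst : ∀ p : ℕ × ℕ, p.1 < A → ¬ (OnPath R₁ d₁ p ∧ OnPath R₂ d₂ p))
    (hsrc : R₁ = A → ∀ b < A, C₂ ≤ f b) {a : ℕ} (haR : R₂ ≤ a) (haA : a < A) :
    d₂ a ≤ max (f a) C₁ := by
  obtain ⟨hR₁, hc₁, hc₁'⟩ : R₁ ≤ A ∧ d₁ A ≤ c ∧ c ≤ d₁ (A - 1) := hA₁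
  obtain ⟨-, hc₂, hc₂'⟩ : R₂ ≤ A ∧ d₂ A ≤ c ∧ c ≤ d₂ (A - 1) := hA₂
  by_contra! hgt
  -- Off the diagram `d₂` is pinned to its sink column `C₂`, from row `a` on.
  have hfa : f a < C₂ := by have := h₂.le_max a haR; omega
  have hpin : ∀ b, a ≤ b → d₂ b = C₂ := fun b hb => by
    have := h₂.antitone hb; have := h₂.sink_le b (by omega); have := h₂.le_max a haR; omega
  have hc : c = C₂ := by
    have := hpin A (by omega); have := hpin (A - 1) (by omega); omega
  rcases hR₁.eq_or_lt with hR₁ | hR₁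
  · have := hsrc hR₁ a haA; omega
  · by_cases hd₁ : d₁ (A - 1) = C₂
    · refine hfirst (A - 1, C₂) (by simp only; omega) ⟨⟨by simp only; omega, hd₁.le, ?_⟩, ?_⟩
      · exact hd₁ ▸ h₁.antitone (Nat.sub_le _ 1)
      · refine ⟨by simp only; omega, (hpin (A - 1) (by omega)).le, ?_⟩
        exact hpin (A - 1) (by omega) ▸ h₂.antitone (Nat.sub_le _ 1)
    · have := h₁.le_max (A - 1) (by omega)
      have := hf (show a ≤ A - 1 by omega)
      have := h₁.sink_le A hR₁.le
      omega

lemma IsPath.splice {R₁ C₁ R₂ C₂ A c : ℕ} {d₁ d₂ : ℕ → ℕ} (h₁ : IsPath f top R₁ C₁ d₁)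
    (h₂ : IsPath f top R₂ C₂ d₂) (hA₁ : OnPath R₁ d₁ (A, c)) (hA₂ : OnPath R₂ d₂ (A, c))
    (hhead : ∀ a, R₂ ≤ a → a < A → d₂ a ≤ max (f a) C₁) :
    IsPath f top R₂ C₁ (splice A d₂ d₁) := by
  obtain ⟨hR₁, hc₁, -⟩ : R₁ ≤ A ∧ d₁ A ≤ c ∧ c ≤ d₁ (A - 1) := hA₁
  obtain ⟨hR₂, -, hc₂'⟩ : R₂ ≤ A ∧ d₂ A ≤ c ∧ c ≤ d₂ (A - 1) := hA₂
  have hC₁ := h₁.sink_le A hR₁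
  refine ⟨fun a b hab => ?_, fun a ha => ?_, fun a => ?_, fun a ha => ?_, fun a ha => ?_⟩ <;>
    simp only [LatticePath.splice]
  · split_ifs with hb ha
    · exact h₂.antitone hab
    · omega
    · have := h₁.antitone (show A ≤ b by omega)
      have := h₂.antitone (show a ≤ A - 1 by omega)
      omega
    · exact h₁.antitone hab
  · rw [if_pos (by omega), h₂.eq_top a ha]
  · split_ifs
    · exact h₂.le_top a
    · exact h₁.le_top a
  · split_ifs with haA
    · have := h₂.antitone (show a ≤ A - 1 by omega); omega
    · exact h₁.sink_le a (by omega)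
  · split_ifs with haA
    · exact hhead a ha haA
    · exact h₁.le_max a (by omega)

end Crossing

/-- Path `k` of a family `⟨σ, d⟩` runs from the source row `i₀ + σ k` to the sink column
`j₀ + k`. -/
abbrev PathFamily (n : ℕ) := Σ _ : Perm (Fin n), Fin n → ℕ → ℕ

section Family

variable {n : ℕ} (f : ℕ → ℕ) (top i₀ j₀ : ℕ)

def IsFamily (x : PathFamily n) : Prop := ∀ k, IsPath f top (i₀ + x.1 k) (j₀ + k) (x.2 k)

def familyWeight (N : ℕ) (x : PathFamily n) : MvPolynomial (ℕ × ℕ) ℤ :=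
  ∏ k, pathWeight f N (x.2 k)

def straightFamily (n : ℕ) : PathFamily n := ⟨1, fun k => pathOf top (i₀ + k) (j₀ + k) 0⟩

def OnFamily (x : PathFamily n) (k : Fin n) (p : ℕ × ℕ) : Prop := OnPath (i₀ + x.1 k) (x.2 k) p

def Shared (x : PathFamily n) (p : ℕ × ℕ) : Prop :=
  ∃ k l, k ≠ l ∧ OnFamily i₀ x k p ∧ OnFamily i₀ x l p

def IsFirstShared (x : PathFamily n) (p : ℕ × ℕ) : Prop :=
  Shared i₀ x p ∧ ∀ q, Shared i₀ x q → toLex p ≤ toLex q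

/-- Path `k` keeps its tail (rows `≥ A`, hence its sink) and takes the head, hence the source,
of path `τ k`. -/
def swapTails (x : PathFamily n) (A : ℕ) (τ : Perm (Fin n)) : PathFamily n :=
  ⟨x.1 * τ, fun k => splice A (x.2 (τ k)) (x.2 k)⟩

variable {f top i₀ j₀}

lemma straightFamily_fst (n : ℕ) : (straightFamily top i₀ j₀ n).1 = 1 := rfl

lemma familyWeight_swapTails (N : ℕ) (x : PathFamily n) (A : ℕ) (τ : Perm (Fin n)) :
    familyWeight f N (swapTails x A τ) = familyWeight f N x := by
  simp only [familyWeight, pathWeight, swapTails, splice]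
  rw [prod_comm, prod_comm (s := univ)]
  refine prod_congr rfl fun a _ => ?_
  split_ifs
  · exact Equiv.prod_comp τ fun k => rowWeight f a (x.2 k a)
  · rfl

lemma swapTails_swapTails (x : PathFamily n) (A : ℕ) {τ : Perm (Fin n)} (hτ : τ * τ = 1) :
    swapTails (swapTails x A τ) A τ = x := by
  obtain ⟨σ, d⟩ := x
  have hττ : ∀ k, τ (τ k) = k := fun k => by rw [← Perm.mul_apply, hτ, Perm.one_apply]
  simp only [swapTails, mul_assoc, hτ, mul_one, Sigma.mk.injEq, heq_eq_eq, true_and]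
  funext k a
  simp only [splice, hττ]
  split_ifs <;> rfl

lemma IsFirstShared.eq {x : PathFamily n} {p q : ℕ × ℕ} (hp : IsFirstShared i₀ x p)
    (hq : IsFirstShared i₀ x q) : p = q :=
  toLex.injective (le_antisymm (hp.2 q hq.1) (hq.2 p hp.1))

lemma IsFirstShared.not_shared_of_lt {x : PathFamily n} {p q : ℕ × ℕ}
    (hp : IsFirstShared i₀ x p) (hq : toLex q < toLex p) : ¬ Shared i₀ x q :=
  fun h => (hp.2 q h).not_gt hq

lemma Shared.one_le {x : PathFamily n} {p : ℕ × ℕ} (hp : Shared i₀ x p) : 1 ≤ p.1 := by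
  obtain ⟨k, l, hkl, hk, hl⟩ := hp
  have : (x.1 k : ℕ) ≠ x.1 l := fun h => hkl (x.1.injective (Fin.ext h))
  have := hk.1
  have := hl.1
  omega

lemma onFamily_swapTails_of_lt {x : PathFamily n} {A : ℕ} {τ : Perm (Fin n)} {k : Fin n}
    {p : ℕ × ℕ} (hp : p.1 < A) :
    OnFamily i₀ (swapTails x A τ) k p ↔ OnFamily i₀ x (τ k) p := by
  simp [OnFamily, OnPath, swapTails, splice, hp, show p.1 - 1 < A by omega]

lemma shared_swapTails_iff_of_lt {x : PathFamily n} {A : ℕ} {τ : Perm (Fin n)} {p : ℕ × ℕ}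
    (hp : p.1 < A) : Shared i₀ (swapTails x A τ) p ↔ Shared i₀ x p := by
  simp only [Shared, onFamily_swapTails_of_lt hp]
  constructor
  · rintro ⟨k, l, hkl, hk, hl⟩
    exact ⟨τ k, τ l, τ.injective.ne hkl, hk, hl⟩
  · rintro ⟨k, l, hkl, hk, hl⟩
    refine ⟨τ⁻¹ k, τ⁻¹ l, (τ⁻¹).injective.ne hkl, ?_, ?_⟩ <;> simpa

lemma onFamily_swapTails_row_iff {x : PathFamily n} {A c : ℕ} {τ : Perm (Fin n)} {k : Fin n}
    (hA : 1 ≤ A) : OnFamily i₀ (swapTails x A τ) k (A, c) ↔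
      i₀ + x.1 (τ k) ≤ A ∧ x.2 k A ≤ c ∧ c ≤ x.2 (τ k) (A - 1) := by
  simp [OnFamily, OnPath, swapTails, splice, show A - 1 < A by omega]

section Pivot

variable {x : PathFamily n} {p : ℕ × ℕ} {τ : Perm (Fin n)}

lemma onFamily_of_onFamily_swapTails (hp : 1 ≤ p.1)
    (hτ : ∀ k, τ k ≠ k → OnFamily i₀ x k p) {k : Fin n} {c : ℕ} (hc : c ≤ p.2)
    (hk : OnFamily i₀ (swapTails x p.1 τ) k (p.1, c)) : OnFamily i₀ x k (p.1, c) := by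
  by_cases hfix : τ k = k
  · rwa [onFamily_swapTails_row_iff hp, hfix] at hk
  · obtain ⟨h₁, h₂, h₃⟩ := hτ k hfix
    obtain ⟨-, h₄, -⟩ := (onFamily_swapTails_row_iff hp).1 hk
    exact ⟨h₁, h₄, hc.trans h₃⟩

lemma onFamily_swapTails_iff (hp : 1 ≤ p.1) (hτ : ∀ k, τ k ≠ k → OnFamily i₀ x k p)
    {k : Fin n} : OnFamily i₀ (swapTails x p.1 τ) k p ↔ OnFamily i₀ x k p := by
  refine ⟨onFamily_of_onFamily_swapTails hp hτ le_rfl, fun hk => ?_⟩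
  by_cases hfix : τ k = k
  · rwa [onFamily_swapTails_row_iff hp, hfix]
  · obtain ⟨h₁, -, h₃⟩ := hτ (τ k) (fun h => hfix (τ.injective h))
    exact (onFamily_swapTails_row_iff hp).2 ⟨h₁, hk.2.1, h₃⟩

lemma IsFirstShared.swapTails (hx : IsFirstShared i₀ x p)
    (hτ : ∀ k, τ k ≠ k → OnFamily i₀ x k p) : IsFirstShared i₀ (swapTails x p.1 τ) p := by
  have hp : 1 ≤ p.1 := hx.1.one_le
  refine ⟨?_, fun q hq => ?_⟩
  · obtain ⟨k, l, hkl, hk, hl⟩ := hx.1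
    exact ⟨k, l, hkl, (onFamily_swapTails_iff hp hτ).2 hk, (onFamily_swapTails_iff hp hτ).2 hl⟩
  by_contra! hlt
  rcases Prod.Lex.toLex_lt_toLex.1 hlt with ha | ⟨ha, hc⟩
  · exact hx.not_shared_of_lt hlt ((shared_swapTails_iff_of_lt ha).1 hq)
  · obtain ⟨a, c⟩ := q
    obtain ⟨k, l, hkl, hk, hl⟩ := hq
    simp only at ha hc
    subst ha
    exact hx.not_shared_of_lt hlt ⟨k, l, hkl, onFamily_of_onFamily_swapTails hp hτ hc.le hk,
      onFamily_of_onFamily_swapTails hp hτ hc.le hl⟩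

end Pivot

lemma IsFamily.swapTails (hf : Antitone f) {m : ℕ} {x : PathFamily (m + 1)} {p : ℕ × ℕ}
    {τ : Perm (Fin (m + 1))} (hx : IsFamily f top i₀ j₀ x) (hdiag : ∀ k < m, j₀ + k < f (i₀ + k))
    (hfirst : IsFirstShared i₀ x p) (hτ : ∀ k, τ k ≠ k → OnFamily i₀ x k p) :
    IsFamily f top i₀ j₀ (swapTails x p.1 τ) := by
  obtain ⟨A, c⟩ := p
  intro k
  show IsPath f top (i₀ + x.1 (τ k)) (j₀ + k) (splice A (x.2 (τ k)) (x.2 k))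
  by_cases hfix : τ k = k
  · rw [hfix, splice_self]
    exact hx k
  have hk := hτ k hfix
  have hτk := hτ (τ k) fun h => hfix (τ.injective h)
  refine (hx k).splice (hx (τ k)) hk hτk fun a haR haA => (hx k).le_max_of_first_meet hf
    (hx (τ k)) hk hτk (fun q hq hq' => ?_) (fun hsrc b hb => ?_) haR haA
  · exact hfirst.not_shared_of_lt (Prod.Lex.toLex_lt_toLex.2 (Or.inl hq))
      ⟨k, τ k, Ne.symm hfix, hq'.1, hq'.2⟩
  · -- Path `τ k` enters strictly above path `k`, so `m ≠ 0`.
    have hlt : (x.1 (τ k) : ℕ) < x.1 k := by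
      have h₁ : i₀ + (x.1 (τ k) : ℕ) ≤ A := hτk.1
      have h₂ : (x.1 (τ k) : ℕ) ≠ x.1 k := fun h => hfix (x.1.injective (Fin.ext h))
      omega
    have := (x.1 k).isLt
    have := (τ k).isLt
    have := hdiag (m - 1) (by omega)
    have := hf (show b ≤ i₀ + (m - 1) by omega)
    omega

end Family

section Straight

variable {f : ℕ → ℕ} {top i₀ j₀ : ℕ}

lemma isFamily_straightFamily (hf : Antitone f) {n : ℕ} (htop : f 0 ≤ top) (hC : j₀ + n ≤ top) :
    IsFamily f top i₀ j₀ (straightFamily top i₀ j₀ n) := fun k => by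
  show pathOf top (i₀ + k) (j₀ + k) 0 ∈ pathSet f top (i₀ + k) (j₀ + k)
  rw [← image_pathOf hf htop (by omega)]
  exact ⟨0, ⟨antitone_const, fun _ => Nat.zero_le _⟩, rfl⟩

lemma not_shared_straightFamily {n : ℕ} (p : ℕ × ℕ) :
    ¬ Shared i₀ (straightFamily top i₀ j₀ n) p := by
  have key : ∀ k l : Fin n, k < l → OnFamily i₀ (straightFamily top i₀ j₀ n) k p →
      ¬ OnFamily i₀ (straightFamily top i₀ j₀ n) l p := by
    rintro k l hkl ⟨hk₁, hk₂, hk₃⟩ ⟨hl₁, hl₂, -⟩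
    have hkl : (k : ℕ) < l := hkl
    simp only [straightFamily, Perm.one_apply, pathOf, Pi.zero_apply, add_zero]
      at hk₁ hk₂ hk₃ hl₁ hl₂
    split_ifs at hk₂ hk₃ hl₂ <;> omega
  rintro ⟨k, l, hkl, hk, hl⟩
  rcases hkl.lt_or_gt with h | h
  · exact key k l h hk hl
  · exact key l k h hl hk

lemma familyWeight_straightFamily (hf : Antitone f) {N n : ℕ} (hN : f N = 0)
    (htop : f 0 ≤ top) :
    familyWeight f N (straightFamily top i₀ j₀ n) = ∏ k : Fin n, Apoly f (i₀ + k) (j₀ + k) :=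
  prod_congr rfl fun _ _ => (Apoly_eq_pathWeight hf hN htop _ _).symm

lemma IsFamily.fst_eq_one (hf : Antitone f) {N n : ℕ} (hN : f N = 0) {x : PathFamily n}
    (hx : IsFamily f top i₀ j₀ x) (hns : ∀ p, ¬ Shared i₀ x p) : x.1 = 1 := by
  have hmono : StrictMono x.1 := by
    intro k l hkl
    by_contra! hle
    have hlt : x.1 l < x.1 k := lt_of_le_of_ne hle (x.1.injective.ne hkl.ne')
    obtain ⟨p, hl, hk⟩ := exists_onPath_of_crossing hf hN (hx l) (hx k)
      (by simp only [Fin.lt_def] at hlt; omega) (by simp only [Fin.lt_def] at hkl; omega)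
    exact hns p ⟨l, k, hkl.ne', hl, hk⟩
  ext k
  simp [hmono.apply_eq]

lemma IsFamily.eq_straightFamily (hf : Antitone f) {N m : ℕ} (hN : f N = 0)
    {x : PathFamily (m + 1)} (hx : IsFamily f top i₀ j₀ x) (hlast : f (i₀ + m) ≤ j₀ + m)
    (hns : ∀ p, ¬ Shared i₀ x p) : x = straightFamily top i₀ j₀ (m + 1) := by
  have hσ := hx.fst_eq_one hf hN hns
  obtain ⟨σ, d⟩ := x
  subst hσ
  replace hx : ∀ k : Fin (m + 1), IsPath f top (i₀ + k) (j₀ + k) (d k) := hx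
  have hsink : ∀ k : Fin (m + 1), ∀ a, i₀ + k ≤ a → d k a = j₀ + k := by
    intro k
    induction k using Fin.reverseInduction with
    | last =>
      intro a ha
      exact (hx _).eq_sink (by simpa using ha)
        ((hf (by simpa using ha)).trans (by simpa using hlast))
    | cast k ih =>
      intro a ha
      have hsucc : IsPath f top (i₀ + k.castSucc + 1) (j₀ + k.castSucc + 1) (d k.succ) := by
        simpa [add_assoc] using hx k.succ
      refine (hx k.castSucc).eq_sink_of_disjoint hsucc ?_ (fun p hp => ?_) (by simpa using ha)
      · simpa [add_assoc] using ih (i₀ + k.succ) le_rfl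
      · exact hns p ⟨k.castSucc, k.succ, Fin.castSucc_lt_succ.ne, by simpa [OnFamily] using hp.1,
          by simpa [OnFamily, add_assoc] using hp.2⟩
  simp only [straightFamily, Sigma.mk.injEq, heq_eq_eq, true_and]
  funext k a
  simp only [pathOf]
  split_ifs with ha
  · exact (hx k).eq_top a (by simpa using ha)
  · simpa using hsink k a (by omega)

end Straight

section PairSwap

variable {α : Type*} [DecidableEq α]

open Classical in
/-- Depending on `T` alone is what makes `resolve` an involution. -/
def pairSwap (T : Set α) : Perm α :=
  if h : ∃ i ∈ T, ∃ j ∈ T, i ≠ j then swap h.choose h.choose_spec.2.choose else 1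

lemma pairSwap_mul_self (T : Set α) : pairSwap T * pairSwap T = 1 := by
  unfold pairSwap
  split_ifs
  · exact swap_mul_self _ _
  · exact mul_one 1

lemma mem_of_pairSwap_apply_ne {T : Set α} {k : α} (hk : pairSwap T k ≠ k) : k ∈ T := by
  unfold pairSwap at hk
  split_ifs at hk with h
  · obtain ⟨hj, -⟩ := h.choose_spec.2.choose_spec
    by_contra hkT
    exact hk (swap_apply_of_ne_of_ne (fun e => hkT (e ▸ h.choose_spec.1)) fun e => hkT (e ▸ hj))
  · exact absurd rfl hk

lemma sign_pairSwap [Fintype α] {T : Set α} (h : ∃ i ∈ T, ∃ j ∈ T, i ≠ j) :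
    Perm.sign (pairSwap T) = -1 := by
  rw [pairSwap, dif_pos h]
  exact Perm.sign_swap h.choose_spec.2.choose_spec.2

end PairSwap

section Resolve

variable {n : ℕ} (i₀ : ℕ)

open Classical in
def firstShared (x : PathFamily n) : ℕ × ℕ :=
  if h : ∃ p, Shared i₀ x p then
    ofLex (wellFounded_lt.min {q : ℕ ×ₗ ℕ | Shared i₀ x (ofLex q)} (h.imp fun _ hp => hp))
  else 0

def throughFirst (x : PathFamily n) : Set (Fin n) := {k | OnFamily i₀ x k (firstShared i₀ x)}

def resolve (x : PathFamily n) : PathFamily n :=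
  swapTails x (firstShared i₀ x).1 (pairSwap (throughFirst i₀ x))

variable {i₀} {x : PathFamily n} (hx : ∃ p, Shared i₀ x p)
include hx

lemma isFirstShared_firstShared : IsFirstShared i₀ x (firstShared i₀ x) := by
  rw [firstShared, dif_pos hx]
  exact ⟨wellFounded_lt.min_mem {q : ℕ ×ₗ ℕ | Shared i₀ x (ofLex q)} _,
    fun q hq => not_lt.1 (wellFounded_lt.not_lt_min {q : ℕ ×ₗ ℕ | Shared i₀ x (ofLex q)} hq)⟩

lemma exists_pair_throughFirst : ∃ i ∈ throughFirst i₀ x, ∃ j ∈ throughFirst i₀ x, i ≠ j := by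
  obtain ⟨k, l, hkl, hk, hl⟩ := (isFirstShared_firstShared hx).1
  exact ⟨k, hk, l, hl, hkl⟩

lemma isFirstShared_resolve : IsFirstShared i₀ (resolve i₀ x) (firstShared i₀ x) :=
  (isFirstShared_firstShared hx).swapTails fun _ hk =>
    mem_of_pairSwap_apply_ne (T := throughFirst i₀ x) hk

lemma firstShared_resolve : firstShared i₀ (resolve i₀ x) = firstShared i₀ x :=
  (isFirstShared_firstShared ⟨_, (isFirstShared_resolve hx).1⟩).eq (isFirstShared_resolve hx)

lemma throughFirst_resolve : throughFirst i₀ (resolve i₀ x) = throughFirst i₀ x := by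
  ext k
  simp only [throughFirst, Set.mem_ofPred_eq, firstShared_resolve hx]
  exact onFamily_swapTails_iff (isFirstShared_firstShared hx).1.one_le
    fun _ hk => mem_of_pairSwap_apply_ne (T := throughFirst i₀ x) hk

lemma resolve_resolve : resolve i₀ (resolve i₀ x) = x := by
  conv_lhs => rw [resolve, firstShared_resolve hx, throughFirst_resolve hx]
  exact swapTails_swapTails x _ (pairSwap_mul_self _)

lemma sign_resolve : Perm.sign (resolve i₀ x).1 = -Perm.sign x.1 := by
  rw [resolve, swapTails, Perm.sign_mul, sign_pairSwap (exists_pair_throughFirst hx), mul_neg_one]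

lemma resolve_ne : resolve i₀ x ≠ x := fun h =>
  units_ne_neg_self (Perm.sign x.1) (by rw [← sign_resolve hx, h])

end Resolve

lemma IsFamily.resolve {f : ℕ → ℕ} {top i₀ j₀ m : ℕ} (hf : Antitone f) {x : PathFamily (m + 1)}
    (hx : ∃ p, Shared i₀ x p) (hfam : IsFamily f top i₀ j₀ x)
    (hdiag : ∀ k < m, j₀ + k < f (i₀ + k)) : IsFamily f top i₀ j₀ (resolve i₀ x) :=
  hfam.swapTails hf hdiag (isFirstShared_firstShared hx)
    fun _ hk => mem_of_pairSwap_apply_ne (T := throughFirst i₀ x) hk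

section Determinant

variable {f : ℕ → ℕ} (hf : Antitone f) {N : ℕ} (hN : f N = 0) (top i₀ j₀ : ℕ)

def familyFinset (n : ℕ) : Finset (PathFamily n) :=
  univ.sigma fun σ => Fintype.piFinset fun k => pathFinset hf hN top (i₀ + σ k) (j₀ + k)

lemma det_eq_sum_familyFinset {n : ℕ} (htop : f 0 ≤ top) (hC : j₀ + n ≤ top) :
    (Matrix.of fun r s : Fin n => Ppoly f (i₀ + r) (j₀ + s)).det
      = ∑ x ∈ familyFinset hf hN top i₀ j₀ n, Perm.sign x.1 • familyWeight f N x := by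
  rw [Matrix.det_apply, familyFinset, sum_sigma]
  refine sum_congr rfl fun σ _ => ?_
  simp only [Matrix.of_apply, familyWeight, ← smul_sum, ← prod_univ_sum]
  congr 1
  exact prod_congr rfl fun k _ => Ppoly_eq_sum_pathWeight hf hN htop (by omega)

variable {hf hN top i₀ j₀}

lemma mem_familyFinset {n : ℕ} {x : PathFamily n} :
    x ∈ familyFinset hf hN top i₀ j₀ n ↔ IsFamily f top i₀ j₀ x := by
  simp [familyFinset, mem_pathFinset, IsFamily]

lemma sum_familyFinset_eq_prod_Apoly {m : ℕ} (htop : f 0 + j₀ + m < top)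
    (hdiag : ∀ k < m, j₀ + k < f (i₀ + k)) (hlast : f (i₀ + m) ≤ j₀ + m) :
    ∑ x ∈ familyFinset hf hN top i₀ j₀ (m + 1), Perm.sign x.1 • familyWeight f N x
      = ∏ k : Fin (m + 1), Apoly f (i₀ + k) (j₀ + k) := by
  classical
  have hstraight := isFamily_straightFamily (i₀ := i₀) hf (by omega)
    (show j₀ + (m + 1) ≤ top by omega)
  have hshared : ∀ x ∈ (familyFinset hf hN top i₀ j₀ (m + 1)).erase
      (straightFamily top i₀ j₀ (m + 1)), ∃ p, Shared i₀ x p := fun x hx => by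
    rw [mem_erase, mem_familyFinset] at hx
    by_contra! hns
    exact hx.1 (hx.2.eq_straightFamily hf hN hlast hns)
  rw [← add_sum_erase _ _ (mem_familyFinset.2 hstraight), straightFamily_fst, Perm.sign_one,
    one_smul, familyWeight_straightFamily hf hN (by omega), add_eq_left]
  refine sum_involution (fun x _ => resolve i₀ x) (fun x hx => ?_)
    (fun x hx _ => resolve_ne (hshared x hx)) (fun x hx => ?_)
    (fun x hx => resolve_resolve (hshared x hx))
  · rw [sign_resolve (hshared x hx), resolve, familyWeight_swapTails, Units.neg_smul,
      add_neg_cancel]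
  · have hxs := hshared x hx
    rw [mem_erase, mem_familyFinset] at hx ⊢
    refine ⟨fun h => not_shared_straightFamily _ (h ▸ (isFirstShared_resolve hxs).1), ?_⟩
    exact hx.2.resolve hf hxs hdiag

end Determinant

lemma rank_spec {f : ℕ → ℕ} (hf : Antitone f) {N : ℕ} (hN : f N = 0) {i₀ j₀ ρ : ℕ}
    (hρ : ρ = {k : ℕ | k < f (i₀ + k) - j₀}.ncard) :
    (∀ k < ρ, j₀ + k < f (i₀ + k)) ∧ f (i₀ + ρ) ≤ j₀ + ρ := by
  classical
  have hdown : Antitone fun k => k < f (i₀ + k) - j₀ := fun j k hjk hk => by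
    have := hf (show i₀ + j ≤ i₀ + k by omega)
    simp only at hk ⊢
    omega
  have hex : ∃ M, ¬ M < f (i₀ + M) - j₀ := ⟨N, by have := hf (show N ≤ i₀ + N by omega); omega⟩
  have hIio : {k : ℕ | k < f (i₀ + k) - j₀} = Set.Iio (Nat.find hex) := Set.ext fun k =>
    ⟨fun hk => lt_of_not_ge fun hle => Nat.find_spec hex (hdown hle hk),
      fun hk => not_not.1 (Nat.find_min hex hk)⟩
  rw [hIio, ← coe_Iio, Set.ncard_coe_finset, Nat.card_Iio] at hρ
  subst hρ
  refine ⟨fun k hk => ?_, ?_⟩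
  · have := not_not.1 (Nat.find_min hex hk)
    omega
  · have := Nat.find_spec hex
    omega

end LatticePath

end

theorem det_Mij_general (f : ℕ → ℕ) (hf : Antitone f) (hfz : ∃ N, f N = 0)
    (i₀ j₀ : ℕ)
    (ρ' : ℕ) (hρ' : ρ' = Set.ncard {k : ℕ | k < f (i₀ + k) - j₀}) :
    (Matrix.of (fun r s : Fin (ρ' + 1) => Ppoly f (i₀ + r) (j₀ + s))).det
      = ∏ k ∈ Finset.range ρ', Apoly f (i₀ + k) (j₀ + k) := by
  obtain ⟨N, hN⟩ := hfz
  obtain ⟨hdiag, hlast⟩ := LatticePath.rank_spec hf hN hρ'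
  have htop : f 0 + j₀ + ρ' < f 0 + j₀ + ρ' + 1 := Nat.lt_succ_self _
  rw [LatticePath.det_eq_sum_familyFinset hf hN (f 0 + j₀ + ρ' + 1) i₀ j₀ (by omega) (by omega),
    LatticePath.sum_familyFinset_eq_prod_Apoly htop hdiag hlast,
    Fin.prod_univ_eq_prod_range (fun k => Apoly f (i₀ + k) (j₀ + k)), Finset.prod_range_succ,
    LatticePath.Apoly_eq_one hf hlast, mul_one]

/-- **Theorem (determinant of `M(i₀,j₀)`).**
For a square `(i₀,j₀)` of `λ*` (0-indexed) with `ρ' = rank λ(i₀,j₀)`, the determinant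
of the `(ρ'+1) × (ρ'+1)` matrix `M(i₀,j₀)` equals `∏_{k=0}^{ρ'-1} A_{i₀+k, j₀+k}`. -/
theorem det_Mij (f : ℕ → ℕ) (hf : Antitone f) (hfz : ∃ N, f N = 0)
    (i₀ j₀ : ℕ) (hij : MemExt f i₀ j₀)
    (ρ' : ℕ) (hρ' : ρ' = Set.ncard {k : ℕ | k < f (i₀ + k) - j₀}) :
    (Matrix.of (fun r s : Fin (ρ' + 1) => Ppoly f (i₀ + r) (j₀ + s))).det
      = ∏ k ∈ Finset.range ρ', Apoly f (i₀ + k) (j₀ + k) :=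
  det_Mij_general f hf hfz i₀ j₀ ρ' hρ'
end

section
/- Let λ be a partition of rank ρ ≥ 1 and let 2 ≤ j ≤ ρ+1. Then τ₀ P_{1j} − τ₁ P_{2j} + τ₂ P_{3j} − ⋯ + (−1)^ρ τ_ρ P_{ρ+1, j} = 0, i.e., Σ_{i=0}^{ρ} (−1)^i τ_i P_{i+1, j} = 0 in R. -/
open MvPolynomial

/-- `Ω_i`: the sum over all partitions `κ` fitting in an `i × (λ_i - i)` box of the
monomial selecting, in row `a` (0-indexed) of the array `R_i`, the last `κ a` entries. -/
noncomputable def Omega (f : ℕ → ℕ) (i : ℕ) : MvPolynomial (ℕ × ℕ) ℤ :=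
  ∑ᶠ κ ∈ {κ : ℕ → ℕ | Antitone κ ∧ κ 0 ≤ f (i - 1) - i ∧ ∀ a, i ≤ a → κ a = 0},
    ∏ᶠ (a : ℕ) (_ : a < i) (c : ℕ) (_ : f (i - 1) - i - κ a < c) (_ : c ≤ f (i - 1) - i),
      X (a, a + c)

/-- `τ_i = Ω_i · ∏_{(a,b) ∈ S_i} x_{ab}` (squares written 0-indexed). -/
noncomputable def tau (f : ℕ → ℕ) (i : ℕ) : MvPolynomial (ℕ × ℕ) ℤ :=
  Omega f i *
    ∏ᶠ (a : ℕ) (_ : a < i) (b : ℕ) (_ : f (i - 1) - i + a < b) (_ : b < f a), X (a, b)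

namespace RecAux


open Finset

/-- `m_i = λ_i - i` (with `λ_i = f (i-1)` zero-indexed). -/
def mm (f : ℕ → ℕ) (i : ℕ) : ℕ := f (i - 1) - i

def Kset (f : ℕ → ℕ) (i : ℕ) : Set (ℕ → ℕ) :=
  {κ : ℕ → ℕ | Antitone κ ∧ κ 0 ≤ f (i - 1) - i ∧ ∀ a, i ≤ a → κ a = 0}

def Lset (f : ℕ → ℕ) (s i : ℕ) : Set (ℕ → ℕ) :=
  {μ : ℕ → ℕ | Antitone μ ∧ ∀ k, μ k ≤ f (i + k) - s}

def startc (f : ℕ → ℕ) (s i : ℕ) (κ μ : ℕ → ℕ) (a : ℕ) : ℕ :=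
  if a < i then a + (mm f i - κ a) + 1 else s + μ (a - i)

noncomputable def term (f : ℕ → ℕ) (s N i : ℕ) (κ μ : ℕ → ℕ) : MvPolynomial (ℕ × ℕ) ℤ :=
  ∏ a ∈ range N, ∏ b ∈ Ico (startc f s i κ μ a) (f a), X (a, b)

def candown (f : ℕ → ℕ) (s i : ℕ) (κ μ : ℕ → ℕ) : Prop :=
  1 ≤ i ∧ s + μ 0 ≤ i + (mm f i - κ (i - 1))

instance (f : ℕ → ℕ) (s i : ℕ) (κ μ : ℕ → ℕ) : Decidable (candown f s i κ μ) :=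
  inferInstanceAs (Decidable (_ ∧ _))

def downm (f : ℕ → ℕ) (s i : ℕ) (κ μ : ℕ → ℕ) : (ℕ → ℕ) × (ℕ → ℕ) :=
  (fun a => if a < i - 1 then κ a + (mm f (i - 1) - mm f i) else 0,
   fun u => if u = 0 then i + (mm f i - κ (i - 1)) - s else μ (u - 1))

def upm (f : ℕ → ℕ) (s i : ℕ) (κ μ : ℕ → ℕ) : (ℕ → ℕ) × (ℕ → ℕ) :=
  (fun a => if a < i then κ a - (mm f i - mm f (i + 1))
            else if a = i then mm f (i + 1) - (s + μ 0 - (i + 1)) else 0,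
   fun u => μ (u + 1))

/-- Finiteness of sets of bounded eventually-zero functions. -/
lemma finite_bdd {n B : ℕ} {S : Set (ℕ → ℕ)}
    (h : ∀ g ∈ S, (∀ k, g k ≤ B) ∧ ∀ k, n ≤ k → g k = 0) : S.Finite := by
  apply Set.Finite.subset (Set.finite_range
    (fun v : Fin n → Fin (B + 1) => fun k => if h : k < n then (v ⟨k, h⟩ : ℕ) else 0))
  intro g hg
  obtain ⟨h1, h2⟩ := h g hg
  refine ⟨fun k => ⟨g k, Nat.lt_succ_of_le (h1 k)⟩, funext fun k => ?_⟩
  by_cases hk : k < n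
  · simp [hk]
  · simp [hk, h2 k (le_of_not_gt hk)]

lemma Kset_finite (f : ℕ → ℕ) (i : ℕ) : (Kset f i).Finite := by
  refine finite_bdd (n := i) (B := f (i - 1) - i) ?_
  rintro κ ⟨ha, h0, hz⟩
  exact ⟨fun k => (ha (Nat.zero_le k)).trans h0, hz⟩

lemma Lset_finite (f : ℕ → ℕ) (s i N : ℕ) (hf : Antitone f) (hN : ∀ n, N ≤ n → f n = 0) :
    (Lset f s i).Finite := by
  refine finite_bdd (n := N) (B := f i) ?_
  rintro μ ⟨ha, hb⟩
  constructor
  · intro k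
    exact (hb k).trans (Nat.sub_le _ _ |>.trans (hf (Nat.le_add_right i k)))
  · intro k hk
    have := hb k
    rw [hN (i + k) (hk.trans (Nat.le_add_left k i))] at this
    omega

/-- A finite downward-closed subset of `ℕ` is an initial segment. -/
lemma rank_iff (f : ℕ → ℕ) (hf : Antitone f) {N₀ : ℕ} (hN₀ : f N₀ = 0) {ρ : ℕ}
    (hρ : ρ = Set.ncard {k : ℕ | k < f k}) : ∀ k, k < f k ↔ k < ρ := by
  have hfin : {k : ℕ | k < f k}.Finite := by
    apply Set.Finite.subset (Set.finite_Iio N₀)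
    intro k hk
    simp only [Set.mem_setOf_eq] at hk
    by_contra hge
    simp only [Set.mem_Iio, not_lt] at hge
    have : f k ≤ f N₀ := hf hge
    omega
  set T := hfin.toFinset with hT
  have hmem : ∀ k, k ∈ T ↔ k < f k := by
    intro k; rw [hT, Set.Finite.mem_toFinset]; rfl
  have hcard : ρ = T.card := by
    rw [hρ, Set.ncard_eq_toFinset_card _ hfin]
  -- T is downward closed, hence T ⊆ range T.card
  have hdc : ∀ k ∈ T, ∀ l ≤ k, l ∈ T := by
    intro k hk l hl
    rw [hmem] at hk ⊢
    have : f k ≤ f l := hf hl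
    omega
  have hsub : T ⊆ range T.card := by
    intro k hk
    rw [mem_range]
    have hr : range (k + 1) ⊆ T := by
      intro l hl
      rw [mem_range] at hl
      exact hdc k hk l (by omega)
    have := Finset.card_le_card hr
    rw [Finset.card_range] at this
    omega
  have : T = range T.card :=
    Finset.eq_of_subset_of_card_le hsub (by rw [Finset.card_range])
  intro k
  rw [← hmem, this, mem_range, hcard]



open Finset

variable {M : Type*} [CommMonoid M]

lemma finprod_guard {g : ℕ → M} {n : ℕ} (h : ∀ k, n ≤ k → g k = 1) :
    ∏ᶠ k, g k = ∏ k ∈ range n, g k := by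
  apply finprod_eq_prod_of_mulSupport_subset
  intro k hk
  simp only [Finset.coe_range, Set.mem_Iio]
  by_contra hh
  exact hk (h k (le_of_not_gt hh))

lemma finprod_if2 {p q : Prop} [Decidable p] [Decidable q] (x : M) :
    (∏ᶠ (_ : p) (_ : q), x) = if p ∧ q then x else 1 := by
  by_cases hp : p
  · by_cases hq : q <;> simp [finprod_eq_if, hp, hq]
  · simp [finprod_eq_if, hp]

lemma prod_range_shrink {g : ℕ → M} {n₁ n₂ : ℕ} (h : n₁ ≤ n₂)
    (h1 : ∀ u, n₁ ≤ u → g u = 1) : ∏ u ∈ range n₂, g u = ∏ u ∈ range n₁, g u :=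
  (Finset.prod_subset (range_subset_range.2 h)
    (fun x _ hx => h1 x (le_of_not_gt (fun hc => hx (mem_range.2 hc))))).symm

/-- row conversion for the `P`-polynomials -/
lemma Prow (f : ℕ → ℕ) (s i : ℕ) (μ : ℕ → ℕ) (u : ℕ) (hb : μ u ≤ f (i + u) - s) :
    (∏ᶠ (v : ℕ) (_ : v < f (i + u) - s) (_ : μ u ≤ v), (X (i + u, s + v) : MvPolynomial (ℕ × ℕ) ℤ))
      = ∏ b ∈ Ico (s + μ u) (f (i + u)), X (i + u, b) := by
  classical
  set c := f (i + u) - s with hc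
  have h1 : ∀ v : ℕ, (∏ᶠ (_ : v < c) (_ : μ u ≤ v), (X (i + u, s + v) : MvPolynomial (ℕ × ℕ) ℤ))
      = if v < c ∧ μ u ≤ v then X (i + u, s + v) else 1 := fun v => finprod_if2 _
  rw [finprod_congr h1, finprod_guard (n := c) (fun k hk => if_neg (by omega))]
  rw [← Finset.prod_filter]
  have h2 : (range c).filter (fun v => v < c ∧ μ u ≤ v) = Ico (μ u) c := by
    ext v; simp only [mem_filter, mem_range, mem_Ico]; omega
  rw [h2]
  have h3 : ∏ b ∈ Ico (s + μ u) (s + c), (X (i + u, b) : MvPolynomial (ℕ × ℕ) ℤ)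
      = ∏ v ∈ Ico (μ u) c, X (i + u, s + v) := by
    rw [← map_add_left_Ico, Finset.prod_map]
    simp [addLeftEmbedding_apply]
  rw [← h3]
  rcases le_or_gt s (f (i + u)) with h | h
  · rw [show s + c = f (i + u) by omega]
  · rw [Finset.Ico_eq_empty (by omega), Finset.Ico_eq_empty (by omega)]

lemma Ppoly_eq (f : ℕ → ℕ) (s i N : ℕ) (hzero : ∀ n, N ≤ n → f n = 0)
    (F : Finset (ℕ → ℕ)) (hF : ∀ x, x ∈ F ↔ x ∈ Lset f s i) :
    Ppoly f i s = ∑ μ ∈ F, ∏ u ∈ range N, ∏ b ∈ Ico (s + μ u) (f (i + u)), X (i + u, b) := by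
  rw [Ppoly]
  have hset : {μ : ℕ → ℕ | Antitone μ ∧ ∀ k, μ k ≤ f (i + k) - s} = ↑F := by
    ext x; rw [Finset.mem_coe, hF x]; rfl
  rw [hset, finsum_mem_coe_finset]
  apply Finset.sum_congr rfl
  intro μ hμ
  have hμ' : μ ∈ Lset f s i := (hF μ).1 hμ
  rw [finprod_congr (fun u => Prow f s i μ u (hμ'.2 u))]
  apply finprod_guard
  intro u hu
  rw [Finset.Ico_eq_empty (by rw [hzero (i + u) (by omega)]; omega), Finset.prod_empty]

/-- row conversion for `Omega` -/
lemma Orow (f : ℕ → ℕ) (i : ℕ) (κ : ℕ → ℕ) (a : ℕ) :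
    (∏ᶠ (c : ℕ) (_ : f (i - 1) - i - κ a < c) (_ : c ≤ f (i - 1) - i), (X (a, a + c) :
        MvPolynomial (ℕ × ℕ) ℤ))
      = ∏ b ∈ Ico (a + (f (i - 1) - i - κ a) + 1) (a + (f (i - 1) - i) + 1), X (a, b) := by
  classical
  set B := f (i - 1) - i with hB
  set A := B - κ a with hA
  have h1 : ∀ c : ℕ, (∏ᶠ (_ : A < c) (_ : c ≤ B), (X (a, a + c) : MvPolynomial (ℕ × ℕ) ℤ))
      = if A < c ∧ c ≤ B then X (a, a + c) else 1 := fun c => finprod_if2 _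
  rw [finprod_congr h1, finprod_guard (n := B + 1) (fun k hk => if_neg (by omega))]
  rw [← Finset.prod_filter]
  have h2 : (range (B + 1)).filter (fun c => A < c ∧ c ≤ B) = Ico (A + 1) (B + 1) := by
    ext c; simp only [mem_filter, mem_range, mem_Ico]; omega
  rw [h2]
  have h3 : ∏ b ∈ Ico (a + (A + 1)) (a + (B + 1)), (X (a, b) : MvPolynomial (ℕ × ℕ) ℤ)
      = ∏ c ∈ Ico (A + 1) (B + 1), X (a, a + c) := by
    rw [← map_add_left_Ico, Finset.prod_map]
    simp [addLeftEmbedding_apply]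
  rw [← h3, show a + (A + 1) = a + A + 1 by omega, show a + (B + 1) = a + B + 1 by omega]

lemma Omega_eq (f : ℕ → ℕ) (i : ℕ)
    (F : Finset (ℕ → ℕ)) (hF : ∀ x, x ∈ F ↔ x ∈ Kset f i) :
    Omega f i = ∑ κ ∈ F, ∏ a ∈ range i,
      ∏ b ∈ Ico (a + (f (i - 1) - i - κ a) + 1) (a + (f (i - 1) - i) + 1), X (a, b) := by
  classical
  rw [Omega]
  have hset : {κ : ℕ → ℕ | Antitone κ ∧ κ 0 ≤ f (i - 1) - i ∧ ∀ a, i ≤ a → κ a = 0} = ↑F := by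
    ext x; rw [Finset.mem_coe, hF x]; rfl
  rw [hset, finsum_mem_coe_finset]
  apply Finset.sum_congr rfl
  intro κ hκ
  have h1 : ∀ a : ℕ, (∏ᶠ (_ : a < i) (c : ℕ) (_ : f (i - 1) - i - κ a < c)
      (_ : c ≤ f (i - 1) - i), (X (a, a + c) : MvPolynomial (ℕ × ℕ) ℤ))
      = if a < i then ∏ b ∈ Ico (a + (f (i - 1) - i - κ a) + 1) (a + (f (i - 1) - i) + 1),
          X (a, b) else 1 := by
    intro a
    rw [finprod_eq_if]
    by_cases h : a < i
    · rw [if_pos h, if_pos h, Orow]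
    · rw [if_neg h, if_neg h]
  rw [finprod_congr h1, finprod_guard (n := i) (fun k hk => if_neg (by omega))]
  exact Finset.prod_congr rfl (fun a ha => if_pos (mem_range.1 ha))

lemma Si_eq (f : ℕ → ℕ) (i : ℕ) :
    (∏ᶠ (a : ℕ) (_ : a < i) (b : ℕ) (_ : f (i - 1) - i + a < b) (_ : b < f a),
        (X (a, b) : MvPolynomial (ℕ × ℕ) ℤ))
      = ∏ a ∈ range i, ∏ b ∈ Ico (a + (f (i - 1) - i) + 1) (f a), X (a, b) := by
  classical
  have hrow : ∀ a : ℕ, (∏ᶠ (b : ℕ) (_ : f (i - 1) - i + a < b) (_ : b < f a),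
      (X (a, b) : MvPolynomial (ℕ × ℕ) ℤ))
      = ∏ b ∈ Ico (a + (f (i - 1) - i) + 1) (f a), X (a, b) := by
    intro a
    have h1 : ∀ b : ℕ, (∏ᶠ (_ : f (i - 1) - i + a < b) (_ : b < f a),
        (X (a, b) : MvPolynomial (ℕ × ℕ) ℤ))
        = if f (i - 1) - i + a < b ∧ b < f a then X (a, b) else 1 := fun b => finprod_if2 _
    rw [finprod_congr h1, finprod_guard (n := f a) (fun k hk => if_neg (by omega))]
    rw [← Finset.prod_filter]
    congr 1
    ext b; simp only [mem_filter, mem_range, mem_Ico]; omega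
  have h2 : ∀ a : ℕ, (∏ᶠ (_ : a < i) (b : ℕ) (_ : f (i - 1) - i + a < b) (_ : b < f a),
      (X (a, b) : MvPolynomial (ℕ × ℕ) ℤ))
      = if a < i then ∏ b ∈ Ico (a + (f (i - 1) - i) + 1) (f a), X (a, b) else 1 := by
    intro a
    rw [finprod_eq_if]
    by_cases h : a < i
    · rw [if_pos h, if_pos h, hrow]
    · rw [if_neg h, if_neg h]
  rw [finprod_congr h2, finprod_guard (n := i) (fun k hk => if_neg (by omega))]
  exact Finset.prod_congr rfl (fun a ha => if_pos (mem_range.1 ha))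

lemma tau_eq (f : ℕ → ℕ) (i : ℕ)
    (F : Finset (ℕ → ℕ)) (hF : ∀ x, x ∈ F ↔ x ∈ Kset f i)
    (hrow : ∀ a, a < i → a + (f (i - 1) - i) + 1 ≤ f a) :
    tau f i = ∑ κ ∈ F, ∏ a ∈ range i,
      ∏ b ∈ Ico (a + (f (i - 1) - i - κ a) + 1) (f a), X (a, b) := by
  rw [tau, Omega_eq f i F hF, Si_eq f i, Finset.sum_mul]
  apply Finset.sum_congr rfl
  intro κ hκ
  rw [← Finset.prod_mul_distrib]
  apply Finset.prod_congr rfl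
  intro a ha
  rw [mem_range] at ha
  exact Finset.prod_Ico_consecutive _ (by omega) (hrow a ha)



open Finset

def dkap (f : ℕ → ℕ) (i : ℕ) (κ : ℕ → ℕ) : ℕ → ℕ :=
  fun a => if a < i - 1 then κ a + (mm f (i - 1) - mm f i) else 0

def dmu (f : ℕ → ℕ) (s i : ℕ) (κ μ : ℕ → ℕ) : ℕ → ℕ :=
  fun u => if u = 0 then i + (mm f i - κ (i - 1)) - s else μ (u - 1)

def ukap (f : ℕ → ℕ) (s i : ℕ) (κ μ : ℕ → ℕ) : ℕ → ℕ :=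
  fun a => if a < i then κ a - (mm f i - mm f (i + 1))
           else if a = i then mm f (i + 1) - (s + μ 0 - (i + 1)) else 0

def umu (μ : ℕ → ℕ) : ℕ → ℕ := fun u => μ (u + 1)

lemma ukap_self (f : ℕ → ℕ) (s i : ℕ) (κ μ : ℕ → ℕ) :
    ukap f s i κ μ i = mm f (i + 1) - (s + μ 0 - (i + 1)) := by
  simp [ukap]

lemma dmu_zero (f : ℕ → ℕ) (s i : ℕ) (κ μ : ℕ → ℕ) :
    dmu f s i κ μ 0 = i + (mm f i - κ (i - 1)) - s := by simp [dmu]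

lemma dmu_pos (f : ℕ → ℕ) (s i : ℕ) (κ μ : ℕ → ℕ) {u : ℕ} (hu : u ≠ 0) :
    dmu f s i κ μ u = μ (u - 1) := by simp [dmu, hu]

lemma candown_rho (f : ℕ → ℕ) (s ρ : ℕ)
    (hrk : ∀ k, k < f k ↔ k < ρ) (hs1 : 1 ≤ s) (hsρ : s ≤ ρ) (hρ1 : 1 ≤ ρ)
    (κ μ : ℕ → ℕ) (hμ : μ ∈ Lset f s ρ) : candown f s ρ κ μ := by
  have hfρ : ¬ ρ < f ρ := fun hcon => absurd ((hrk ρ).1 hcon) (lt_irrefl ρ)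
  have hm0 : μ 0 ≤ f (ρ + 0) - s := hμ.2 0
  rw [show ρ + 0 = ρ from rfl] at hm0
  refine ⟨hρ1, ?_⟩
  simp only [mm]
  omega

lemma down_ok (f : ℕ → ℕ) (s ρ : ℕ) (hf : Antitone f)
    (hrk : ∀ k, k < f k ↔ k < ρ) (hs1 : 1 ≤ s) (hsρ : s ≤ ρ)
    (i : ℕ) (κ μ : ℕ → ℕ) (hi : i ≤ ρ)
    (hκ : κ ∈ Kset f i) (hμ : μ ∈ Lset f s i) (hc : candown f s i κ μ) :
    (i - 1 ≤ ρ ∧ dkap f i κ ∈ Kset f (i - 1) ∧ dmu f s i κ μ ∈ Lset f s (i - 1))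
    ∧ (∀ a, startc f s (i - 1) (dkap f i κ) (dmu f s i κ μ) a = startc f s i κ μ a)
    ∧ ¬ candown f s (i - 1) (dkap f i κ) (dmu f s i κ μ)
    ∧ ukap f s (i - 1) (dkap f i κ) (dmu f s i κ μ) = κ
    ∧ umu (dmu f s i κ μ) = μ := by
  obtain ⟨hκa, hκ0, hκz⟩ := hκ
  obtain ⟨hμa, hμb⟩ := hμ
  obtain ⟨hi1, hcd⟩ := hc
  simp only [mm] at hcd
  have E1 : i ≤ f (i - 1) := by
    have := (hrk (i - 1)).2 (by omega); omega
  have hka1 : κ (i - 1) ≤ κ 0 := hκa (Nat.zero_le _)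
  have hd : 2 ≤ i → f (i - 1) - i + 1 ≤ f (i - 1 - 1) - (i - 1) := by
    intro h2
    have h3 := hf (show i - 1 - 1 ≤ i - 1 by omega)
    omega
  refine ⟨⟨by omega, ⟨?_, ?_, ?_⟩, ⟨?_, ?_⟩⟩, ?_, ?_, ?_, ?_⟩
  · -- dkap antitone
    apply antitone_nat_of_succ_le
    intro n
    have h4 : κ (n + 1) ≤ κ n := hκa (by omega)
    simp only [dkap, mm]
    split_ifs <;> omega
  · -- dkap bound
    simp only [dkap, mm]
    split_ifs with h
    · have h2 := hd (by omega)
      omega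
    · omega
  · -- dkap zero
    intro a ha
    simp only [dkap]
    rw [if_neg (by omega)]
  · -- dmu antitone
    apply antitone_nat_of_succ_le
    intro n
    by_cases hn : n = 0
    · subst hn
      rw [dmu_pos _ _ _ _ _ (by omega), dmu_zero, show (0:ℕ) + 1 - 1 = 0 from rfl]
      simp only [mm]
      omega
    · rw [dmu_pos _ _ _ _ _ (by omega), dmu_pos _ _ _ _ _ hn,
        show n + 1 - 1 = (n - 1) + 1 by omega]
      exact hμa (by omega)
  · -- dmu bound
    intro k
    by_cases hk : k = 0
    · subst hk
      rw [dmu_zero, show i - 1 + 0 = i - 1 from rfl]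
      simp only [mm]
      omega
    · rw [dmu_pos _ _ _ _ _ hk, show i - 1 + k = i + (k - 1) by omega]
      exact hμb (k - 1)
  · -- startc equality
    intro a
    have h6 : κ a ≤ κ 0 := hκa (Nat.zero_le a)
    simp only [startc, dkap, mm]
    by_cases h1 : a < i - 1
    · rw [if_pos h1, if_pos h1, if_pos (by omega)]
      have h2 := hd (by omega)
      omega
    · by_cases h2 : a < i
      · rw [if_neg h1, if_pos h2, show a - (i - 1) = 0 by omega, dmu_zero,
          show a = i - 1 by omega]
        simp only [mm]
        omega
      · rw [if_neg h1, if_neg h2, dmu_pos _ _ _ _ _ (by omega : a - (i - 1) ≠ 0),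
          show a - (i - 1) - 1 = a - i by omega]
  · -- not candown after down
    intro hcon
    obtain ⟨hc1, hc2⟩ := hcon
    rw [dmu_zero] at hc2
    simp only [dkap, mm] at hc2
    rw [if_pos (show i - 1 - 1 < i - 1 by omega)] at hc2
    have hd2 := hd (by omega)
    have h7 : κ (i - 1) ≤ κ (i - 1 - 1) := hκa (by omega)
    omega
  · -- ukap ∘ down = κ
    funext a
    simp only [ukap]
    rw [show i - 1 + 1 = i by omega]
    by_cases h1 : a < i - 1
    · rw [if_pos h1]
      simp only [dkap, mm]
      rw [if_pos h1]
      omega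
    · by_cases h2 : a = i - 1
      · rw [if_neg h1, if_pos h2, dmu_zero, h2]
        simp only [mm]
        omega
      · rw [if_neg h1, if_neg h2]
        exact (hκz a (by omega)).symm
  · -- umu ∘ down = μ
    funext u
    simp only [umu]
    rw [dmu_pos _ _ _ _ _ (by omega : u + 1 ≠ 0), show u + 1 - 1 = u from rfl]

lemma up_ok (f : ℕ → ℕ) (s ρ : ℕ) (hf : Antitone f)
    (hrk : ∀ k, k < f k ↔ k < ρ) (hs1 : 1 ≤ s) (hsρ : s ≤ ρ) (hρ1 : 1 ≤ ρ)
    (i : ℕ) (κ μ : ℕ → ℕ) (hi : i ≤ ρ)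
    (hκ : κ ∈ Kset f i) (hμ : μ ∈ Lset f s i) (hc : ¬ candown f s i κ μ) :
    (i + 1 ≤ ρ ∧ ukap f s i κ μ ∈ Kset f (i + 1) ∧ umu μ ∈ Lset f s (i + 1))
    ∧ (∀ a, startc f s (i + 1) (ukap f s i κ μ) (umu μ) a = startc f s i κ μ a)
    ∧ candown f s (i + 1) (ukap f s i κ μ) (umu μ)
    ∧ dkap f (i + 1) (ukap f s i κ μ) = κ
    ∧ dmu f s (i + 1) (ukap f s i κ μ) (umu μ) = μ := by
  obtain ⟨hκa, hκ0, hκz⟩ := hκ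
  obtain ⟨hμa, hμb⟩ := hμ
  have hlt : i < ρ := by
    by_contra h
    have hiρ : i = ρ := by omega
    subst hiρ
    exact hc (candown_rho f s i hrk hs1 hsρ (by omega) κ μ ⟨hμa, hμb⟩)
  have E2 : i + 1 ≤ f i := by have := (hrk i).2 hlt; omega
  have E3 : ρ ≤ f i := by
    have h1 := (hrk (ρ - 1)).2 (by omega)
    have h2 := hf (show i ≤ ρ - 1 by omega)
    omega
  have hm0 : μ 0 ≤ f (i + 0) - s := hμb 0
  rw [show i + 0 = i from rfl] at hm0
  have ht0 : s + μ 0 ≤ f i := by omega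
  have hσ : 1 ≤ i → i + (f (i - 1) - i - κ (i - 1)) < s + μ 0 := by
    intro hi1
    by_contra h
    exact hc ⟨hi1, by simp only [mm]; omega⟩
  have hka1 : κ (i - 1) ≤ κ 0 := hκa (Nat.zero_le _)
  have E1 : 1 ≤ i → i ≤ f (i - 1) := by
    intro hi1
    have := (hrk (i - 1)).2 (by omega); omega
  have hkey : 1 ≤ i → f (i - 1) - i - (f i - (i + 1)) ≤ κ (i - 1) := by
    intro hi1
    have h1 := hσ hi1
    have h2 := E1 hi1
    omega
  have hff : f i ≤ f (i - 1) := hf (Nat.sub_le i 1)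
  have ht1 : i + 1 ≤ s + μ 0 := by
    rcases Nat.eq_zero_or_pos i with h | h
    · omega
    · have := hσ h; omega
  refine ⟨⟨by omega, ⟨?_, ?_, ?_⟩, ⟨?_, ?_⟩⟩, ?_, ?_, ?_, ?_⟩
  · -- ukap antitone
    apply antitone_nat_of_succ_le
    intro n
    have h4 : κ (n + 1) ≤ κ n := hκa (by omega)
    simp only [ukap, mm, Nat.add_sub_cancel]
    by_cases h1 : n + 1 < i
    · rw [if_pos h1, if_pos (by omega)]
      omega
    · by_cases h2 : n + 1 = i
      · rw [if_neg h1, if_pos h2, if_pos (by omega), show n = i - 1 by omega]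
        have h5 := hσ (by omega)
        have h6 := hkey (by omega)
        omega
      · rw [if_neg h1, if_neg h2]
        by_cases h3 : n = i
        · rw [if_neg (by omega), if_pos h3]
          exact Nat.zero_le _
        · rw [if_neg (by omega), if_neg h3]
  · -- ukap bound
    simp only [ukap, mm, Nat.add_sub_cancel]
    by_cases h1 : 0 < i
    · rw [if_pos h1]
      omega
    · rw [if_neg h1, if_pos (by omega)]
      omega
  · -- ukap zero
    intro a ha
    simp only [ukap]
    rw [if_neg (by omega), if_neg (by omega)]
  · -- umu antitone
    exact antitone_nat_of_succ_le (fun n => hμa (by omega : n + 1 ≤ n + 1 + 1))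
  · -- umu bound
    intro k
    simp only [umu]
    rw [show i + 1 + k = i + (k + 1) by omega]
    exact hμb (k + 1)
  · -- startc equality
    intro a
    have h6 : κ a ≤ κ 0 := hκa (Nat.zero_le a)
    simp only [startc, umu]
    by_cases h1 : a < i
    · rw [if_pos (by omega : a < i + 1), if_pos h1,
        show ukap f s i κ μ a = κ a - (mm f i - mm f (i + 1)) from by
          simp only [ukap]; rw [if_pos h1]]
      have h4 := hkey (by omega)
      have h5 : κ (i - 1) ≤ κ a := hκa (by omega)
      simp only [mm, Nat.add_sub_cancel]
      omega
    · by_cases h2 : a = i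
      · rw [if_pos (by omega : a < i + 1), if_neg h1, h2, ukap_self,
          show i - i = 0 by omega]
        simp only [mm, Nat.add_sub_cancel]
        omega
      · rw [if_neg (by omega : ¬ a < i + 1), if_neg h1,
          show a - (i + 1) + 1 = a - i by omega]
  · -- candown after up
    refine ⟨by omega, ?_⟩
    show s + umu μ 0 ≤ i + 1 + (mm f (i + 1) - ukap f s i κ μ (i + 1 - 1))
    rw [show i + 1 - 1 = i from rfl, ukap_self]
    have hμ1 : μ (0 + 1) ≤ μ 0 := hμa (by omega)
    simp only [umu, mm, Nat.add_sub_cancel]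
    omega
  · -- dkap ∘ up = κ
    funext a
    simp only [dkap, Nat.add_sub_cancel]
    by_cases h1 : a < i
    · rw [if_pos h1,
        show ukap f s i κ μ a = κ a - (mm f i - mm f (i + 1)) from by
          simp only [ukap]; rw [if_pos h1]]
      have h4 := hkey (by omega)
      have h5 : κ (i - 1) ≤ κ a := hκa (by omega)
      simp only [mm, Nat.add_sub_cancel]
      omega
    · rw [if_neg h1]
      exact (hκz a (by omega)).symm
  · -- dmu ∘ up = μ
    funext u
    by_cases hu : u = 0
    · subst hu
      rw [dmu_zero, show i + 1 - 1 = i from rfl, ukap_self]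
      simp only [umu, mm, Nat.add_sub_cancel]
      omega
    · rw [dmu_pos _ _ _ _ _ hu]
      simp only [umu]
      rw [show u - 1 + 1 = u by omega]


lemma term_congr (f : ℕ → ℕ) (s N : ℕ) (i i' : ℕ) (κ μ κ' μ' : ℕ → ℕ)
    (h : ∀ a, startc f s i' κ' μ' a = startc f s i κ μ a) :
    term f s N i' κ' μ' = term f s N i κ μ :=
  Finset.prod_congr rfl (fun a _ => by rw [h a])

lemma term_eq (f : ℕ → ℕ) (s N i : ℕ) (κ μ : ℕ → ℕ) (hiN : i ≤ N)
    (hzero : ∀ n, N ≤ n → f n = 0) :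
    term f s N i κ μ =
    (∏ a ∈ range i, ∏ b ∈ Ico (a + (f (i - 1) - i - κ a) + 1) (f a),
        (X (a, b) : MvPolynomial (ℕ × ℕ) ℤ)) *
      (∏ u ∈ range N, ∏ b ∈ Ico (s + μ u) (f (i + u)), X (i + u, b)) := by
  conv_lhs => rw [term, range_eq_Ico, ← Finset.prod_Ico_consecutive _ (Nat.zero_le i) hiN]
  congr 1
  · rw [← range_eq_Ico]
    apply Finset.prod_congr rfl
    intro a ha
    rw [mem_range] at ha
    simp only [startc, mm]
    rw [if_pos ha]
  · rw [Finset.prod_Ico_eq_prod_range,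
      show (∏ u ∈ range N, ∏ b ∈ Ico (s + μ u) (f (i + u)),
          (X (i + u, b) : MvPolynomial (ℕ × ℕ) ℤ))
        = ∏ u ∈ range (N - i), ∏ b ∈ Ico (s + μ u) (f (i + u)), X (i + u, b) from
        prod_range_shrink (by omega)
          (fun u hu => by
            rw [Finset.Ico_eq_empty (by rw [hzero (i + u) (by omega)]; omega),
              Finset.prod_empty])]
    apply Finset.prod_congr rfl
    intro u hu
    simp only [startc]
    rw [if_neg (by omega), show i + u - i = u by omega]

lemma sign_cancel_down {R : Type*} [CommRing R] (n : ℕ) (hn : 1 ≤ n) (x : R) :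
    (-1) ^ n * x + (-1) ^ (n - 1) * x = 0 := by
  obtain ⟨m, rfl⟩ : ∃ m, n = m + 1 := ⟨n - 1, by omega⟩
  rw [show m + 1 - 1 = m from rfl, pow_succ]
  ring

lemma sign_cancel_up {R : Type*} [CommRing R] (n : ℕ) (x : R) :
    (-1) ^ n * x + (-1) ^ (n + 1) * x = 0 := by
  rw [pow_succ]
  ring

end RecAux

/-- **Theorem (recurrence, columns `j ≥ 2`).**
For a partition `λ` of rank `ρ ≥ 1` and `2 ≤ j ≤ ρ + 1` (1-based column index),
`Σ_{i=0}^{ρ} (−1)^i τ_i P_{i+1,j} = 0`. Here `P_{i+1,j} = Ppoly f i (j-1)` in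
0-indexed coordinates. -/
theorem recurrence_columns (f : ℕ → ℕ) (hf : Antitone f) (hfz : ∃ N, f N = 0)
    (ρ : ℕ) (hρ : ρ = Set.ncard {k : ℕ | k < f k}) (hρ1 : 1 ≤ ρ)
    (j : ℕ) (hj2 : 2 ≤ j) (hjρ : j ≤ ρ + 1) :
    ∑ i ∈ Finset.range (ρ + 1),
      (-1 : MvPolynomial (ℕ × ℕ) ℤ) ^ i * tau f i * Ppoly f i (j - 1) = 0 := by
  classical
  open Finset RecAux in
  obtain ⟨N₀, hN₀⟩ := hfz
  have hrk : ∀ k, k < f k ↔ k < ρ := RecAux.rank_iff f hf hN₀ hρ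
  set s : ℕ := j - 1 with hsdef
  have hs1 : 1 ≤ s := by omega
  have hsρ : s ≤ ρ := by omega
  obtain ⟨N, hzero, hρN⟩ : ∃ N, (∀ n, N ≤ n → f n = 0) ∧ ρ < N := by
    refine ⟨max (ρ + 1) N₀, fun n hn => ?_, lt_of_lt_of_le (Nat.lt_succ_self ρ)
      (le_max_left _ _)⟩
    have h1 : f n ≤ f N₀ := hf (le_trans (le_max_right _ _) hn)
    omega
  have hKfin : ∀ i : ℕ, (Kset f i).Finite := fun i => Kset_finite f i
  have hLfin : ∀ i : ℕ, (Lset f s i).Finite := fun i => Lset_finite f s i N hf hzero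
  have key : ∀ i ∈ Finset.range (ρ + 1),
      (-1 : MvPolynomial (ℕ × ℕ) ℤ) ^ i * tau f i * Ppoly f i s
        = ∑ p ∈ (hKfin i).toFinset ×ˢ (hLfin i).toFinset,
            (-1 : MvPolynomial (ℕ × ℕ) ℤ) ^ i * term f s N i p.1 p.2 := by
    intro i hi
    rw [Finset.mem_range] at hi
    have hrowf : ∀ a, a < i → a + (f (i - 1) - i) + 1 ≤ f a := by
      intro a ha
      have E1 : i ≤ f (i - 1) := by have := (hrk (i - 1)).2 (by omega); omega
      have h2 : f (i - 1) ≤ f a := hf (by omega)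
      omega
    have expand : (∑ κ ∈ (hKfin i).toFinset, ∏ a ∈ Finset.range i,
          ∏ b ∈ Finset.Ico (a + (f (i - 1) - i - κ a) + 1) (f a),
            (X (a, b) : MvPolynomial (ℕ × ℕ) ℤ)) *
        (∑ μ ∈ (hLfin i).toFinset, ∏ u ∈ Finset.range N,
          ∏ b ∈ Finset.Ico (s + μ u) (f (i + u)), X (i + u, b))
        = ∑ p ∈ (hKfin i).toFinset ×ˢ (hLfin i).toFinset, term f s N i p.1 p.2 := by
      rw [Finset.sum_mul_sum, Finset.sum_product]
      exact Finset.sum_congr rfl (fun κ _ => Finset.sum_congr rfl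
        (fun μ _ => (term_eq f s N i κ μ (by omega) hzero).symm))
    rw [tau_eq f i (hKfin i).toFinset (fun x => (hKfin i).mem_toFinset) hrowf,
        Ppoly_eq f s i N hzero (hLfin i).toFinset (fun x => (hLfin i).mem_toFinset),
        mul_assoc, expand, Finset.mul_sum]
  rw [Finset.sum_congr rfl key, Finset.sum_sigma']
  have memiff : ∀ q : (Σ _ : ℕ, (ℕ → ℕ) × (ℕ → ℕ)),
      q ∈ (Finset.range (ρ + 1)).sigma
        (fun i => (hKfin i).toFinset ×ˢ (hLfin i).toFinset) ↔
      (q.1 ≤ ρ ∧ q.2.1 ∈ Kset f q.1 ∧ q.2.2 ∈ Lset f s q.1) := by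
    intro q
    rw [Finset.mem_sigma, Finset.mem_product, Set.Finite.mem_toFinset,
      Set.Finite.mem_toFinset, Finset.mem_range]
    constructor
    · rintro ⟨h1, h2, h3⟩; exact ⟨by omega, h2, h3⟩
    · rintro ⟨h1, h2, h3⟩; exact ⟨by omega, h2, h3⟩
  apply Finset.sum_involution
    (g := fun q _ =>
      if candown f s q.1 q.2.1 q.2.2 then
        ⟨q.1 - 1, (dkap f q.1 q.2.1, dmu f s q.1 q.2.1 q.2.2)⟩
      else
        ⟨q.1 + 1, (ukap f s q.1 q.2.1 q.2.2, umu q.2.2)⟩)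
  case g_mem =>
    rintro ⟨i, κ, μ⟩ hq
    obtain ⟨hiρ, hκm, hμm⟩ := (memiff ⟨i, κ, μ⟩).1 hq
    by_cases hc : candown f s i κ μ
    · rw [if_pos hc]
      obtain ⟨⟨h1, h2, h3⟩, _⟩ := down_ok f s ρ hf hrk hs1 hsρ i κ μ hiρ hκm hμm hc
      exact (memiff _).2 ⟨h1, h2, h3⟩
    · rw [if_neg hc]
      obtain ⟨⟨h1, h2, h3⟩, _⟩ := up_ok f s ρ hf hrk hs1 hsρ hρ1 i κ μ hiρ hκm hμm hc
      exact (memiff _).2 ⟨h1, h2, h3⟩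
  case hg₁ =>
    rintro ⟨i, κ, μ⟩ hq
    obtain ⟨hiρ, hκm, hμm⟩ := (memiff ⟨i, κ, μ⟩).1 hq
    by_cases hc : candown f s i κ μ
    · rw [if_pos hc]
      obtain ⟨-, hst, -⟩ := down_ok f s ρ hf hrk hs1 hsρ i κ μ hiρ hκm hμm hc
      show (-1 : MvPolynomial (ℕ × ℕ) ℤ) ^ i * term f s N i κ μ
          + (-1) ^ (i - 1) * term f s N (i - 1) (dkap f i κ) (dmu f s i κ μ) = 0
      rw [term_congr f s N i (i - 1) κ μ _ _ hst]
      exact sign_cancel_down i hc.1 _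
    · rw [if_neg hc]
      obtain ⟨-, hst, -⟩ := up_ok f s ρ hf hrk hs1 hsρ hρ1 i κ μ hiρ hκm hμm hc
      show (-1 : MvPolynomial (ℕ × ℕ) ℤ) ^ i * term f s N i κ μ
          + (-1) ^ (i + 1) * term f s N (i + 1) (ukap f s i κ μ) (umu μ) = 0
      rw [term_congr f s N i (i + 1) κ μ _ _ hst]
      exact sign_cancel_up i _
  case hg₃ =>
    rintro ⟨i, κ, μ⟩ hq -
    by_cases hc : candown f s i κ μ
    · rw [if_pos hc]
      intro heq
      have h1 : i - 1 = i := congrArg Sigma.fst heq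
      have h2 := hc.1
      omega
    · rw [if_neg hc]
      intro heq
      have h1 : i + 1 = i := congrArg Sigma.fst heq
      omega
  case hg₄ =>
    rintro ⟨i, κ, μ⟩ hq
    obtain ⟨hiρ, hκm, hμm⟩ := (memiff ⟨i, κ, μ⟩).1 hq
    by_cases hc : candown f s i κ μ
    · obtain ⟨-, -, hnc, hk, hm⟩ := down_ok f s ρ hf hrk hs1 hsρ i κ μ hiρ hκm hμm hc
      have h2 : 1 ≤ i := hc.1
      rw [if_pos hc]
      show (if candown f s (i - 1) (dkap f i κ) (dmu f s i κ μ) then _ else _) = _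
      rw [if_neg hnc]
      show (⟨i - 1 + 1, (ukap f s (i - 1) (dkap f i κ) (dmu f s i κ μ),
        umu (dmu f s i κ μ))⟩ : Σ _ : ℕ, (ℕ → ℕ) × (ℕ → ℕ)) = ⟨i, (κ, μ)⟩
      rw [hk, hm, show i - 1 + 1 = i by omega]
    · obtain ⟨-, -, hcd, hk, hm⟩ := up_ok f s ρ hf hrk hs1 hsρ hρ1 i κ μ hiρ hκm hμm hc
      rw [if_neg hc]
      show (if candown f s (i + 1) (ukap f s i κ μ) (umu μ) then _ else _) = _
      rw [if_pos hcd]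
      show (⟨i + 1 - 1, (dkap f (i + 1) (ukap f s i κ μ),
        dmu f s (i + 1) (ukap f s i κ μ) (umu μ))⟩ : Σ _ : ℕ, (ℕ → ℕ) × (ℕ → ℕ)) = ⟨i, (κ, μ)⟩
      rw [hk, hm, show i + 1 - 1 = i from rfl]
end
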